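/- arXiv:1011.4681 — 14 statements merged into one kernel-verified Lean document; each statement's English description precedes it below -/
import Mathlib

section
/- Let μ ∈ ℝ and let (f1,f2,f3,F) be smooth real functions on an open interval I solving system (F) on I, with f1 < 0, F > 0, f2·f3 − F² ≠ 0 on I, and satisfying constraint (C) at every point of I. Let t0 ∈ I and let t : (α,β) → I be a smooth function with t(0) = t0 and t'(s) = f1(t(s)) for all s ∈ (α,β). Define h1(s) = ∫₀ˢ f1(t(u))²/2 du, h2 = (f2 + f3)∘t, h3 = (f2 − f3)∘t, h4 = 2·F∘t. Then h2² − h3² − h4² is nowhere zero on (α,β) and (h1,h2,h3,h4) solves system (H) on (α,β) (with the same μ). -/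
open Set

private lemma auxHD {f : ℝ → ℝ} {U : Set ℝ} (hU : IsOpen U)
    (hf : ContDiffOn ℝ (⊤ : ℕ∞) f U) {x : ℝ} (hx : x ∈ U) :
    HasDerivAt f (deriv f x) x :=
  ((hf.differentiableOn (by simp)).differentiableAt (hU.mem_nhds hx)).hasDerivAt

private lemma auxCD {f : ℝ → ℝ} {U : Set ℝ} (hU : IsOpen U)
    (hf : ContDiffOn ℝ (⊤ : ℕ∞) f U) : ContDiffOn ℝ (⊤ : ℕ∞) (deriv f) U :=
  hf.deriv_of_isOpen hU (by simp)

private lemma auxHD2 {f : ℝ → ℝ} {U : Set ℝ} (hU : IsOpen U)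
    (hf : ContDiffOn ℝ (⊤ : ℕ∞) f U) {x : ℝ} (hx : x ∈ U) :
    HasDerivAt (deriv f) (deriv (deriv f) x) x :=
  auxHD hU (auxCD hU hf) hx

private lemma auxZD {g : ℝ → ℝ} {U : Set ℝ} (hU : IsOpen U) {x : ℝ} (hx : x ∈ U)
    (hg : ∀ y ∈ U, g y = 0) {E : ℝ} (hE : HasDerivAt g E x) : E = 0 := by
  have h0 : HasDerivAt g 0 x := by
    have hev : g =ᶠ[nhds x] fun _ => (0:ℝ) :=
      Filter.eventuallyEq_of_mem (hU.mem_nhds hx) hg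
    exact (hasDerivAt_const x (0:ℝ)).congr_of_eventuallyEq hev
  exact hE.unique h0

private lemma keyF (μ a b : ℝ) (hμ : μ ≠ 0)
    (f1 f2 f3 F : ℝ → ℝ)
    (hf1 : ContDiffOn ℝ (⊤ : ℕ∞) f1 (Set.Ioo a b))
    (hf2 : ContDiffOn ℝ (⊤ : ℕ∞) f2 (Set.Ioo a b))
    (hf3 : ContDiffOn ℝ (⊤ : ℕ∞) f3 (Set.Ioo a b))
    (hF : ContDiffOn ℝ (⊤ : ℕ∞) F (Set.Ioo a b))
    (hsysF : ∀ x ∈ Set.Ioo a b,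
      deriv (fun u => (deriv f2 u + f1 u / 4) * f1 u) x + 12 * μ * f1 x * f2 x = 0 ∧
      deriv (fun u => (deriv f3 u - f1 u / 4) * f1 u) x + 12 * μ * f1 x * f3 x = 0 ∧
      deriv (fun u => deriv F u * f1 u) x - 4 * F x / f1 x + 12 * μ * f1 x * F x = 0 ∧
      f1 x * (deriv f2 x - deriv f3 x + f1 x / 2) + 48 * μ * (f2 x * f3 x - F x ^ 2) = 0)
    (hf1ne : ∀ x ∈ Set.Ioo a b, f1 x ≠ 0)
    (hC : ∀ x ∈ Set.Ioo a b,
      4 * F x ^ 2 -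
        ((deriv F x) ^ 2 - (deriv f2 x + f1 x / 4) * (deriv f3 x - f1 x / 4)) * f1 x ^ 2 = 0) :
    ∀ x ∈ Set.Ioo a b,
      (deriv (deriv f2) x + deriv f1 x / 4) * f1 x + (deriv f2 x + f1 x / 4) * deriv f1 x
          + 12 * μ * f1 x * f2 x = 0 ∧
      (deriv (deriv f3) x - deriv f1 x / 4) * f1 x + (deriv f3 x - f1 x / 4) * deriv f1 x
          + 12 * μ * f1 x * f3 x = 0 ∧
      deriv (deriv F) x * f1 x ^ 2 + deriv F x * deriv f1 x * f1 x - 4 * F x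
          + 12 * μ * f1 x ^ 2 * F x = 0 ∧
      36 * μ * deriv f1 x * f1 x ^ 2 * (f2 x * f3 x - F x ^ 2)
          + 9 / 2 * μ * f1 x ^ 4 * (f2 x - f3 x) + 16 * deriv F x * f1 x * F x = 0 := by
  have hU : IsOpen (Set.Ioo a b) := isOpen_Ioo
  -- P1
  have hP1 : ∀ x ∈ Set.Ioo a b,
      (deriv (deriv f2) x + deriv f1 x / 4) * f1 x + (deriv f2 x + f1 x / 4) * deriv f1 x
        + 12 * μ * f1 x * f2 x = 0 := by
    intro x hx
    have hd1 := auxHD hU hf1 hx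
    have hq2 := auxHD2 hU hf2 hx
    have hprod : HasDerivAt (fun u => (deriv f2 u + f1 u / 4) * f1 u)
        ((deriv (deriv f2) x + deriv f1 x / 4) * f1 x
          + (deriv f2 x + f1 x / 4) * deriv f1 x) x :=
      (hq2.add (hd1.div_const 4)).mul hd1
    have h := (hsysF x hx).1
    rw [hprod.deriv] at h
    linarith
  -- P2
  have hP2 : ∀ x ∈ Set.Ioo a b,
      (deriv (deriv f3) x - deriv f1 x / 4) * f1 x + (deriv f3 x - f1 x / 4) * deriv f1 x
        + 12 * μ * f1 x * f3 x = 0 := by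
    intro x hx
    have hd1 := auxHD hU hf1 hx
    have hq3 := auxHD2 hU hf3 hx
    have hprod : HasDerivAt (fun u => (deriv f3 u - f1 u / 4) * f1 u)
        ((deriv (deriv f3) x - deriv f1 x / 4) * f1 x
          + (deriv f3 x - f1 x / 4) * deriv f1 x) x :=
      (hq3.sub (hd1.div_const 4)).mul hd1
    have h := (hsysF x hx).2.1
    rw [hprod.deriv] at h
    linarith
  -- P3 (multiplied by f1)
  have hP3 : ∀ x ∈ Set.Ioo a b,
      deriv (deriv F) x * f1 x ^ 2 + deriv F x * deriv f1 x * f1 x - 4 * F x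
        + 12 * μ * f1 x ^ 2 * F x = 0 := by
    intro x hx
    have hd1 := auxHD hU hf1 hx
    have hqF := auxHD2 hU hF hx
    have hprod : HasDerivAt (fun u => deriv F u * f1 u)
        (deriv (deriv F) x * f1 x + deriv F x * deriv f1 x) x := hqF.mul hd1
    have h := (hsysF x hx).2.2.1
    rw [hprod.deriv] at h
    have hne := hf1ne x hx
    field_simp at h
    linear_combination h
  -- P4 (part of the system, no differentiation)
  have hP4 : ∀ x ∈ Set.Ioo a b,
      f1 x * (deriv f2 x - deriv f3 x + f1 x / 2) + 48 * μ * (f2 x * f3 x - F x ^ 2) = 0 :=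
    fun x hx => (hsysF x hx).2.2.2
  -- derivative of P4 identity
  have hD4 : ∀ x ∈ Set.Ioo a b,
      deriv f1 x * (deriv f2 x - deriv f3 x + f1 x / 2)
        + f1 x * (deriv (deriv f2) x - deriv (deriv f3) x + deriv f1 x / 2)
        + 48 * μ * (deriv f2 x * f3 x + f2 x * deriv f3 x - 2 * F x * deriv F x) = 0 := by
    intro x hx
    have hd1 := auxHD hU hf1 hx
    have hd2 := auxHD hU hf2 hx
    have hd3 := auxHD hU hf3 hx
    have hdF := auxHD hU hF hx
    have hq2 := auxHD2 hU hf2 hx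
    have hq3 := auxHD2 hU hf3 hx
    have hg : HasDerivAt
        (fun y => f1 y * (deriv f2 y - deriv f3 y + f1 y / 2)
          + 48 * μ * (f2 y * f3 y - F y ^ 2))
        (deriv f1 x * (deriv f2 x - deriv f3 x + f1 x / 2)
          + f1 x * (deriv (deriv f2) x - deriv (deriv f3) x + deriv f1 x / 2)
          + 48 * μ * (deriv f2 x * f3 x + f2 x * deriv f3 x - 2 * F x * deriv F x)) x := by
      have h := (hd1.mul ((hq2.sub hq3).add (hd1.div_const 2))).add
        (((hd2.mul hd3).sub (hdF.pow 2)).const_mul (48 * μ))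
      refine h.congr_deriv ?_
      simp only [Pi.add_apply, Pi.sub_apply, Pi.mul_apply, Pi.pow_apply]
      push_cast
      ring
    exact auxZD hU hx hP4 hg
  -- R1
  have hR1 : ∀ x ∈ Set.Ioo a b,
      f1 x * (f2 x - f3 x)
        - 4 * (deriv f2 x * f3 x + f2 x * deriv f3 x - 2 * (F x * deriv F x)) = 0 := by
    intro x hx
    have hmul : (12 * μ) * (f1 x * (f2 x - f3 x)
        - 4 * (deriv f2 x * f3 x + f2 x * deriv f3 x - 2 * (F x * deriv F x))) = 0 := by
      linear_combination hP1 x hx - hP2 x hx - hD4 x hx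
    exact (mul_eq_zero.mp hmul).resolve_left (mul_ne_zero (by norm_num) hμ)
  -- derivative of R1 identity
  have hDR1 : ∀ x ∈ Set.Ioo a b,
      deriv f1 x * (f2 x - f3 x) + f1 x * (deriv f2 x - deriv f3 x)
        - 4 * (deriv (deriv f2) x * f3 x + deriv f2 x * deriv f3 x
            + (deriv f2 x * deriv f3 x + f2 x * deriv (deriv f3) x)
            - 2 * (deriv F x * deriv F x + F x * deriv (deriv F) x)) = 0 := by
    intro x hx
    have hd1 := auxHD hU hf1 hx
    have hd2 := auxHD hU hf2 hx
    have hd3 := auxHD hU hf3 hx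
    have hdF := auxHD hU hF hx
    have hq2 := auxHD2 hU hf2 hx
    have hq3 := auxHD2 hU hf3 hx
    have hqF := auxHD2 hU hF hx
    have hg : HasDerivAt
        (fun y => f1 y * (f2 y - f3 y)
          - 4 * (deriv f2 y * f3 y + f2 y * deriv f3 y - 2 * (F y * deriv F y)))
        (deriv f1 x * (f2 x - f3 x) + f1 x * (deriv f2 x - deriv f3 x)
          - 4 * (deriv (deriv f2) x * f3 x + deriv f2 x * deriv f3 x
              + (deriv f2 x * deriv f3 x + f2 x * deriv (deriv f3) x)
              - 2 * (deriv F x * deriv F x + F x * deriv (deriv F) x)) ) x := by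
      have h := (hd1.mul (hd2.sub hd3)).sub
        ((((hq2.mul hd3).add (hd2.mul hq3)).sub ((hdF.mul hqF).const_mul 2)).const_mul 4)
      refine h.congr_deriv ?_
      simp only [Pi.add_apply, Pi.sub_apply, Pi.mul_apply, Pi.pow_apply]
    exact auxZD hU hx hR1 hg
  -- S
  have hS : ∀ x ∈ Set.Ioo a b,
      16 * (deriv F x) ^ 2 - 16 * (deriv f2 x * deriv f3 x)
        + f1 x * (deriv f2 x - deriv f3 x) - f1 x ^ 2 / 2 = 0 := by
    intro x hx
    have hne := hf1ne x hx
    have hmul : (16 * (deriv F x) ^ 2 - 16 * (deriv f2 x * deriv f3 x)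
        + f1 x * (deriv f2 x - deriv f3 x) - f1 x ^ 2 / 2) * f1 x ^ 2 = 0 := by
      linear_combination f1 x ^ 2 * hDR1 x hx + 4 * f3 x * f1 x * hP1 x hx
        + 4 * f2 x * f1 x * hP2 x hx - 8 * F x * hP3 x hx
        + deriv f1 x * f1 x * hR1 x hx - 2 * f1 x ^ 2 * hP4 x hx - 8 * hC x hx
    exact (mul_eq_zero.mp hmul).resolve_right (pow_ne_zero 2 hne)
  -- derivative of S identity
  have hDS : ∀ x ∈ Set.Ioo a b,
      32 * deriv F x * deriv (deriv F) x
        - 16 * (deriv (deriv f2) x * deriv f3 x + deriv f2 x * deriv (deriv f3) x)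
        + deriv f1 x * (deriv f2 x - deriv f3 x)
        + f1 x * (deriv (deriv f2) x - deriv (deriv f3) x)
        - f1 x * deriv f1 x = 0 := by
    intro x hx
    have hd1 := auxHD hU hf1 hx
    have hq2 := auxHD2 hU hf2 hx
    have hq3 := auxHD2 hU hf3 hx
    have hqF := auxHD2 hU hF hx
    have hg : HasDerivAt
        (fun y => 16 * (deriv F y) ^ 2 - 16 * (deriv f2 y * deriv f3 y)
          + f1 y * (deriv f2 y - deriv f3 y) - f1 y ^ 2 / 2)
        (32 * deriv F x * deriv (deriv F) x
          - 16 * (deriv (deriv f2) x * deriv f3 x + deriv f2 x * deriv (deriv f3) x)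
          + deriv f1 x * (deriv f2 x - deriv f3 x)
          + f1 x * (deriv (deriv f2) x - deriv (deriv f3) x)
          - f1 x * deriv f1 x) x := by
      have h := ((((hqF.pow 2).const_mul 16).sub ((hq2.mul hq3).const_mul 16)).add
        (hd1.mul (hq2.sub hq3))).sub ((hd1.pow 2).div_const 2)
      refine h.congr_deriv ?_
      simp only [Pi.add_apply, Pi.sub_apply, Pi.mul_apply, Pi.pow_apply]
      push_cast
      ring
    exact auxZD hU hx hS hg
  -- T
  have hT : ∀ x ∈ Set.Ioo a b,
      36 * μ * deriv f1 x * f1 x ^ 2 * (f2 x * f3 x - F x ^ 2)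
        + 9 / 2 * μ * f1 x ^ 4 * (f2 x - f3 x) + 16 * deriv F x * f1 x * F x = 0 := by
    intro x hx
    linear_combination (f1 x ^ 3 / 8) * hDS x hx - (4 * deriv F x * f1 x) * hP3 x hx
      - ((f1 x - 16 * deriv f3 x) * f1 x ^ 2 / 8) * hP1 x hx
      + ((16 * deriv f2 x + f1 x) * f1 x ^ 2 / 8) * hP2 x hx
      + (f1 x ^ 2 * deriv f1 x / 4) * hS x hx
      + (3 * f1 x ^ 2 * deriv f1 x / 4) * hP4 x hx
      + (6 * μ * f1 x ^ 3) * hR1 x hx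
  exact fun x hx => ⟨hP1 x hx, hP2 x hx, hP3 x hx, hT x hx⟩

/-- Podestà–Spiro: the change of variables from system (F) to system (H).
If `(f1,f2,f3,F)` is a smooth solution of system (F) on the open interval `(a,b)`
with `f1 < 0`, `F > 0`, `f2·f3 − F² ≠ 0`, satisfying the constraint (C) everywhere,
and `t : (α,β) → (a,b)` is a smooth reparametrization with `t 0 = t0` and
`t' = f1 ∘ t`, then `h1(s) = ∫₀ˢ f1(t u)²/2 du`, `h2 = (f2+f3)∘t`, `h3 = (f2−f3)∘t`,
`h4 = 2·F∘t` have `h2² − h3² − h4²` nowhere zero and solve system (H) on `(α,β)`. -/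
theorem stmt_0
    (μ a b α β t0 : ℝ) (hμ : μ ≠ 0)
    (f1 f2 f3 F : ℝ → ℝ)
    (hf1 : ContDiffOn ℝ (⊤ : ℕ∞) f1 (Set.Ioo a b))
    (hf2 : ContDiffOn ℝ (⊤ : ℕ∞) f2 (Set.Ioo a b))
    (hf3 : ContDiffOn ℝ (⊤ : ℕ∞) f3 (Set.Ioo a b))
    (hF : ContDiffOn ℝ (⊤ : ℕ∞) F (Set.Ioo a b))
    (hsysF : ∀ x ∈ Set.Ioo a b,
      deriv (fun u => (deriv f2 u + f1 u / 4) * f1 u) x + 12 * μ * f1 x * f2 x = 0 ∧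
      deriv (fun u => (deriv f3 u - f1 u / 4) * f1 u) x + 12 * μ * f1 x * f3 x = 0 ∧
      deriv (fun u => deriv F u * f1 u) x - 4 * F x / f1 x + 12 * μ * f1 x * F x = 0 ∧
      f1 x * (deriv f2 x - deriv f3 x + f1 x / 2) + 48 * μ * (f2 x * f3 x - F x ^ 2) = 0)
    (hf1neg : ∀ x ∈ Set.Ioo a b, f1 x < 0)
    (hFpos : ∀ x ∈ Set.Ioo a b, 0 < F x)
    (hnz : ∀ x ∈ Set.Ioo a b, f2 x * f3 x - F x ^ 2 ≠ 0)
    (hC : ∀ x ∈ Set.Ioo a b,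
      4 * F x ^ 2 -
        ((deriv F x) ^ 2 - (deriv f2 x + f1 x / 4) * (deriv f3 x - f1 x / 4)) * f1 x ^ 2 = 0)
    (ht0 : t0 ∈ Set.Ioo a b)
    (t : ℝ → ℝ)
    (ht : ContDiffOn ℝ (⊤ : ℕ∞) t (Set.Ioo α β))
    (h0mem : (0 : ℝ) ∈ Set.Ioo α β)
    (htmaps : Set.MapsTo t (Set.Ioo α β) (Set.Ioo a b))
    (ht00 : t 0 = t0)
    (ht' : ∀ s ∈ Set.Ioo α β, deriv t s = f1 (t s))
    (h1 h2 h3 h4 : ℝ → ℝ)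
    (hh1 : ∀ s, h1 s = ∫ u in (0 : ℝ)..s, f1 (t u) ^ 2 / 2)
    (hh2 : ∀ s, h2 s = f2 (t s) + f3 (t s))
    (hh3 : ∀ s, h3 s = f2 (t s) - f3 (t s))
    (hh4 : ∀ s, h4 s = 2 * F (t s)) :
    ∀ s ∈ Set.Ioo α β,
      h2 s ^ 2 - h3 s ^ 2 - h4 s ^ 2 ≠ 0 ∧
      deriv (deriv h1) s +
        (2 * (deriv h1 s) ^ 2 * h3 s + (4 / (9 * μ)) * deriv h4 s * h4 s) /
          (h2 s ^ 2 - h3 s ^ 2 - h4 s ^ 2) = 0 ∧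
      deriv (deriv h2) s + 24 * μ * deriv h1 s * h2 s = 0 ∧
      deriv (deriv h3) s -
        (2 * (deriv h1 s) ^ 2 * h3 s + (4 / (9 * μ)) * deriv h4 s * h4 s) /
          (h2 s ^ 2 - h3 s ^ 2 - h4 s ^ 2) + 24 * μ * deriv h1 s * h3 s = 0 ∧
      deriv (deriv h4) s + 24 * μ * deriv h1 s * h4 s - 4 * h4 s = 0 := by
  have hUo : IsOpen (Set.Ioo a b) := isOpen_Ioo
  have hVo : IsOpen (Set.Ioo α β) := isOpen_Ioo
  have hf1ne : ∀ x ∈ Set.Ioo a b, f1 x ≠ 0 := fun x hx => (hf1neg x hx).ne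
  have key := keyF μ a b hμ f1 f2 f3 F hf1 hf2 hf3 hF hsysF hf1ne hC
  -- derivative of t
  have hdt : ∀ s ∈ Set.Ioo α β, HasDerivAt t (f1 (t s)) s := by
    intro s hs
    have h := ((ht.differentiableOn (by simp)).differentiableAt (hVo.mem_nhds hs)).hasDerivAt
    rwa [ht' s hs] at h
  -- derivative of h1 everywhere in (α,β)
  have hcont1 : ContinuousOn (fun u => f1 (t u) ^ 2 / 2) (Set.Ioo α β) :=
    ((hf1.continuousOn.comp ht.continuousOn htmaps).pow 2).div_const 2
  have hh1d : ∀ s ∈ Set.Ioo α β, HasDerivAt h1 (f1 (t s) ^ 2 / 2) s := by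
    intro s hs
    have hsub : Set.uIcc (0 : ℝ) s ⊆ Set.Ioo α β :=
      (Set.ordConnected_Ioo).uIcc_subset h0mem hs
    have hint : IntervalIntegrable (fun u => f1 (t u) ^ 2 / 2) MeasureTheory.volume 0 s :=
      (hcont1.mono hsub).intervalIntegrable
    have hFTC := intervalIntegral.integral_hasDerivAt_right hint
      (ContinuousOn.stronglyMeasurableAtFilter hVo hcont1 s hs)
      (hcont1.continuousAt (hVo.mem_nhds hs))
    have heq : h1 = fun r => ∫ u in (0 : ℝ)..r, f1 (t u) ^ 2 / 2 := funext hh1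
    rw [heq]
    exact hFTC
  -- derivatives of h2, h3, h4 everywhere in (α,β)
  have hh2d : ∀ s ∈ Set.Ioo α β,
      HasDerivAt h2 ((deriv f2 (t s) + deriv f3 (t s)) * f1 (t s)) s := by
    intro s hs
    have hx := htmaps hs
    have hc2 : HasDerivAt (fun u => f2 (t u)) (deriv f2 (t s) * f1 (t s)) s :=
      (auxHD hUo hf2 hx).comp s (hdt s hs)
    have hc3 : HasDerivAt (fun u => f3 (t u)) (deriv f3 (t s) * f1 (t s)) s :=
      (auxHD hUo hf3 hx).comp s (hdt s hs)
    have heq : h2 = fun u => f2 (t u) + f3 (t u) := funext hh2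
    rw [heq]
    refine (hc2.add hc3).congr_deriv ?_
    ring
  have hh3d : ∀ s ∈ Set.Ioo α β,
      HasDerivAt h3 ((deriv f2 (t s) - deriv f3 (t s)) * f1 (t s)) s := by
    intro s hs
    have hx := htmaps hs
    have hc2 : HasDerivAt (fun u => f2 (t u)) (deriv f2 (t s) * f1 (t s)) s :=
      (auxHD hUo hf2 hx).comp s (hdt s hs)
    have hc3 : HasDerivAt (fun u => f3 (t u)) (deriv f3 (t s) * f1 (t s)) s :=
      (auxHD hUo hf3 hx).comp s (hdt s hs)
    have heq : h3 = fun u => f2 (t u) - f3 (t u) := funext hh3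
    rw [heq]
    refine (hc2.sub hc3).congr_deriv ?_
    ring
  have hh4d : ∀ s ∈ Set.Ioo α β,
      HasDerivAt h4 (2 * (deriv F (t s) * f1 (t s))) s := by
    intro s hs
    have hx := htmaps hs
    have hcF : HasDerivAt (fun u => F (t u)) (deriv F (t s) * f1 (t s)) s :=
      (auxHD hUo hF hx).comp s (hdt s hs)
    have heq : h4 = fun u => 2 * F (t u) := funext hh4
    rw [heq]
    exact hcF.const_mul 2
  -- main work at a point s
  intro s hs
  have hx := htmaps hs
  obtain ⟨hP1x, hP2x, hP3x, hTx⟩ := key (t s) hx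
  -- second derivatives at s
  have hE1 : deriv (deriv h1) s = deriv f1 (t s) * f1 (t s) ^ 2 := by
    have hev : deriv h1 =ᶠ[nhds s] fun u => f1 (t u) ^ 2 / 2 :=
      Filter.eventuallyEq_of_mem (hVo.mem_nhds hs) (fun y hy => (hh1d y hy).deriv)
    rw [hev.deriv_eq]
    have hc1 : HasDerivAt (fun u => f1 (t u)) (deriv f1 (t s) * f1 (t s)) s :=
      (auxHD hUo hf1 hx).comp s (hdt s hs)
    have hD : HasDerivAt (fun u => f1 (t u) ^ 2 / 2) (deriv f1 (t s) * f1 (t s) ^ 2) s := by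
      refine ((hc1.pow 2).div_const 2).congr_deriv ?_
      push_cast
      ring
    exact hD.deriv
  have hE2 : deriv (deriv h2) s =
      (deriv (deriv f2) (t s) + deriv (deriv f3) (t s)) * f1 (t s) ^ 2
        + (deriv f2 (t s) + deriv f3 (t s)) * deriv f1 (t s) * f1 (t s) := by
    have hev : deriv h2 =ᶠ[nhds s] fun u => (deriv f2 (t u) + deriv f3 (t u)) * f1 (t u) :=
      Filter.eventuallyEq_of_mem (hVo.mem_nhds hs) (fun y hy => (hh2d y hy).deriv)
    rw [hev.deriv_eq]
    have hc1 : HasDerivAt (fun u => f1 (t u)) (deriv f1 (t s) * f1 (t s)) s :=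
      (auxHD hUo hf1 hx).comp s (hdt s hs)
    have hq2 : HasDerivAt (fun u => deriv f2 (t u)) (deriv (deriv f2) (t s) * f1 (t s)) s :=
      (auxHD2 hUo hf2 hx).comp s (hdt s hs)
    have hq3 : HasDerivAt (fun u => deriv f3 (t u)) (deriv (deriv f3) (t s) * f1 (t s)) s :=
      (auxHD2 hUo hf3 hx).comp s (hdt s hs)
    have hD : HasDerivAt (fun u => (deriv f2 (t u) + deriv f3 (t u)) * f1 (t u))
        ((deriv (deriv f2) (t s) + deriv (deriv f3) (t s)) * f1 (t s) ^ 2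
          + (deriv f2 (t s) + deriv f3 (t s)) * deriv f1 (t s) * f1 (t s)) s := by
      refine ((hq2.add hq3).mul hc1).congr_deriv ?_
      simp only [Pi.add_apply, Pi.sub_apply]
      ring
    exact hD.deriv
  have hE3 : deriv (deriv h3) s =
      (deriv (deriv f2) (t s) - deriv (deriv f3) (t s)) * f1 (t s) ^ 2
        + (deriv f2 (t s) - deriv f3 (t s)) * deriv f1 (t s) * f1 (t s) := by
    have hev : deriv h3 =ᶠ[nhds s] fun u => (deriv f2 (t u) - deriv f3 (t u)) * f1 (t u) :=
      Filter.eventuallyEq_of_mem (hVo.mem_nhds hs) (fun y hy => (hh3d y hy).deriv)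
    rw [hev.deriv_eq]
    have hc1 : HasDerivAt (fun u => f1 (t u)) (deriv f1 (t s) * f1 (t s)) s :=
      (auxHD hUo hf1 hx).comp s (hdt s hs)
    have hq2 : HasDerivAt (fun u => deriv f2 (t u)) (deriv (deriv f2) (t s) * f1 (t s)) s :=
      (auxHD2 hUo hf2 hx).comp s (hdt s hs)
    have hq3 : HasDerivAt (fun u => deriv f3 (t u)) (deriv (deriv f3) (t s) * f1 (t s)) s :=
      (auxHD2 hUo hf3 hx).comp s (hdt s hs)
    have hD : HasDerivAt (fun u => (deriv f2 (t u) - deriv f3 (t u)) * f1 (t u))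
        ((deriv (deriv f2) (t s) - deriv (deriv f3) (t s)) * f1 (t s) ^ 2
          + (deriv f2 (t s) - deriv f3 (t s)) * deriv f1 (t s) * f1 (t s)) s := by
      refine ((hq2.sub hq3).mul hc1).congr_deriv ?_
      simp only [Pi.add_apply, Pi.sub_apply]
      ring
    exact hD.deriv
  have hE4 : deriv (deriv h4) s =
      2 * (deriv (deriv F) (t s) * f1 (t s) ^ 2
        + deriv F (t s) * deriv f1 (t s) * f1 (t s)) := by
    have hev : deriv h4 =ᶠ[nhds s] fun u => 2 * (deriv F (t u) * f1 (t u)) :=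
      Filter.eventuallyEq_of_mem (hVo.mem_nhds hs) (fun y hy => (hh4d y hy).deriv)
    rw [hev.deriv_eq]
    have hc1 : HasDerivAt (fun u => f1 (t u)) (deriv f1 (t s) * f1 (t s)) s :=
      (auxHD hUo hf1 hx).comp s (hdt s hs)
    have hqF : HasDerivAt (fun u => deriv F (t u)) (deriv (deriv F) (t s) * f1 (t s)) s :=
      (auxHD2 hUo hF hx).comp s (hdt s hs)
    have hD : HasDerivAt (fun u => 2 * (deriv F (t u) * f1 (t u)))
        (2 * (deriv (deriv F) (t s) * f1 (t s) ^ 2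
          + deriv F (t s) * deriv f1 (t s) * f1 (t s))) s := by
      refine ((hqF.mul hc1).const_mul 2).congr_deriv ?_
      ring
    exact hD.deriv
  -- value facts
  have hDval : h2 s ^ 2 - h3 s ^ 2 - h4 s ^ 2 = 4 * (f2 (t s) * f3 (t s) - F (t s) ^ 2) := by
    rw [hh2 s, hh3 s, hh4 s]; ring
  have hDne : h2 s ^ 2 - h3 s ^ 2 - h4 s ^ 2 ≠ 0 := by
    rw [hDval]
    exact mul_ne_zero (by norm_num) (hnz (t s) hx)
  have hd1v : deriv h1 s = f1 (t s) ^ 2 / 2 := (hh1d s hs).deriv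
  have hd4v : deriv h4 s = 2 * (deriv F (t s) * f1 (t s)) := (hh4d s hs).deriv
  have hμ9 : (9 : ℝ) * μ ≠ 0 := mul_ne_zero (by norm_num) hμ
  -- equation 1
  have hne4 : 4 * (f2 (t s) * f3 (t s) - F (t s) ^ 2) ≠ 0 :=
    mul_ne_zero (by norm_num) (hnz (t s) hx)
  have hG1 : deriv (deriv h1) s +
      (2 * (deriv h1 s) ^ 2 * h3 s + (4 / (9 * μ)) * deriv h4 s * h4 s) /
        (h2 s ^ 2 - h3 s ^ 2 - h4 s ^ 2) = 0 := by
    rw [hE1, hd1v, hd4v, hDval, hh3 s, hh4 s]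
    have hnz' := hnz (t s) hx
    field_simp
    linear_combination 2 * hTx
  have h3eq : deriv (deriv h3) s + deriv (deriv h1) s + 24 * μ * deriv h1 s * h3 s = 0 := by
    rw [hE3, hE1, hd1v, hh3 s]
    linear_combination f1 (t s) * (hP1x - hP2x)
  refine ⟨hDne, hG1, ?_, ?_, ?_⟩
  · rw [hE2, hd1v, hh2 s]
    linear_combination f1 (t s) * (hP1x + hP2x)
  · linear_combination h3eq - hG1
  · rw [hE4, hd1v, hh4 s]
    linear_combination 2 * hP3x
end

section
/- Let μ > 0 and let (h1,h2,h3,h4) be smooth functions on an open interval (α,β) ∋ 0 solving system (H), with h1' > 0 and h4 > 0 everywhere, and such that at s = 0 the four quantities E1 = h1' + h3' + 12μ·(h2² − h3² − h4²), E2 = (h2')² − (h3')² − (h4')² − (h1')² − 2·h1'·h3' + 4·h4², E3 = h2·h2' − h3·h3' − h4·h4' − h1'·h3, E4 = h1'·(h2² − h3² − h4²) + (2/(9μ))·h4² all vanish. Let t(s) = −∫₀ˢ √(2·h1'(u)) du, let J = t((α,β)) and let σ : J → (α,β) be the (smooth, strictly decreasing) inverse of t. Define f1 = −√(2·h1'∘σ),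 f2 = ((h2 + h3)/2)∘σ, f3 = ((h2 − h3)/2)∘σ, F = (h4/2)∘σ. Then (f1,f2,f3,F) solves system (F) on J, satisfies constraint (C) at every point of J, and moreover f1 < 0, F > 0, and F'² − (f2' + f1/4)·(f3' − f1/4) > 0 everywhere on J. -/
open Set Topology

lemma gron_zero_right {E : Type*} [NormedAddCommGroup E] [NormedSpace ℝ E]
    (g g' : ℝ → E) (r K : ℝ)
    (hd : ∀ s ∈ Set.Icc 0 r, HasDerivAt g (g' s) s)
    (hb : ∀ s ∈ Set.Icc 0 r, ‖g' s‖ ≤ K * ‖g s‖)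
    (h0 : g 0 = 0) : ∀ s ∈ Set.Icc 0 r, g s = 0 := by
  intro s hs
  have hcont : ContinuousOn g (Set.Icc 0 r) := fun u hu => ((hd u hu).continuousAt).continuousWithinAt
  have := norm_le_gronwallBound_of_norm_deriv_right_le (f := g) (f' := g') (δ := 0) (K := K)
    (ε := 0) (a := 0) (b := r) hcont
    (fun u hu => ((hd u (Set.mem_Icc_of_Ico hu)).hasDerivWithinAt))
    (by simp [h0])
    (fun u hu => by simpa using hb u (Set.mem_Icc_of_Ico hu))
  have h := this s hs
  rw [gronwallBound_ε0_δ0] at h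
  have : ‖g s‖ = 0 := le_antisymm h (norm_nonneg _)
  simpa using this

lemma gron_zero {E : Type*} [NormedAddCommGroup E] [NormedSpace ℝ E]
    (g g' : ℝ → E) (l r K : ℝ) (hl : l ≤ 0) (hr : 0 ≤ r)
    (hd : ∀ s ∈ Set.Icc l r, HasDerivAt g (g' s) s)
    (hb : ∀ s ∈ Set.Icc l r, ‖g' s‖ ≤ K * ‖g s‖)
    (h0 : g 0 = 0) : ∀ s ∈ Set.Icc l r, g s = 0 := by
  intro s hs
  rcases le_or_gt 0 s with h | h
  · exact gron_zero_right g g' r K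
      (fun u hu => hd u ⟨hl.trans hu.1, hu.2⟩)
      (fun u hu => hb u ⟨hl.trans hu.1, hu.2⟩) h0 s ⟨h, hs.2⟩
  · -- backward: consider u ↦ g (-u) on [0, -l]
    have key : ∀ u ∈ Set.Icc (0:ℝ) (-l), g (-u) = 0 := by
      apply gron_zero_right (fun u => g (-u)) (fun u => -g' (-u)) (-l) K
      · intro u hu
        have h1 : -u ∈ Set.Icc l r := ⟨by linarith [hu.2], by linarith [hu.1]⟩
        have := HasDerivAt.scomp u (hd _ h1) (hasDerivAt_neg u)
        simpa [mul_comm, Function.comp_def] using this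
      · intro u hu
        have h1 : -u ∈ Set.Icc l r := ⟨by linarith [hu.2], by linarith [hu.1]⟩
        simpa using hb _ h1
      · simpa using h0
    have := key (-s) ⟨by linarith, by linarith [hs.1]⟩
    simpa using this

set_option maxHeartbeats 1000000 in
lemma first_integrals
    (μ α β : ℝ) (hμ : 0 < μ)
    (h1 h2 h3 h4 : ℝ → ℝ)
    (hh1 : ContDiffOn ℝ (⊤ : ℕ∞) h1 (Set.Ioo α β))
    (hh2 : ContDiffOn ℝ (⊤ : ℕ∞) h2 (Set.Ioo α β))
    (hh3 : ContDiffOn ℝ (⊤ : ℕ∞) h3 (Set.Ioo α β))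
    (hh4 : ContDiffOn ℝ (⊤ : ℕ∞) h4 (Set.Ioo α β))
    (h0mem : (0 : ℝ) ∈ Set.Ioo α β)
    (hden : ∀ s ∈ Set.Ioo α β, h2 s ^ 2 - h3 s ^ 2 - h4 s ^ 2 ≠ 0)
    (hsysH : ∀ s ∈ Set.Ioo α β,
      deriv (deriv h1) s +
        (2 * (deriv h1 s) ^ 2 * h3 s + (4 / (9 * μ)) * deriv h4 s * h4 s) /
          (h2 s ^ 2 - h3 s ^ 2 - h4 s ^ 2) = 0 ∧
      deriv (deriv h2) s + 24 * μ * deriv h1 s * h2 s = 0 ∧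
      deriv (deriv h3) s -
        (2 * (deriv h1 s) ^ 2 * h3 s + (4 / (9 * μ)) * deriv h4 s * h4 s) /
          (h2 s ^ 2 - h3 s ^ 2 - h4 s ^ 2) + 24 * μ * deriv h1 s * h3 s = 0 ∧
      deriv (deriv h4) s + 24 * μ * deriv h1 s * h4 s - 4 * h4 s = 0)
    (hE1 : deriv h1 0 + deriv h3 0 + 12 * μ * (h2 0 ^ 2 - h3 0 ^ 2 - h4 0 ^ 2) = 0)
    (hE2 : (deriv h2 0) ^ 2 - (deriv h3 0) ^ 2 - (deriv h4 0) ^ 2 - (deriv h1 0) ^ 2 -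
      2 * deriv h1 0 * deriv h3 0 + 4 * h4 0 ^ 2 = 0)
    (hE3 : h2 0 * deriv h2 0 - h3 0 * deriv h3 0 - h4 0 * deriv h4 0 -
      deriv h1 0 * h3 0 = 0)
    (hE4 : deriv h1 0 * (h2 0 ^ 2 - h3 0 ^ 2 - h4 0 ^ 2) + (2 / (9 * μ)) * h4 0 ^ 2 = 0) :
    ∀ s ∈ Set.Ioo α β,
      (deriv h1 s + deriv h3 s + 12 * μ * (h2 s ^ 2 - h3 s ^ 2 - h4 s ^ 2) = 0) ∧
      ((deriv h2 s) ^ 2 - (deriv h3 s) ^ 2 - (deriv h4 s) ^ 2 - (deriv h1 s) ^ 2 -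
        2 * deriv h1 s * deriv h3 s + 4 * h4 s ^ 2 = 0) := by
  have hIo : IsOpen (Set.Ioo α β) := isOpen_Ioo
  -- pointwise first derivatives
  have hder : ∀ (f : ℝ → ℝ), ContDiffOn ℝ (⊤ : ℕ∞) f (Set.Ioo α β) →
      ∀ s ∈ Set.Ioo α β, HasDerivAt f (deriv f s) s := by
    intro f hf s hs
    exact ((hf.differentiableOn (by simp)).differentiableAt (hIo.mem_nhds hs)).hasDerivAt
  have hdsm : ∀ (f : ℝ → ℝ), ContDiffOn ℝ (⊤ : ℕ∞) f (Set.Ioo α β) →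
      ContDiffOn ℝ (⊤ : ℕ∞) (deriv f) (Set.Ioo α β) := fun f hf => hf.deriv_of_isOpen hIo (by simp)
  set e1 : ℝ → ℝ := fun s => deriv h1 s + deriv h3 s + 12 * μ * (h2 s ^ 2 - h3 s ^ 2 - h4 s ^ 2)
    with he1
  set e2 : ℝ → ℝ := fun s => (deriv h2 s) ^ 2 - (deriv h3 s) ^ 2 - (deriv h4 s) ^ 2 -
      (deriv h1 s) ^ 2 - 2 * deriv h1 s * deriv h3 s + 4 * h4 s ^ 2 with he2
  set e3 : ℝ → ℝ := fun s => h2 s * deriv h2 s - h3 s * deriv h3 s - h4 s * deriv h4 s -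
      deriv h1 s * h3 s with he3
  set e4 : ℝ → ℝ := fun s => deriv h1 s * (h2 s ^ 2 - h3 s ^ 2 - h4 s ^ 2) +
      (2 / (9 * μ)) * h4 s ^ 2 with he4
  -- derivatives of the first integrals
  have He1 : ∀ s ∈ Set.Ioo α β, HasDerivAt e1 (24 * μ * e3 s) s := by
    intro s hs
    obtain ⟨s1, s2, s3, s4⟩ := hsysH s hs
    have H := ((hder _ (hdsm _ hh1) s hs).add (hder _ (hdsm _ hh3) s hs)).add
        (((((hder _ hh2 s hs).pow 2).sub ((hder _ hh3 s hs).pow 2)).sub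
          ((hder _ hh4 s hs).pow 2)).const_mul (12 * μ))
    refine H.congr_deriv ?_
    linear_combination s1 + s3
  have He2 : ∀ s ∈ Set.Ioo α β,
      HasDerivAt e2 (-(48 * μ) * deriv h1 s * e3 s) s := by
    intro s hs
    obtain ⟨s1, s2, s3, s4⟩ := hsysH s hs
    have H := ((((((hder _ (hdsm _ hh2) s hs).pow 2).sub ((hder _ (hdsm _ hh3) s hs).pow 2)).sub
        ((hder _ (hdsm _ hh4) s hs).pow 2)).sub ((hder _ (hdsm _ hh1) s hs).pow 2)).sub
        (((hder _ (hdsm _ hh1) s hs).const_mul 2).mul (hder _ (hdsm _ hh3) s hs))).add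
        (((hder _ hh4 s hs).pow 2).const_mul 4)
    refine H.congr_deriv ?_
    linear_combination (2 * deriv h2 s) * s2 + (-(2 * deriv h3 s) - 2 * deriv h1 s) * s3 +
        (-(2 * deriv h4 s)) * s4 + (-(2 * deriv h1 s) - 2 * deriv h3 s) * s1
  have He3 : ∀ s ∈ Set.Ioo α β,
      HasDerivAt e3 (e2 s + deriv h1 s * e1 s - 36 * μ * e4 s) s := by
    intro s hs
    obtain ⟨s1, s2, s3, s4⟩ := hsysH s hs
    have hcμ : μ * μ⁻¹ = 1 := mul_inv_cancel₀ (ne_of_gt hμ)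
    have H := ((((hder _ hh2 s hs).mul (hder _ (hdsm _ hh2) s hs)).sub
        ((hder _ hh3 s hs).mul (hder _ (hdsm _ hh3) s hs))).sub
        ((hder _ hh4 s hs).mul (hder _ (hdsm _ hh4) s hs))).sub
        ((hder _ (hdsm _ hh1) s hs).mul (hder _ hh3 s hs))
    refine H.congr_deriv ?_
    linear_combination h2 s * s2 + (-h3 s) * s3 + (-h4 s) * s4 + (-h3 s) * s1 +
      (8 * h4 s ^ 2) * hcμ
  have He4 : ∀ s ∈ Set.Ioo α β,
      HasDerivAt e4 (2 * deriv h1 s * e3 s) s := by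
    intro s hs
    obtain ⟨s1, s2, s3, s4⟩ := hsysH s hs
    have hD : (h2 s ^ 2 - h3 s ^ 2 - h4 s ^ 2) * (h2 s ^ 2 - h3 s ^ 2 - h4 s ^ 2)⁻¹ = 1 :=
      mul_inv_cancel₀ (hden s hs)
    have H := ((hder _ (hdsm _ hh1) s hs).mul
        ((((hder _ hh2 s hs).pow 2).sub ((hder _ hh3 s hs).pow 2)).sub
          ((hder _ hh4 s hs).pow 2))).add (((hder _ hh4 s hs).pow 2).const_mul (2 / (9 * μ)))
    refine H.congr_deriv ?_
    simp only [Pi.sub_apply, Pi.pow_apply]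
    linear_combination (h2 s ^ 2 - h3 s ^ 2 - h4 s ^ 2) * s1 -
      (2 * (deriv h1 s) ^ 2 * h3 s + (4 / (9 * μ)) * deriv h4 s * h4 s) * hD
    -- bundle into a vector and apply Gronwall
  set Efun : ℝ → ℝ × ℝ × ℝ × ℝ := fun s => (e1 s, e2 s, e3 s, e4 s) with hEfun
  set E' : ℝ → ℝ × ℝ × ℝ × ℝ := fun s =>
    (24 * μ * e3 s, -(48 * μ) * deriv h1 s * e3 s,
      e2 s + deriv h1 s * e1 s - 36 * μ * e4 s, 2 * deriv h1 s * e3 s) with hE'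
  have HE : ∀ s ∈ Set.Ioo α β, HasDerivAt Efun (E' s) s := fun s hs =>
    (He1 s hs).prodMk ((He2 s hs).prodMk ((He3 s hs).prodMk (He4 s hs)))
  have hE0 : Efun 0 = 0 := by
    have h10 : e1 0 = 0 := hE1
    have h20 : e2 0 = 0 := hE2
    have h30 : e3 0 = 0 := hE3
    have h40 : e4 0 = 0 := hE4
    show (e1 0, e2 0, e3 0, e4 0) = (0, 0, 0, 0)
    rw [h10, h20, h30, h40]
  intro s₀ hs₀
  set l := min s₀ 0 with hl
  set r := max s₀ 0 with hr
  have hsub : Set.Icc l r ⊆ Set.Ioo α β := by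
    intro u hu
    have hαl : α < l := lt_min hs₀.1 h0mem.1
    have hrβ : r < β := max_lt hs₀.2 h0mem.2
    exact ⟨lt_of_lt_of_le hαl hu.1, lt_of_le_of_lt hu.2 hrβ⟩
  obtain ⟨M, hM⟩ := (isCompact_Icc (a := l) (b := r)).exists_bound_of_continuousOn
    (((hdsm _ hh1).continuousOn).mono hsub)
  have h0Icc : (0 : ℝ) ∈ Set.Icc l r := ⟨min_le_right _ _, le_max_right _ _⟩
  have hM0 : 0 ≤ M := le_trans (norm_nonneg _) (hM 0 h0Icc)
  set K := 24 * μ + 48 * μ * M + (1 + M + 36 * μ) + 2 * M with hK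
  have hb : ∀ u ∈ Set.Icc l r, ‖E' u‖ ≤ K * ‖Efun u‖ := by
    intro u hu
    set n := ‖Efun u‖ with hn
    have hn0 : 0 ≤ n := norm_nonneg _
    have h1n : |e1 u| ≤ n := norm_fst_le (Efun u)
    have h2n : |e2 u| ≤ n := le_trans (norm_fst_le (Efun u).2) (norm_snd_le (Efun u))
    have h3n : |e3 u| ≤ n := le_trans (le_trans (norm_fst_le (Efun u).2.2)
      (norm_snd_le (Efun u).2)) (norm_snd_le (Efun u))
    have h4n : |e4 u| ≤ n := le_trans (le_trans (norm_snd_le (Efun u).2.2)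
      (norm_snd_le (Efun u).2)) (norm_snd_le (Efun u))
    have haM : |deriv h1 u| ≤ M := hM u hu
    have hab3 : |deriv h1 u * e3 u| ≤ M * n := by
      rw [abs_mul]
      exact mul_le_mul haM h3n (abs_nonneg _) hM0
    have hab1 : |deriv h1 u * e1 u| ≤ M * n := by
      rw [abs_mul]
      exact mul_le_mul haM h1n (abs_nonneg _) hM0
    have c1 : |24 * μ * e3 u| ≤ 24 * μ * n := by
      rw [abs_mul, abs_of_pos (by positivity : (0:ℝ) < 24 * μ)]
      exact mul_le_mul_of_nonneg_left h3n (by positivity)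
    have c2 : |-(48 * μ) * deriv h1 u * e3 u| ≤ 48 * μ * (M * n) := by
      rw [mul_assoc, abs_mul, abs_neg, abs_of_pos (by positivity : (0:ℝ) < 48 * μ)]
      exact mul_le_mul_of_nonneg_left hab3 (by positivity)
    have c4 : |2 * deriv h1 u * e3 u| ≤ 2 * (M * n) := by
      rw [mul_assoc, abs_mul, abs_of_pos (by norm_num : (0:ℝ) < 2)]
      exact mul_le_mul_of_nonneg_left hab3 (by norm_num)
    have c3 : |e2 u + deriv h1 u * e1 u - 36 * μ * e4 u| ≤ n + M * n + 36 * μ * n := by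
      have t1 : |e2 u + deriv h1 u * e1 u - 36 * μ * e4 u| ≤
          |e2 u + deriv h1 u * e1 u| + |36 * μ * e4 u| := abs_sub _ _
      have t2 : |e2 u + deriv h1 u * e1 u| ≤ |e2 u| + |deriv h1 u * e1 u| := abs_add_le _ _
      have t3 : |36 * μ * e4 u| ≤ 36 * μ * n := by
        rw [abs_mul, abs_of_pos (by positivity : (0:ℝ) < 36 * μ)]
        exact mul_le_mul_of_nonneg_left h4n (by positivity)
      linarith
    have hμn : 0 ≤ μ * n := mul_nonneg hμ.le hn0
    have hμMn : 0 ≤ μ * (M * n) := mul_nonneg hμ.le (mul_nonneg hM0 hn0)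
    have hMn : 0 ≤ M * n := mul_nonneg hM0 hn0
    have hnorm : ‖E' u‖ = max |24 * μ * e3 u| (max |-(48 * μ) * deriv h1 u * e3 u|
        (max |e2 u + deriv h1 u * e1 u - 36 * μ * e4 u| |2 * deriv h1 u * e3 u|)) := by
      rw [hE']
      simp only [Prod.norm_def, Real.norm_eq_abs]
    rw [hnorm, hK]
    refine max_le (by nlinarith) (max_le (by nlinarith) (max_le (by nlinarith) (by nlinarith)))
  have hz := gron_zero Efun E' l r K (min_le_right _ _) (le_max_right _ _)
    (fun u hu => HE u (hsub hu)) hb hE0 s₀ ⟨min_le_left _ _, le_max_left _ _⟩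
  constructor
  · exact congrArg Prod.fst hz
  · exact congrArg (fun p => p.2.1) hz
set_option maxHeartbeats 1000000 in
/-- Podestà–Spiro: the inverse change of variables from system (H) back to system (F).
If `(h1,h2,h3,h4)` is a smooth solution of system (H) on `(α,β) ∋ 0` with `h1' > 0`,
`h4 > 0`, whose first integrals `E1,…,E4` vanish at `s = 0`, and
`t(s) = −∫₀ˢ √(2 h1'(u)) du` with inverse `σ` on `J = t((α,β))`, then
`f1 = −√(2 h1'∘σ)`, `f2 = ((h2+h3)/2)∘σ`, `f3 = ((h2−h3)/2)∘σ`, `F = (h4/2)∘σ`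
solve system (F) on `J`, satisfy constraint (C) everywhere, and satisfy
`f1 < 0`, `F > 0`, `F'² − (f2'+f1/4)(f3'−f1/4) > 0` on `J`. -/
theorem stmt_1
    (μ α β : ℝ) (hμ : 0 < μ)
    (h1 h2 h3 h4 : ℝ → ℝ)
    (hh1 : ContDiffOn ℝ (⊤ : ℕ∞) h1 (Set.Ioo α β))
    (hh2 : ContDiffOn ℝ (⊤ : ℕ∞) h2 (Set.Ioo α β))
    (hh3 : ContDiffOn ℝ (⊤ : ℕ∞) h3 (Set.Ioo α β))
    (hh4 : ContDiffOn ℝ (⊤ : ℕ∞) h4 (Set.Ioo α β))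
    (h0mem : (0 : ℝ) ∈ Set.Ioo α β)
    (hden : ∀ s ∈ Set.Ioo α β, h2 s ^ 2 - h3 s ^ 2 - h4 s ^ 2 ≠ 0)
    (hsysH : ∀ s ∈ Set.Ioo α β,
      deriv (deriv h1) s +
        (2 * (deriv h1 s) ^ 2 * h3 s + (4 / (9 * μ)) * deriv h4 s * h4 s) /
          (h2 s ^ 2 - h3 s ^ 2 - h4 s ^ 2) = 0 ∧
      deriv (deriv h2) s + 24 * μ * deriv h1 s * h2 s = 0 ∧
      deriv (deriv h3) s -
        (2 * (deriv h1 s) ^ 2 * h3 s + (4 / (9 * μ)) * deriv h4 s * h4 s) /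
          (h2 s ^ 2 - h3 s ^ 2 - h4 s ^ 2) + 24 * μ * deriv h1 s * h3 s = 0 ∧
      deriv (deriv h4) s + 24 * μ * deriv h1 s * h4 s - 4 * h4 s = 0)
    (hh1' : ∀ s ∈ Set.Ioo α β, 0 < deriv h1 s)
    (hh4pos : ∀ s ∈ Set.Ioo α β, 0 < h4 s)
    (hE1 : deriv h1 0 + deriv h3 0 + 12 * μ * (h2 0 ^ 2 - h3 0 ^ 2 - h4 0 ^ 2) = 0)
    (hE2 : (deriv h2 0) ^ 2 - (deriv h3 0) ^ 2 - (deriv h4 0) ^ 2 - (deriv h1 0) ^ 2 -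
      2 * deriv h1 0 * deriv h3 0 + 4 * h4 0 ^ 2 = 0)
    (hE3 : h2 0 * deriv h2 0 - h3 0 * deriv h3 0 - h4 0 * deriv h4 0 -
      deriv h1 0 * h3 0 = 0)
    (hE4 : deriv h1 0 * (h2 0 ^ 2 - h3 0 ^ 2 - h4 0 ^ 2) + (2 / (9 * μ)) * h4 0 ^ 2 = 0)
    (t : ℝ → ℝ)
    (ht : ∀ s ∈ Set.Ioo α β, t s = -∫ u in (0 : ℝ)..s, Real.sqrt (2 * deriv h1 u))
    (J : Set ℝ) (hJ : J = t '' Set.Ioo α β)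
    (σ : ℝ → ℝ)
    (hσsmooth : ContDiffOn ℝ (⊤ : ℕ∞) σ J)
    (hσanti : StrictAntiOn σ J)
    (hσmaps : Set.MapsTo σ J (Set.Ioo α β))
    (hσt : ∀ s ∈ Set.Ioo α β, σ (t s) = s)
    (htσ : ∀ x ∈ J, t (σ x) = x)
    (f1 f2 f3 F : ℝ → ℝ)
    (hf1 : ∀ x, f1 x = -Real.sqrt (2 * deriv h1 (σ x)))
    (hf2 : ∀ x, f2 x = (h2 (σ x) + h3 (σ x)) / 2)
    (hf3 : ∀ x, f3 x = (h2 (σ x) - h3 (σ x)) / 2)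
    (hF : ∀ x, F x = h4 (σ x) / 2) :
    ∀ x ∈ J,
      (deriv (fun u => (deriv f2 u + f1 u / 4) * f1 u) x + 12 * μ * f1 x * f2 x = 0 ∧
       deriv (fun u => (deriv f3 u - f1 u / 4) * f1 u) x + 12 * μ * f1 x * f3 x = 0 ∧
       deriv (fun u => deriv F u * f1 u) x - 4 * F x / f1 x + 12 * μ * f1 x * F x = 0 ∧
       f1 x * (deriv f2 x - deriv f3 x + f1 x / 2) + 48 * μ * (f2 x * f3 x - F x ^ 2) = 0) ∧
      4 * F x ^ 2 -
        ((deriv F x) ^ 2 - (deriv f2 x + f1 x / 4) * (deriv f3 x - f1 x / 4)) * f1 x ^ 2 = 0 ∧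
      f1 x < 0 ∧
      0 < F x ∧
      0 < (deriv F x) ^ 2 - (deriv f2 x + f1 x / 4) * (deriv f3 x - f1 x / 4) := by
  have hIo : IsOpen (Set.Ioo α β) := isOpen_Ioo
  have hder : ∀ (f : ℝ → ℝ), ContDiffOn ℝ (⊤ : ℕ∞) f (Set.Ioo α β) →
      ∀ s ∈ Set.Ioo α β, HasDerivAt f (deriv f s) s := by
    intro f hf s hs
    exact ((hf.differentiableOn (by simp)).differentiableAt (hIo.mem_nhds hs)).hasDerivAt
  have hdsm : ∀ (f : ℝ → ℝ), ContDiffOn ℝ (⊤ : ℕ∞) f (Set.Ioo α β) →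
      ContDiffOn ℝ (⊤ : ℕ∞) (deriv f) (Set.Ioo α β) := fun f hf => hf.deriv_of_isOpen hIo (by simp)
  have hE12 := first_integrals μ α β hμ h1 h2 h3 h4 hh1 hh2 hh3 hh4 h0mem hden hsysH
    hE1 hE2 hE3 hE4
  set g : ℝ → ℝ := fun u => Real.sqrt (2 * deriv h1 u) with hg
  have hgcont : ContinuousOn g (Set.Ioo α β) :=
    Real.continuous_sqrt.comp_continuousOn
      (continuousOn_const.mul ((hdsm _ hh1).continuousOn))
  have hgpos : ∀ s ∈ Set.Ioo α β, 0 < g s := fun s hs =>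
    Real.sqrt_pos.2 (by linarith [hh1' s hs])
  -- derivative of t
  have Ht : ∀ s ∈ Set.Ioo α β, HasDerivAt t (-(g s)) s := by
    intro s hs
    have hint : HasDerivAt (fun u => ∫ v in (0:ℝ)..u, g v) (g s) s := by
      apply intervalIntegral.integral_hasDerivAt_right
      · exact (hgcont.mono (Set.ordConnected_Ioo.uIcc_subset h0mem hs)).intervalIntegrable
      · exact hgcont.stronglyMeasurableAtFilter hIo s hs
      · exact hgcont.continuousAt (hIo.mem_nhds hs)
    apply hint.neg.congr_of_eventuallyEq
    filter_upwards [hIo.mem_nhds hs] with u hu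
    rw [ht u hu]
    rfl
  have htcont : ContinuousOn t (Set.Ioo α β) := fun u hu =>
    (Ht u hu).continuousAt.continuousWithinAt
  have htanti : StrictAntiOn t (Set.Ioo α β) := by
    apply strictAntiOn_of_deriv_neg (convex_Ioo α β) htcont
    intro u hu
    rw [interior_Ioo] at hu
    rw [(Ht u hu).deriv]
    exact neg_lt_zero.2 (hgpos u hu)
  -- J is open
  have hJopen : IsOpen J := by
    rw [isOpen_iff_mem_nhds]
    intro x hx
    rw [hJ] at hx ⊢
    obtain ⟨s, hs, rfl⟩ := hx
    have hs1 : (α + s) / 2 ∈ Set.Ioo α β := ⟨by linarith [hs.1], by linarith [hs.1, hs.2]⟩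
    have hs2 : (s + β) / 2 ∈ Set.Ioo α β := ⟨by linarith [hs.1, hs.2], by linarith [hs.2]⟩
    have h12 : (α + s) / 2 < s := by linarith [hs.1]
    have h22 : s < (s + β) / 2 := by linarith [hs.2]
    have hIcc : Set.Icc ((α + s) / 2) ((s + β) / 2) ⊆ Set.Ioo α β :=
      Set.Icc_subset_Ioo hs1.1 hs2.2
    have hIVT : Set.Icc (t ((s + β) / 2)) (t ((α + s) / 2)) ⊆
        t '' Set.Icc ((α + s) / 2) ((s + β) / 2) :=
      intermediate_value_Icc' (by linarith) (htcont.mono hIcc)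
    have hnhds : Set.Ioo (t ((s + β) / 2)) (t ((α + s) / 2)) ∈ 𝓝 (t s) :=
      Ioo_mem_nhds (htanti hs hs2 h22) (htanti hs1 hs h12)
    exact Filter.mem_of_superset hnhds
      ((Set.Ioo_subset_Icc_self.trans hIVT).trans (Set.image_mono hIcc))
  have hf1neg : ∀ x ∈ J, f1 x < 0 := by
    intro x hx
    rw [hf1 x]
    exact neg_lt_zero.2 (Real.sqrt_pos.2 (by linarith [hh1' _ (hσmaps hx)]))
  have hf1ne : ∀ x ∈ J, f1 x ≠ 0 := fun x hx => ne_of_lt (hf1neg x hx)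
  have hf1sq : ∀ x ∈ J, f1 x ^ 2 = 2 * deriv h1 (σ x) := by
    intro x hx
    rw [hf1 x, neg_pow, Real.sq_sqrt (by linarith [hh1' _ (hσmaps hx)] : 0 ≤ 2 * deriv h1 (σ x))]
    ring
  have Hσ : ∀ x ∈ J, HasDerivAt σ (1 / f1 x) x := by
    intro x hx
    have hdiff : DifferentiableAt ℝ σ x :=
      (hσsmooth.differentiableOn (by simp)).differentiableAt (hJopen.mem_nhds hx)
    have Hc : HasDerivAt (t ∘ σ) (-(g (σ x)) * deriv σ x) x :=
      (Ht _ (hσmaps hx)).comp x hdiff.hasDerivAt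
    have Hid : HasDerivAt (t ∘ σ) 1 x := by
      apply (hasDerivAt_id x).congr_of_eventuallyEq
      filter_upwards [hJopen.mem_nhds hx] with u hu
      exact htσ u hu
    have huniq : -(g (σ x)) * deriv σ x = 1 := Hc.unique Hid
    have hgf : f1 x = -(g (σ x)) := hf1 x
    have : deriv σ x = 1 / f1 x := by
      rw [eq_div_iff (hf1ne x hx), hgf]
      linarith [huniq]
    exact this ▸ hdiff.hasDerivAt
  have Hcomp : ∀ (p p' : ℝ → ℝ), (∀ s ∈ Set.Ioo α β, HasDerivAt p (p' s) s) →
      ∀ x ∈ J, HasDerivAt (fun u => p (σ u)) (p' (σ x) / f1 x) x := by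
    intro p p' hp x hx
    have := (hp _ (hσmaps hx)).comp x (Hσ x hx)
    simpa [div_eq_mul_inv, Function.comp_def] using this
    -- derivative formulas for f2 f3 F on J
  have Hf2 : ∀ x ∈ J, HasDerivAt f2 ((deriv h2 (σ x) + deriv h3 (σ x)) / 2 / f1 x) x := by
    intro x hx
    have hfun : f2 = fun u => (h2 (σ u) + h3 (σ u)) / 2 := funext hf2
    rw [hfun]
    exact Hcomp _ (fun v => (deriv h2 v + deriv h3 v) / 2)
      (fun v hv => ((hder _ hh2 v hv).add (hder _ hh3 v hv)).div_const 2) x hx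
  have Hf3 : ∀ x ∈ J, HasDerivAt f3 ((deriv h2 (σ x) - deriv h3 (σ x)) / 2 / f1 x) x := by
    intro x hx
    have hfun : f3 = fun u => (h2 (σ u) - h3 (σ u)) / 2 := funext hf3
    rw [hfun]
    exact Hcomp _ (fun v => (deriv h2 v - deriv h3 v) / 2)
      (fun v hv => ((hder _ hh2 v hv).sub (hder _ hh3 v hv)).div_const 2) x hx
  have HFd : ∀ x ∈ J, HasDerivAt F (deriv h4 (σ x) / 2 / f1 x) x := by
    intro x hx
    have hfun : F = fun u => h4 (σ u) / 2 := funext hF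
    rw [hfun]
    exact Hcomp _ (fun v => deriv h4 v / 2)
      (fun v hv => (hder _ hh4 v hv).div_const 2) x hx
  have df2 : ∀ x ∈ J, deriv f2 x = (deriv h2 (σ x) + deriv h3 (σ x)) / 2 / f1 x :=
    fun x hx => (Hf2 x hx).deriv
  have df3 : ∀ x ∈ J, deriv f3 x = (deriv h2 (σ x) - deriv h3 (σ x)) / 2 / f1 x :=
    fun x hx => (Hf3 x hx).deriv
  have dF : ∀ x ∈ J, deriv F x = deriv h4 (σ x) / 2 / f1 x :=
    fun x hx => (HFd x hx).deriv
  have key2 : ∀ u ∈ J, (deriv f2 u + f1 u / 4) * f1 u =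
      (deriv h2 (σ u) + deriv h3 (σ u) + deriv h1 (σ u)) / 2 := by
    intro u hu
    rw [df2 u hu]
    have h1ne := hf1ne u hu
    have hsq := hf1sq u hu
    field_simp
    linear_combination 2 * hsq
  have key3 : ∀ u ∈ J, (deriv f3 u - f1 u / 4) * f1 u =
      (deriv h2 (σ u) - deriv h3 (σ u) - deriv h1 (σ u)) / 2 := by
    intro u hu
    rw [df3 u hu]
    have h1ne := hf1ne u hu
    have hsq := hf1sq u hu
    field_simp
    linear_combination (-2) * hsq
  have keyF : ∀ u ∈ J, deriv F u * f1 u = deriv h4 (σ u) / 2 := by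
    intro u hu
    rw [dF u hu]
    have h1ne := hf1ne u hu
    field_simp
  -- main computation at a point
  intro x hx
  have hsmem := hσmaps hx
  obtain ⟨s1eq, s2eq, s3eq, s4eq⟩ := hsysH (σ x) hsmem
  have he1 := (hE12 (σ x) hsmem).1
  have he2 := (hE12 (σ x) hsmem).2
  have hne := hf1ne x hx
  have hsq := hf1sq x hx
  have hda := hh1' (σ x) hsmem
  have hdd := hh4pos (σ x) hsmem
  have Hg2 : HasDerivAt (fun u => (deriv f2 u + f1 u / 4) * f1 u)
      ((deriv (deriv h2) (σ x) + deriv (deriv h3) (σ x) + deriv (deriv h1) (σ x)) / 2 / f1 x)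
      x := by
    have Hφ := Hcomp (fun v => (deriv h2 v + deriv h3 v + deriv h1 v) / 2)
      (fun v => (deriv (deriv h2) v + deriv (deriv h3) v + deriv (deriv h1) v) / 2)
      (fun v hv => (((hder _ (hdsm _ hh2) v hv).add (hder _ (hdsm _ hh3) v hv)).add
        (hder _ (hdsm _ hh1) v hv)).div_const 2) x hx
    apply Hφ.congr_of_eventuallyEq
    filter_upwards [hJopen.mem_nhds hx] with u hu
    exact key2 u hu
  have Hg3 : HasDerivAt (fun u => (deriv f3 u - f1 u / 4) * f1 u)
      ((deriv (deriv h2) (σ x) - deriv (deriv h3) (σ x) - deriv (deriv h1) (σ x)) / 2 / f1 x)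
      x := by
    have Hφ := Hcomp (fun v => (deriv h2 v - deriv h3 v - deriv h1 v) / 2)
      (fun v => (deriv (deriv h2) v - deriv (deriv h3) v - deriv (deriv h1) v) / 2)
      (fun v hv => (((hder _ (hdsm _ hh2) v hv).sub (hder _ (hdsm _ hh3) v hv)).sub
        (hder _ (hdsm _ hh1) v hv)).div_const 2) x hx
    apply Hφ.congr_of_eventuallyEq
    filter_upwards [hJopen.mem_nhds hx] with u hu
    exact key3 u hu
  have HgF : HasDerivAt (fun u => deriv F u * f1 u) (deriv (deriv h4) (σ x) / 2 / f1 x) x := by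
    have Hφ := Hcomp (fun v => deriv h4 v / 2) (fun v => deriv (deriv h4) v / 2)
      (fun v hv => (hder _ (hdsm _ hh4) v hv).div_const 2) x hx
    apply Hφ.congr_of_eventuallyEq
    filter_upwards [hJopen.mem_nhds hx] with u hu
    exact keyF u hu
  have hval : (deriv F x) ^ 2 - (deriv f2 x + f1 x / 4) * (deriv f3 x - f1 x / 4) =
      (h4 (σ x) / f1 x) ^ 2 := by
    rw [df2 x hx, df3 x hx, dF x hx]
    field_simp
    linear_combination (16 * deriv h3 (σ x) + 4 * (f1 x ^ 2 +
      2 * deriv h1 (σ x))) * hsq - 16 * he2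
  have hpos : 0 < (deriv F x) ^ 2 - (deriv f2 x + f1 x / 4) * (deriv f3 x - f1 x / 4) := by
    rw [hval]
    have : h4 (σ x) / f1 x ≠ 0 := div_ne_zero (ne_of_gt hdd) hne
    positivity
  refine ⟨⟨?_, ?_, ?_, ?_⟩, ?_, hf1neg x hx, ?_, hpos⟩
  · rw [Hg2.deriv, hf2 x]
    field_simp
    linear_combination s1eq + s2eq + s3eq + 12 * μ * (h2 (σ x) + h3 (σ x)) * hsq
  · rw [Hg3.deriv, hf3 x]
    field_simp
    linear_combination s2eq - s3eq - s1eq + 12 * μ * (h2 (σ x) - h3 (σ x)) * hsq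
  · rw [HgF.deriv, hF x]
    field_simp
    linear_combination s4eq + 12 * μ * h4 (σ x) * hsq
  · rw [hf2 x, hf3 x, hF x, df2 x hx, df3 x hx]
    field_simp
    linear_combination 4 * he1 + 2 * hsq
  · rw [hval, hF x]
    field_simp
    ring
  · rw [hF x]
    positivity
end

section
/- Let μ ≠ 0 and let (h1,h2,h3,h4) be smooth functions on an open interval J with h2² − h3² − h4² nowhere zero, solving system (H) on J. Define the functions E1 = h1' + h3' + 12μ·(h2² − h3² − h4²), E2 = (h2')² − (h3')² − (h4')² − (h1')² − 2·h1'·h3' + 4·h4², E3 = h2·h2' − h3·h3' − h4·h4' − h1'·h3, E4 = h1'·(h2² − h3² − h4²) + (2/(9μ))·h4². If E1, E2, E3, E4 all vanish at some point s0 ∈ J, then E1, E2, E3, E4 vanish identically on J (i.e., these quantities are conserved at the zero level along solutions of system (H)). -/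
open Set


lemma aux_gronwall_zero {a b s0 : ℝ} {f f' : ℝ → (Fin 4 → ℝ)} {c : ℝ → ℝ}
    (hs0 : s0 ∈ Set.Ioo a b)
    (hderiv : ∀ t ∈ Set.Ioo a b, HasDerivAt f (f' t) t)
    (hc : ContinuousOn c (Set.Ioo a b))
    (hbound : ∀ t ∈ Set.Ioo a b, ‖f' t‖ ≤ c t * ‖f t‖)
    (h0 : f s0 = 0) : ∀ s ∈ Set.Ioo a b, f s = 0 := by
  intro s hs
  rcases le_total s0 s with hle | hle
  · have hsub : Icc s0 s ⊆ Ioo a b := fun t ht =>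
      ⟨lt_of_lt_of_le hs0.1 ht.1, lt_of_le_of_lt ht.2 hs.2⟩
    obtain ⟨K, hK⟩ := isCompact_Icc.exists_bound_of_continuousOn (hc.mono hsub)
    have hgb := norm_le_gronwallBound_of_norm_deriv_right_le (f := f) (f' := f')
      (δ := 0) (K := K) (ε := 0) (a := s0) (b := s)
      (fun t ht => ((hderiv t (hsub ht)).continuousAt).continuousWithinAt)
      (fun t ht => ((hderiv t (hsub (Ico_subset_Icc_self ht))).hasDerivWithinAt))
      (by simp [h0])
      (fun t ht => by
        have h1 := hbound t (hsub (Ico_subset_Icc_self ht))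
        have h2 := hK t (Ico_subset_Icc_self ht)
        have h3 : c t ≤ K := (le_abs_self _).trans (by simpa using h2)
        nlinarith [norm_nonneg (f t), norm_nonneg (f' t)])
    have := hgb s ⟨hle, le_refl s⟩
    rw [gronwallBound_ε0_δ0] at this
    exact norm_le_zero_iff.mp this
  · set g : ℝ → (Fin 4 → ℝ) := fun t => f (-t) with hg
    have hsub : Icc s s0 ⊆ Ioo a b := fun t ht =>
      ⟨lt_of_lt_of_le hs.1 ht.1, lt_of_le_of_lt ht.2 hs0.2⟩
    obtain ⟨K, hK⟩ := isCompact_Icc.exists_bound_of_continuousOn (hc.mono hsub)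
    have hmem : ∀ t ∈ Icc (-s0) (-s), -t ∈ Icc s s0 := fun t ht =>
      ⟨by have := ht.2; linarith, by have := ht.1; linarith⟩
    have hgderiv : ∀ t ∈ Icc (-s0) (-s), HasDerivAt g (-(f' (-t))) t := by
      intro t ht
      have := (hderiv (-t) (hsub (hmem t ht))).scomp t (hasDerivAt_neg t)
      simpa [hg, Function.comp_def] using this
    have hgb := norm_le_gronwallBound_of_norm_deriv_right_le
      (f := g) (f' := fun t => -(f' (-t)))
      (δ := 0) (K := K) (ε := 0) (a := -s0) (b := -s)
      (fun t ht => ((hgderiv t ht).continuousAt).continuousWithinAt)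
      (fun t ht => (hgderiv t (Ico_subset_Icc_self ht)).hasDerivWithinAt)
      (by simp [hg, h0])
      (fun t ht => by
        have hmt := hmem t (Ico_subset_Icc_self ht)
        have h1 := hbound (-t) (hsub hmt)
        have h2 := hK (-t) hmt
        have h3 : c (-t) ≤ K := (le_abs_self _).trans (by simpa using h2)
        have h4 : ‖g t‖ = ‖f (-t)‖ := rfl
        rw [norm_neg, h4]
        nlinarith [norm_nonneg (f (-t)), norm_nonneg (f' (-t))])
    have := hgb (-s) ⟨neg_le_neg hle, le_refl _⟩
    rw [gronwallBound_ε0_δ0] at this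
    have : g (-s) = 0 := norm_le_zero_iff.mp this
    simpa [hg] using this

set_option maxHeartbeats 1000000 in
/-- Podestà–Spiro: the four quantities `E1, E2, E3, E4` are conserved at the zero level
along solutions of system (H): if they all vanish at some point `s0` of the interval,
they vanish identically. -/
theorem stmt_2
    (μ α β s0 : ℝ) (hμ : μ ≠ 0)
    (h1 h2 h3 h4 : ℝ → ℝ)
    (hh1 : ContDiffOn ℝ (⊤ : ℕ∞) h1 (Set.Ioo α β))
    (hh2 : ContDiffOn ℝ (⊤ : ℕ∞) h2 (Set.Ioo α β))
    (hh3 : ContDiffOn ℝ (⊤ : ℕ∞) h3 (Set.Ioo α β))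
    (hh4 : ContDiffOn ℝ (⊤ : ℕ∞) h4 (Set.Ioo α β))
    (hden : ∀ s ∈ Set.Ioo α β, h2 s ^ 2 - h3 s ^ 2 - h4 s ^ 2 ≠ 0)
    (hsysH : ∀ s ∈ Set.Ioo α β,
      deriv (deriv h1) s +
        (2 * (deriv h1 s) ^ 2 * h3 s + (4 / (9 * μ)) * deriv h4 s * h4 s) /
          (h2 s ^ 2 - h3 s ^ 2 - h4 s ^ 2) = 0 ∧
      deriv (deriv h2) s + 24 * μ * deriv h1 s * h2 s = 0 ∧
      deriv (deriv h3) s -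
        (2 * (deriv h1 s) ^ 2 * h3 s + (4 / (9 * μ)) * deriv h4 s * h4 s) /
          (h2 s ^ 2 - h3 s ^ 2 - h4 s ^ 2) + 24 * μ * deriv h1 s * h3 s = 0 ∧
      deriv (deriv h4) s + 24 * μ * deriv h1 s * h4 s - 4 * h4 s = 0)
    (hs0 : s0 ∈ Set.Ioo α β)
    (hE1 : deriv h1 s0 + deriv h3 s0 + 12 * μ * (h2 s0 ^ 2 - h3 s0 ^ 2 - h4 s0 ^ 2) = 0)
    (hE2 : (deriv h2 s0) ^ 2 - (deriv h3 s0) ^ 2 - (deriv h4 s0) ^ 2 - (deriv h1 s0) ^ 2 -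
      2 * deriv h1 s0 * deriv h3 s0 + 4 * h4 s0 ^ 2 = 0)
    (hE3 : h2 s0 * deriv h2 s0 - h3 s0 * deriv h3 s0 - h4 s0 * deriv h4 s0 -
      deriv h1 s0 * h3 s0 = 0)
    (hE4 : deriv h1 s0 * (h2 s0 ^ 2 - h3 s0 ^ 2 - h4 s0 ^ 2) + (2 / (9 * μ)) * h4 s0 ^ 2 = 0) :
    ∀ s ∈ Set.Ioo α β,
      deriv h1 s + deriv h3 s + 12 * μ * (h2 s ^ 2 - h3 s ^ 2 - h4 s ^ 2) = 0 ∧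
      (deriv h2 s) ^ 2 - (deriv h3 s) ^ 2 - (deriv h4 s) ^ 2 - (deriv h1 s) ^ 2 -
        2 * deriv h1 s * deriv h3 s + 4 * h4 s ^ 2 = 0 ∧
      h2 s * deriv h2 s - h3 s * deriv h3 s - h4 s * deriv h4 s - deriv h1 s * h3 s = 0 ∧
      deriv h1 s * (h2 s ^ 2 - h3 s ^ 2 - h4 s ^ 2) + (2 / (9 * μ)) * h4 s ^ 2 = 0 := by
  set J := Set.Ioo α β with hJ
  have hJopen : IsOpen J := isOpen_Ioo
  -- first derivatives
  have hd1 : ∀ s ∈ J, HasDerivAt h1 (deriv h1 s) s := fun s hs =>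
    ((hh1.differentiableOn (by simp)) s hs).differentiableAt (hJopen.mem_nhds hs) |>.hasDerivAt
  have hd2 : ∀ s ∈ J, HasDerivAt h2 (deriv h2 s) s := fun s hs =>
    ((hh2.differentiableOn (by simp)) s hs).differentiableAt (hJopen.mem_nhds hs) |>.hasDerivAt
  have hd3 : ∀ s ∈ J, HasDerivAt h3 (deriv h3 s) s := fun s hs =>
    ((hh3.differentiableOn (by simp)) s hs).differentiableAt (hJopen.mem_nhds hs) |>.hasDerivAt
  have hd4 : ∀ s ∈ J, HasDerivAt h4 (deriv h4 s) s := fun s hs =>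
    ((hh4.differentiableOn (by simp)) s hs).differentiableAt (hJopen.mem_nhds hs) |>.hasDerivAt
  -- smoothness of derivatives
  have hh1' : ContDiffOn ℝ (⊤ : ℕ∞) (deriv h1) J := hh1.deriv_of_isOpen hJopen (by simp)
  have hh2' : ContDiffOn ℝ (⊤ : ℕ∞) (deriv h2) J := hh2.deriv_of_isOpen hJopen (by simp)
  have hh3' : ContDiffOn ℝ (⊤ : ℕ∞) (deriv h3) J := hh3.deriv_of_isOpen hJopen (by simp)
  have hh4' : ContDiffOn ℝ (⊤ : ℕ∞) (deriv h4) J := hh4.deriv_of_isOpen hJopen (by simp)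
  have hdd1 : ∀ s ∈ J, HasDerivAt (deriv h1) (deriv (deriv h1) s) s := fun s hs =>
    ((hh1'.differentiableOn (by simp)) s hs).differentiableAt (hJopen.mem_nhds hs) |>.hasDerivAt
  have hdd2 : ∀ s ∈ J, HasDerivAt (deriv h2) (deriv (deriv h2) s) s := fun s hs =>
    ((hh2'.differentiableOn (by simp)) s hs).differentiableAt (hJopen.mem_nhds hs) |>.hasDerivAt
  have hdd3 : ∀ s ∈ J, HasDerivAt (deriv h3) (deriv (deriv h3) s) s := fun s hs =>
    ((hh3'.differentiableOn (by simp)) s hs).differentiableAt (hJopen.mem_nhds hs) |>.hasDerivAt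
  have hdd4 : ∀ s ∈ J, HasDerivAt (deriv h4) (deriv (deriv h4) s) s := fun s hs =>
    ((hh4'.differentiableOn (by simp)) s hs).differentiableAt (hJopen.mem_nhds hs) |>.hasDerivAt
  -- the conserved quantities
  set E1 : ℝ → ℝ := fun s =>
    deriv h1 s + deriv h3 s + 12 * μ * (h2 s ^ 2 - h3 s ^ 2 - h4 s ^ 2) with hE1def
  set E2f : ℝ → ℝ := fun s =>
    (deriv h2 s) ^ 2 - (deriv h3 s) ^ 2 - (deriv h4 s) ^ 2 - (deriv h1 s) ^ 2 -
      2 * deriv h1 s * deriv h3 s + 4 * h4 s ^ 2 with hE2def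
  set E3f : ℝ → ℝ := fun s =>
    h2 s * deriv h2 s - h3 s * deriv h3 s - h4 s * deriv h4 s - deriv h1 s * h3 s with hE3def
  set E4f : ℝ → ℝ := fun s =>
    deriv h1 s * (h2 s ^ 2 - h3 s ^ 2 - h4 s ^ 2) + (2 / (9 * μ)) * h4 s ^ 2 with hE4def
  set F : ℝ → (Fin 4 → ℝ) := fun s => ![E1 s, E2f s, E3f s, E4f s] with hFdef
  set F' : ℝ → (Fin 4 → ℝ) := fun s =>
    ![24 * μ * E3f s, -48 * μ * deriv h1 s * E3f s,
      E2f s + deriv h1 s * E1 s - 36 * μ * E4f s, 2 * deriv h1 s * E3f s] with hF'def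
  -- derivative of F
  have hF : ∀ s ∈ J, HasDerivAt F (F' s) s := by
    intro s hs
    obtain ⟨heq1, heq2, heq3, heq4⟩ := hsysH s hs
    have hD := hden s hs
    have h9μ : (9 : ℝ) * μ ≠ 0 := by positivity
    have ha1 : deriv (deriv h1) s =
        -((2 * (deriv h1 s) ^ 2 * h3 s + (4 / (9 * μ)) * deriv h4 s * h4 s) /
          (h2 s ^ 2 - h3 s ^ 2 - h4 s ^ 2)) := by linarith
    have ha2 : deriv (deriv h2) s = -(24 * μ * deriv h1 s * h2 s) := by linarith
    have ha3 : deriv (deriv h3) s =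
        (2 * (deriv h1 s) ^ 2 * h3 s + (4 / (9 * μ)) * deriv h4 s * h4 s) /
          (h2 s ^ 2 - h3 s ^ 2 - h4 s ^ 2) - 24 * μ * deriv h1 s * h3 s := by linarith
    have ha4 : deriv (deriv h4) s = 4 * h4 s - 24 * μ * deriv h1 s * h4 s := by linarith
    rw [hasDerivAt_pi]
    intro i
    fin_cases i
    · -- E1
      have H : HasDerivAt E1
          (deriv (deriv h1) s + deriv (deriv h3) s +
            12 * μ * (2 * h2 s * deriv h2 s - 2 * h3 s * deriv h3 s - 2 * h4 s * deriv h4 s))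
          s := by
        have := ((hdd1 s hs).add (hdd3 s hs)).add
          ((((((hd2 s hs).mul (hd2 s hs)).sub ((hd3 s hs).mul (hd3 s hs))).sub
            ((hd4 s hs).mul (hd4 s hs))).const_mul (12 * μ)))
        convert this using 1
        · rfl
        · rfl
        · rw [hE1def]; funext t; simp only [Pi.add_apply, Pi.sub_apply, Pi.mul_apply]; ring
        · ring
      convert H using 1
      show 24 * μ * E3f s = _
      rw [hE3def, ha1, ha3]
      field_simp [hD, hμ]
      ring
      all_goals rfl
    · -- E2
      have H : HasDerivAt E2f
          (2 * deriv h2 s * deriv (deriv h2) s - 2 * deriv h3 s * deriv (deriv h3) s -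
            2 * deriv h4 s * deriv (deriv h4) s - 2 * deriv h1 s * deriv (deriv h1) s -
            2 * (deriv (deriv h1) s * deriv h3 s + deriv h1 s * deriv (deriv h3) s) +
            8 * h4 s * deriv h4 s) s := by
        have := (((((((hdd2 s hs).mul (hdd2 s hs)).sub ((hdd3 s hs).mul (hdd3 s hs))).sub
          ((hdd4 s hs).mul (hdd4 s hs))).sub ((hdd1 s hs).mul (hdd1 s hs))).sub
          (((hdd1 s hs).mul (hdd3 s hs)).const_mul 2)).add
          (((hd4 s hs).mul (hd4 s hs)).const_mul 4))
        convert this using 1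
        · rfl
        · rfl
        · rw [hE2def]; funext t; simp only [Pi.add_apply, Pi.sub_apply, Pi.mul_apply]; ring
        · ring
      convert H using 1
      show -48 * μ * deriv h1 s * E3f s = _
      rw [hE3def, ha1, ha2, ha3, ha4]
      field_simp [hD, hμ]
      ring
      all_goals rfl
    · -- E3
      have H : HasDerivAt E3f
          (deriv h2 s * deriv h2 s + h2 s * deriv (deriv h2) s -
            (deriv h3 s * deriv h3 s + h3 s * deriv (deriv h3) s) -
            (deriv h4 s * deriv h4 s + h4 s * deriv (deriv h4) s) -
            (deriv (deriv h1) s * h3 s + deriv h1 s * deriv h3 s)) s := by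
        exact ((((hd2 s hs).mul (hdd2 s hs)).sub ((hd3 s hs).mul (hdd3 s hs))).sub
          ((hd4 s hs).mul (hdd4 s hs))).sub ((hdd1 s hs).mul (hd3 s hs))
      convert H using 1
      show E2f s + deriv h1 s * E1 s - 36 * μ * E4f s = _
      rw [hE2def, hE1def, hE4def, ha1, ha2, ha3, ha4]
      field_simp [hD, hμ]
      ring
      all_goals rfl
    · -- E4
      have H : HasDerivAt E4f
          (deriv (deriv h1) s * (h2 s ^ 2 - h3 s ^ 2 - h4 s ^ 2) +
            deriv h1 s * (2 * h2 s * deriv h2 s - 2 * h3 s * deriv h3 s -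
              2 * h4 s * deriv h4 s) + (2 / (9 * μ)) * (2 * h4 s * deriv h4 s)) s := by
        have := ((hdd1 s hs).mul
            ((((hd2 s hs).mul (hd2 s hs)).sub ((hd3 s hs).mul (hd3 s hs))).sub
              ((hd4 s hs).mul (hd4 s hs)))).add
          (((hd4 s hs).mul (hd4 s hs)).const_mul (2 / (9 * μ)))
        convert this using 1
        · rfl
        · rfl
        · rw [hE4def]; funext t; simp only [Pi.add_apply, Pi.sub_apply, Pi.mul_apply]; ring
        · simp only [Pi.add_apply, Pi.sub_apply, Pi.mul_apply]; ring
      convert H using 1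
      show 2 * deriv h1 s * E3f s = _
      rw [hE3def, ha1]
      field_simp [hD, hμ]
      ring
      all_goals rfl
  -- the coefficient function
  set c : ℝ → ℝ := fun t =>
    24 * |μ| + 48 * |μ| * |deriv h1 t| + (1 + |deriv h1 t| + 36 * |μ|) + 2 * |deriv h1 t|
    with hcdef
  have hd1cont : ContinuousOn (deriv h1) J := hh1'.continuousOn
  have habs : ContinuousOn (fun t => |deriv h1 t|) J := hd1cont.abs
  have hccont : ContinuousOn c J := by
    rw [hcdef]
    exact ((continuousOn_const.add (continuousOn_const.mul habs)).add
      ((continuousOn_const.add habs).add continuousOn_const)).add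
      (continuousOn_const.mul habs)
  have hcle : ∀ t, 0 ≤ |μ| ∧ 0 ≤ |deriv h1 t| ∧ 0 ≤ |μ| * |deriv h1 t| := fun t =>
    ⟨abs_nonneg _, abs_nonneg _, mul_nonneg (abs_nonneg _) (abs_nonneg _)⟩
  -- norm bound
  have hbound : ∀ t ∈ J, ‖F' t‖ ≤ c t * ‖F t‖ := by
    intro t _
    have kE1 : |E1 t| ≤ ‖F t‖ := norm_le_pi_norm (F t) 0
    have kE2 : |E2f t| ≤ ‖F t‖ := norm_le_pi_norm (F t) 1
    have kE3 : |E3f t| ≤ ‖F t‖ := norm_le_pi_norm (F t) 2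
    have kE4 : |E4f t| ≤ ‖F t‖ := norm_le_pi_norm (F t) 3
    have hFn : (0 : ℝ) ≤ ‖F t‖ := norm_nonneg _
    obtain ⟨n1, n2, n3⟩ := hcle t
    have hnn : (0 : ℝ) ≤ c t * ‖F t‖ := by
      have : (0:ℝ) ≤ c t := by rw [hcdef]; positivity
      exact mul_nonneg this hFn
    rw [pi_norm_le_iff_of_nonneg hnn]
    intro i
    have hct : c t = 24 * |μ| + 48 * |μ| * |deriv h1 t| + (1 + |deriv h1 t| + 36 * |μ|) +
        2 * |deriv h1 t| := by rw [hcdef]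
    fin_cases i
    · show ‖24 * μ * E3f t‖ ≤ c t * ‖F t‖
      rw [Real.norm_eq_abs, abs_mul, abs_mul, abs_of_nonneg (by norm_num : (0:ℝ) ≤ 24), hct]
      nlinarith [mul_nonneg n1 (sub_nonneg.mpr kE3), mul_nonneg n3 hFn,
        mul_nonneg n2 hFn, mul_nonneg n1 hFn]
    · show ‖-48 * μ * deriv h1 t * E3f t‖ ≤ c t * ‖F t‖
      rw [Real.norm_eq_abs, abs_mul, abs_mul, abs_mul,
        abs_of_nonpos (by norm_num : (-48:ℝ) ≤ 0), hct]
      nlinarith [mul_nonneg n3 (sub_nonneg.mpr kE3), mul_nonneg n3 hFn,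
        mul_nonneg n2 hFn, mul_nonneg n1 hFn]
    · show ‖E2f t + deriv h1 t * E1 t - 36 * μ * E4f t‖ ≤ c t * ‖F t‖
      rw [Real.norm_eq_abs, hct]
      have tri : |E2f t + deriv h1 t * E1 t - 36 * μ * E4f t| ≤
          |E2f t| + |deriv h1 t| * |E1 t| + (36 * |μ|) * |E4f t| := by
        calc |E2f t + deriv h1 t * E1 t - 36 * μ * E4f t|
            ≤ |E2f t + deriv h1 t * E1 t| + |36 * μ * E4f t| := abs_sub _ _
          _ ≤ |E2f t| + |deriv h1 t * E1 t| + |36 * μ * E4f t| :=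
              add_le_add_left (abs_add_le _ _) _
          _ = |E2f t| + |deriv h1 t| * |E1 t| + (36 * |μ|) * |E4f t| := by
              rw [abs_mul, abs_mul, abs_mul,
                abs_of_nonneg (by norm_num : (0:ℝ) ≤ 36)]
      nlinarith [mul_nonneg n2 (sub_nonneg.mpr kE1), mul_nonneg n1 (sub_nonneg.mpr kE4),
        mul_nonneg n3 hFn, mul_nonneg n2 hFn, mul_nonneg n1 hFn]
    · show ‖2 * deriv h1 t * E3f t‖ ≤ c t * ‖F t‖
      rw [Real.norm_eq_abs, abs_mul, abs_mul, abs_of_nonneg (by norm_num : (0:ℝ) ≤ 2), hct]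
      nlinarith [mul_nonneg n2 (sub_nonneg.mpr kE3), mul_nonneg n3 hFn,
        mul_nonneg n2 hFn, mul_nonneg n1 hFn]
  -- initial condition
  have hF0 : F s0 = 0 := by
    funext i
    fin_cases i
    · show E1 s0 = 0; rw [hE1def]; exact hE1
    · show E2f s0 = 0; rw [hE2def]; exact hE2
    · show E3f s0 = 0; rw [hE3def]; exact hE3
    · show E4f s0 = 0; rw [hE4def]; exact hE4
  have hzero := aux_gronwall_zero hs0 hF hccont hbound hF0
  intro s hs
  have h := hzero s hs
  have e1 : E1 s = 0 := congrFun h 0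
  have e2 : E2f s = 0 := congrFun h 1
  have e3 : E3f s = 0 := congrFun h 2
  have e4 : E4f s = 0 := congrFun h 3
  rw [hE1def] at e1; rw [hE2def] at e2; rw [hE3def] at e3; rw [hE4def] at e4
  exact ⟨e1, e2, e3, e4⟩
end

section
/- Let μ ∈ ℝ and let f1, f2, f3, F be smooth real functions on an open interval I with f1 nowhere zero, satisfying at every point the first three equations of system (F): ((f2' + f1/4)·f1)' + 12μ·f1·f2 = 0, ((f3' − f1/4)·f1)' + 12μ·f1·f3 = 0, and (F'·f1)' − 4·F/f1 + 12μ·f1·F = 0. Define G = 4·F² − (F'² − (f2' + f1/4)·(f3' − f1/4))·f1² and Q = f1·(f2' − f3' + f1/2) + 48μ·(f2·f3 − F²). Then G'(t) = −(f1(t)²/4)·Q'(t) for every t ∈ I. -/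
private lemma diffAt_of_cd {f : ℝ → ℝ} {s : Set ℝ} (hf : ContDiffOn ℝ (⊤ : ℕ∞) f s)
    (hs : IsOpen s) {x : ℝ} (hx : x ∈ s) : DifferentiableAt ℝ f x :=
  (hf.contDiffAt (hs.mem_nhds hx)).differentiableAt (by simp)

private lemma diffAt_deriv_of_cd {f : ℝ → ℝ} {s : Set ℝ} (hf : ContDiffOn ℝ (⊤ : ℕ∞) f s)
    (hs : IsOpen s) {x : ℝ} (hx : x ∈ s) : DifferentiableAt ℝ (deriv f) x :=
  diffAt_of_cd (hf.deriv_of_isOpen hs (by simp)) hs hx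

/-- Podestà–Spiro: for solutions of the first three equations of system (F), the
derivative of the constraint quantity `G` equals `−(f1²/4)` times the derivative of the
fourth equation's left-hand side `Q`. -/
theorem stmt_3
    (μ a b : ℝ)
    (f1 f2 f3 F : ℝ → ℝ)
    (hf1 : ContDiffOn ℝ (⊤ : ℕ∞) f1 (Set.Ioo a b))
    (hf2 : ContDiffOn ℝ (⊤ : ℕ∞) f2 (Set.Ioo a b))
    (hf3 : ContDiffOn ℝ (⊤ : ℕ∞) f3 (Set.Ioo a b))
    (hF : ContDiffOn ℝ (⊤ : ℕ∞) F (Set.Ioo a b))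
    (hf1ne : ∀ x ∈ Set.Ioo a b, f1 x ≠ 0)
    (heq1 : ∀ x ∈ Set.Ioo a b,
      deriv (fun u => (deriv f2 u + f1 u / 4) * f1 u) x + 12 * μ * f1 x * f2 x = 0)
    (heq2 : ∀ x ∈ Set.Ioo a b,
      deriv (fun u => (deriv f3 u - f1 u / 4) * f1 u) x + 12 * μ * f1 x * f3 x = 0)
    (heq3 : ∀ x ∈ Set.Ioo a b,
      deriv (fun u => deriv F u * f1 u) x - 4 * F x / f1 x + 12 * μ * f1 x * F x = 0)
    (G Q : ℝ → ℝ)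
    (hG : ∀ x, G x = 4 * F x ^ 2 -
      ((deriv F x) ^ 2 - (deriv f2 x + f1 x / 4) * (deriv f3 x - f1 x / 4)) * f1 x ^ 2)
    (hQ : ∀ x, Q x = f1 x * (deriv f2 x - deriv f3 x + f1 x / 2) +
      48 * μ * (f2 x * f3 x - F x ^ 2)) :
    ∀ x ∈ Set.Ioo a b, deriv G x = -(f1 x ^ 2 / 4) * deriv Q x := by
  intro x hx
  have hso : IsOpen (Set.Ioo a b) := isOpen_Ioo
  -- differentiability facts at x
  have h1 : HasDerivAt f1 (deriv f1 x) x := (diffAt_of_cd hf1 hso hx).hasDerivAt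
  have h2 : HasDerivAt f2 (deriv f2 x) x := (diffAt_of_cd hf2 hso hx).hasDerivAt
  have h3 : HasDerivAt f3 (deriv f3 x) x := (diffAt_of_cd hf3 hso hx).hasDerivAt
  have hFa : HasDerivAt F (deriv F x) x := (diffAt_of_cd hF hso hx).hasDerivAt
  have hd2 : HasDerivAt (deriv f2) (deriv (deriv f2) x) x :=
    (diffAt_deriv_of_cd hf2 hso hx).hasDerivAt
  have hd3 : HasDerivAt (deriv f3) (deriv (deriv f3) x) x :=
    (diffAt_deriv_of_cd hf3 hso hx).hasDerivAt
  have hdF : HasDerivAt (deriv F) (deriv (deriv F) x) x :=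
    (diffAt_deriv_of_cd hF hso hx).hasDerivAt
  set f1x := f1 x; set f2x := f2 x; set f3x := f3 x; set Fx := F x
  set d1 := deriv f1 x; set d2 := deriv f2 x; set d3 := deriv f3 x; set dF := deriv F x
  set e2 := deriv (deriv f2) x; set e3 := deriv (deriv f3) x; set eF := deriv (deriv F) x
  have hne : f1x ≠ 0 := hf1ne x hx
  -- derivatives of the three ODE left-hand sides
  have hL1 : deriv (fun u => (deriv f2 u + f1 u / 4) * f1 u) x
      = (e2 + d1 / 4) * f1x + (d2 + f1x / 4) * d1 := by
    have := ((hd2.add (h1.div_const 4)).mul h1).deriv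
    exact this
  have hL2 : deriv (fun u => (deriv f3 u - f1 u / 4) * f1 u) x
      = (e3 - d1 / 4) * f1x + (d3 - f1x / 4) * d1 := by
    have := ((hd3.sub (h1.div_const 4)).mul h1).deriv
    exact this
  have hL3 : deriv (fun u => deriv F u * f1 u) x = eF * f1x + dF * d1 := by
    have := (hdF.mul h1).deriv
    exact this
  have E1 : (e2 + d1 / 4) * f1x + (d2 + f1x / 4) * d1 + 12 * μ * f1x * f2x = 0 := by
    have := heq1 x hx; rw [hL1] at this; exact this
  have E2 : (e3 - d1 / 4) * f1x + (d3 - f1x / 4) * d1 + 12 * μ * f1x * f3x = 0 := by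
    have := heq2 x hx; rw [hL2] at this; exact this
  have E3 : eF * f1x ^ 2 + dF * d1 * f1x - 4 * Fx + 12 * μ * f1x ^ 2 * Fx = 0 := by
    have h := heq3 x hx; rw [hL3] at h
    have h0 : eF * f1x + dF * d1 - 4 * Fx / f1x + 12 * μ * f1x * Fx = 0 := h
    have hdiv : 4 * Fx / f1x * f1x = 4 * Fx := div_mul_cancel₀ _ hne
    linear_combination f1x * h0 + hdiv
  -- derivative of G
  have hGfun : G = fun u => 4 * F u ^ 2 -
      ((deriv F u) ^ 2 - (deriv f2 u + f1 u / 4) * (deriv f3 u - f1 u / 4)) * f1 u ^ 2 :=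
    funext hG
  have hGd : deriv G x = 4 * (2 * Fx ^ 1 * dF) -
      (((2 * dF ^ 1 * eF) - ((e2 + d1 / 4) * (d3 - f1x / 4) + (d2 + f1x / 4) * (e3 - d1 / 4)))
        * f1x ^ 2 + (dF ^ 2 - (d2 + f1x / 4) * (d3 - f1x / 4)) * (2 * f1x ^ 1 * d1)) := by
    rw [hGfun]
    exact (((hFa.pow 2).const_mul 4).sub
      ((((hdF.pow 2).sub ((hd2.add (h1.div_const 4)).mul (hd3.sub (h1.div_const 4)))).mul
        (h1.pow 2)))).deriv
  -- derivative of Q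
  have hQfun : Q = fun u => f1 u * (deriv f2 u - deriv f3 u + f1 u / 2) +
      48 * μ * (f2 u * f3 u - F u ^ 2) := funext hQ
  have hQd : deriv Q x = (d1 * (d2 - d3 + f1x / 2) + f1x * ((e2 - e3) + d1 / 2)) +
      48 * μ * ((d2 * f3x + f2x * d3) - 2 * Fx ^ 1 * dF) := by
    rw [hQfun]
    exact ((h1.mul (((hd2.sub hd3)).add (h1.div_const 2))).add
      (((h2.mul h3).sub (hFa.pow 2)).const_mul (48 * μ))).deriv
  rw [hGd, hQd]
  linear_combination (f1x * d3) * E1 + (f1x * d2) * E2 + (-(2 * dF)) * E3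
end

section
/- Let μ ∈ ℝ and let (f1,f2,f3,F) be smooth real functions on an open interval I with f1 nowhere zero, solving all four equations of system (F) on I. Then the function G(t) = 4·F(t)² − (F'(t)² − (f2'(t) + f1(t)/4)·(f3'(t) − f1(t)/4))·f1(t)² is constant on I; in particular, if the constraint (C) holds at one point t0 ∈ I, then (C) holds at every point of I. -/
/-- Podestà–Spiro: along any solution of the full system (F) with `f1` nowhere zero,
the constraint quantity `G` is constant; in particular if the constraint (C) holds
at one point of the interval it holds everywhere. -/
theorem stmt_4
    (μ a b : ℝ)
    (f1 f2 f3 F : ℝ → ℝ)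
    (hf1 : ContDiffOn ℝ (⊤ : ℕ∞) f1 (Set.Ioo a b))
    (hf2 : ContDiffOn ℝ (⊤ : ℕ∞) f2 (Set.Ioo a b))
    (hf3 : ContDiffOn ℝ (⊤ : ℕ∞) f3 (Set.Ioo a b))
    (hF : ContDiffOn ℝ (⊤ : ℕ∞) F (Set.Ioo a b))
    (hf1ne : ∀ x ∈ Set.Ioo a b, f1 x ≠ 0)
    (hsysF : ∀ x ∈ Set.Ioo a b,
      deriv (fun u => (deriv f2 u + f1 u / 4) * f1 u) x + 12 * μ * f1 x * f2 x = 0 ∧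
      deriv (fun u => (deriv f3 u - f1 u / 4) * f1 u) x + 12 * μ * f1 x * f3 x = 0 ∧
      deriv (fun u => deriv F u * f1 u) x - 4 * F x / f1 x + 12 * μ * f1 x * F x = 0 ∧
      f1 x * (deriv f2 x - deriv f3 x + f1 x / 2) + 48 * μ * (f2 x * f3 x - F x ^ 2) = 0)
    (G : ℝ → ℝ)
    (hG : ∀ x, G x = 4 * F x ^ 2 -
      ((deriv F x) ^ 2 - (deriv f2 x + f1 x / 4) * (deriv f3 x - f1 x / 4)) * f1 x ^ 2) :
    (∀ x ∈ Set.Ioo a b, ∀ y ∈ Set.Ioo a b, G x = G y) ∧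
    (∀ t0 ∈ Set.Ioo a b, G t0 = 0 → ∀ x ∈ Set.Ioo a b, G x = 0) := by
  have hso : IsOpen (Set.Ioo a b) := isOpen_Ioo
  -- derivatives are smooth on the open interval
  have hf2' : ContDiffOn ℝ (⊤ : ℕ∞) (deriv f2) (Set.Ioo a b) := hf2.deriv_of_isOpen hso (by simp)
  have hf3' : ContDiffOn ℝ (⊤ : ℕ∞) (deriv f3) (Set.Ioo a b) := hf3.deriv_of_isOpen hso (by simp)
  have hF' : ContDiffOn ℝ (⊤ : ℕ∞) (deriv F) (Set.Ioo a b) := hF.deriv_of_isOpen hso (by simp)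
  set P : ℝ → ℝ := fun u => (deriv f2 u + f1 u / 4) * f1 u with hPdef
  set Q : ℝ → ℝ := fun u => (deriv f3 u - f1 u / 4) * f1 u with hQdef
  set R : ℝ → ℝ := fun u => deriv F u * f1 u with hRdef
  -- pointwise differentiability
  have key : ∀ x ∈ Set.Ioo a b, HasDerivAt G 0 x := by
    intro x hx
    have hmem := hso.mem_nhds hx
    have d1 : DifferentiableAt ℝ f1 x := (hf1.contDiffAt hmem).differentiableAt (by simp)
    have d2 : DifferentiableAt ℝ f2 x := (hf2.contDiffAt hmem).differentiableAt (by simp)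
    have d3 : DifferentiableAt ℝ f3 x := (hf3.contDiffAt hmem).differentiableAt (by simp)
    have dF : DifferentiableAt ℝ F x := (hF.contDiffAt hmem).differentiableAt (by simp)
    have e2 : DifferentiableAt ℝ (deriv f2) x := (hf2'.contDiffAt hmem).differentiableAt (by simp)
    have e3 : DifferentiableAt ℝ (deriv f3) x := (hf3'.contDiffAt hmem).differentiableAt (by simp)
    have eF : DifferentiableAt ℝ (deriv F) x := (hF'.contDiffAt hmem).differentiableAt (by simp)
    have dP : DifferentiableAt ℝ P x := (e2.add (d1.div_const 4)).mul d1
    have dQ : DifferentiableAt ℝ Q x := (e3.sub (d1.div_const 4)).mul d1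
    have dR : DifferentiableAt ℝ R x := eF.mul d1
    obtain ⟨h1, h2, h3, _⟩ := hsysF x hx
    have hA : deriv P x = -(12 * μ * f1 x * f2 x) := by rw [hPdef]; linarith
    have hB : deriv Q x = -(12 * μ * f1 x * f3 x) := by rw [hQdef]; linarith
    have hC : f1 x * deriv R x = 4 * F x - 12 * μ * f1 x ^ 2 * F x := by
      have h3' : deriv R x = 4 * F x / f1 x - 12 * μ * f1 x * F x := by rw [hRdef]; linarith
      rw [h3', mul_sub, ← mul_div_assoc, mul_div_right_comm, div_self (hf1ne x hx)]
      ring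
    -- the fourth equation holds identically, so its derivative vanishes
    have hKzero : ∀ y ∈ Set.Ioo a b,
        P y - Q y + 48 * μ * (f2 y * f3 y - F y ^ 2) = 0 := by
      intro y hy
      have h4 := (hsysF y hy).2.2.2
      simp only [hPdef, hQdef]
      linarith [h4, show (deriv f2 y + f1 y / 4) * f1 y - (deriv f3 y - f1 y / 4) * f1 y
        = f1 y * (deriv f2 y - deriv f3 y + f1 y / 2) by ring]
    have hKd : HasDerivAt (fun u => P u - Q u + 48 * μ * (f2 u * f3 u - F u ^ 2))
        (deriv P x - deriv Q x + 48 * μ *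
          ((deriv f2 x * f3 x + f2 x * deriv f3 x) - 2 * F x ^ 1 * deriv F x)) x := by
      exact (dP.hasDerivAt.sub dQ.hasDerivAt).add
        (((d2.hasDerivAt.mul d3.hasDerivAt).sub (dF.hasDerivAt.pow 2)).const_mul (48 * μ))
    have hKd0 : deriv (fun u => P u - Q u + 48 * μ * (f2 u * f3 u - F u ^ 2)) x = 0 := by
      have : (fun u => P u - Q u + 48 * μ * (f2 u * f3 u - F u ^ 2)) =ᶠ[nhds x]
          (fun _ => (0 : ℝ)) :=
        Filter.eventuallyEq_of_mem hmem hKzero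
      rw [this.deriv_eq, deriv_const]
    have hD : deriv P x - deriv Q x + 48 * μ *
        ((deriv f2 x * f3 x + f2 x * deriv f3 x) - 2 * F x ^ 1 * deriv F x) = 0 := by
      rw [← hKd.deriv]; exact hKd0
    -- G rewritten via P, Q, R
    have hGfun : G = fun u => 4 * F u ^ 2 - R u ^ 2 + P u * Q u := by
      funext u
      rw [hG u]; simp only [hPdef, hQdef, hRdef]; ring
    rw [hGfun]
    have hGd : HasDerivAt (fun u => 4 * F u ^ 2 - R u ^ 2 + P u * Q u)
        (4 * (2 * F x ^ 1 * deriv F x) - 2 * R x ^ 1 * deriv R x +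
          (deriv P x * Q x + P x * deriv Q x)) x :=
      (((dF.hasDerivAt.pow 2).const_mul 4).sub (dR.hasDerivAt.pow 2)).add
        (dP.hasDerivAt.mul dQ.hasDerivAt)
    have hval : 4 * (2 * F x ^ 1 * deriv F x) - 2 * R x ^ 1 * deriv R x +
        (deriv P x * Q x + P x * deriv Q x) = 0 := by
      have hPx : P x = (deriv f2 x + f1 x / 4) * f1 x := rfl
      have hQx : Q x = (deriv f3 x - f1 x / 4) * f1 x := rfl
      have hRx : R x = deriv F x * f1 x := rfl
      rw [hPx, hQx, hRx]
      linear_combination (-(2 * deriv F x)) * hC - (f1 x ^ 2 / 4) * hD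
        + ((deriv f3 x - f1 x / 4) * f1 x + f1 x ^ 2 / 4) * hA
        + ((deriv f2 x + f1 x / 4) * f1 x - f1 x ^ 2 / 4) * hB
    rw [← hval]
    exact hGd
  have hconst : ∀ x ∈ Set.Ioo a b, ∀ y ∈ Set.Ioo a b, G x = G y := by
    intro x hx y hy
    refine (convex_Ioo a b).is_const_of_fderivWithin_eq_zero
      (fun z hz => ((key z hz).differentiableAt).differentiableWithinAt) ?_ hx hy
    intro z hz
    rw [fderivWithin_of_isOpen hso hz]
    have : HasFDerivAt G ((1 : ℝ →L[ℝ] ℝ).smulRight 0) z := (key z hz).hasFDerivAt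
    rw [this.fderiv]
    ext
    simp
  exact ⟨hconst, fun t0 ht0 h0 x hx => (hconst x hx t0 ht0).trans h0⟩
end

section
/- On the interval (0, π/2), the functions f1(t) = −sin t, f2(t) = (1/8)·(4 − 9·sin²t)·cos t, f3(t) = −(1/8)·sin²t·cos t, F(t) = (3/8)·sin²t·cos t solve system (F) with μ = 1, satisfy the constraint (C) at every point, and satisfy f1 < 0, F > 0 and F'² − (f2' + f1/4)·(f3' − f1/4) > 0 at every point. (These are the coefficient functions of the homogeneous nearly Kähler structure on S⁶ = G₂/SU₃ along a normal geodesic for the SU(2)×SU(2)-action.) -/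
/-!
Every coefficient is a polynomial in `sin t`, or such a polynomial times `cos t`, and
eliminating `cos² t = 1 - sin² t` keeps derivatives in this class. The equations of system (F)
then reduce to polynomial identities in `sin t` and `cos t`; the quantity
`F'² - (f2' + f1/4)(f3' - f1/4)` works out to `(9/16) sin² t cos² t`, which gives both the
constraint (C) and its positivity on `(0, π/2)`.
-/

open Real

theorem hasDerivAt_of_eq_add_mul_sin_sq_mul_cos {f : ℝ → ℝ} {a b : ℝ}
    (hf : ∀ u, f u = (a + b * sin u ^ 2) * cos u) (t : ℝ) :
    HasDerivAt f ((2 * b - a) * sin t - 3 * b * sin t ^ 3) t := by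
  obtain rfl := funext hf
  refine ((((hasDerivAt_sin t).fun_pow 2).const_mul b).const_add a |>.fun_mul
    (hasDerivAt_cos t)).congr_deriv ?_
  push_cast
  linear_combination 2 * b * sin t * sin_sq_add_cos_sq t

theorem hasDerivAt_of_eq_mul_sin_sq_add_mul_sin_pow_four {f : ℝ → ℝ} {a b : ℝ}
    (hf : ∀ u, f u = a * sin u ^ 2 + b * sin u ^ 4) (t : ℝ) :
    HasDerivAt f ((2 * a * sin t + 4 * b * sin t ^ 3) * cos t) t := by
  obtain rfl := funext hf
  refine ((((hasDerivAt_sin t).fun_pow 2).const_mul a).fun_add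
    (((hasDerivAt_sin t).fun_pow 4).const_mul b)).congr_deriv ?_
  push_cast
  ring

/-- Podestà–Spiro: the coefficient functions of the homogeneous nearly Kähler structure
on `S⁶ = G₂/SU₃` along a normal geodesic solve system (F) with `μ = 1`, satisfy the
constraint (C), and satisfy the positivity conditions on `(0, π/2)`. -/
theorem stmt_6
    (μ : ℝ) (hμ : μ = 1)
    (f1 f2 f3 F : ℝ → ℝ)
    (hf1 : ∀ t, f1 t = -Real.sin t)
    (hf2 : ∀ t, f2 t = (1 / 8) * (4 - 9 * Real.sin t ^ 2) * Real.cos t)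
    (hf3 : ∀ t, f3 t = -(1 / 8) * Real.sin t ^ 2 * Real.cos t)
    (hF : ∀ t, F t = (3 / 8) * Real.sin t ^ 2 * Real.cos t) :
    ∀ t ∈ Set.Ioo 0 (Real.pi / 2),
      (deriv (fun u => (deriv f2 u + f1 u / 4) * f1 u) t + 12 * μ * f1 t * f2 t = 0 ∧
       deriv (fun u => (deriv f3 u - f1 u / 4) * f1 u) t + 12 * μ * f1 t * f3 t = 0 ∧
       deriv (fun u => deriv F u * f1 u) t - 4 * F t / f1 t + 12 * μ * f1 t * F t = 0 ∧
       f1 t * (deriv f2 t - deriv f3 t + f1 t / 2) + 48 * μ * (f2 t * f3 t - F t ^ 2) = 0) ∧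
      4 * F t ^ 2 -
        ((deriv F t) ^ 2 - (deriv f2 t + f1 t / 4) * (deriv f3 t - f1 t / 4)) * f1 t ^ 2 = 0 ∧
      f1 t < 0 ∧
      0 < F t ∧
      0 < (deriv F t) ^ 2 - (deriv f2 t + f1 t / 4) * (deriv f3 t - f1 t / 4) := by
  subst hμ
  have hd2 t := (hasDerivAt_of_eq_add_mul_sin_sq_mul_cos (f := f2) (a := 1 / 2) (b := -9 / 8)
    (fun u => by rw [hf2]; ring) t).deriv
  have hd3 t := (hasDerivAt_of_eq_add_mul_sin_sq_mul_cos (f := f3) (a := 0) (b := -1 / 8)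
    (fun u => by rw [hf3]; ring) t).deriv
  have hdF t := (hasDerivAt_of_eq_add_mul_sin_sq_mul_cos (f := F) (a := 0) (b := 3 / 8)
    (fun u => by rw [hF]; ring) t).deriv
  have hg2 t := (hasDerivAt_of_eq_mul_sin_sq_add_mul_sin_pow_four (a := 3) (b := -27 / 8)
    (f := fun u => (deriv f2 u + f1 u / 4) * f1 u) (fun u => by simp only [hd2, hf1]; ring) t).deriv
  have hg3 t := (hasDerivAt_of_eq_mul_sin_sq_add_mul_sin_pow_four (a := 0) (b := -3 / 8)
    (f := fun u => (deriv f3 u - f1 u / 4) * f1 u) (fun u => by simp only [hd3, hf1]; ring) t).deriv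
  have hgF t := (hasDerivAt_of_eq_mul_sin_sq_add_mul_sin_pow_four (a := -3 / 4) (b := 9 / 8)
    (f := fun u => deriv F u * f1 u) (fun u => by simp only [hdF, hf1]; ring) t).deriv
  rintro t ⟨ht0, htπ⟩
  have hs : 0 < sin t := sin_pos_of_pos_of_lt_pi ht0 (by linarith [pi_pos])
  have hc : 0 < cos t := cos_pos_of_mem_Ioo ⟨by linarith, htπ⟩
  have hQ : deriv F t ^ 2 - (deriv f2 t + f1 t / 4) * (deriv f3 t - f1 t / 4)
      = 9 / 16 * (sin t * cos t) ^ 2 := by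
    rw [hdF, hd2, hd3, hf1]
    linear_combination (-9 / 16 * sin t ^ 2) * sin_sq_add_cos_sq t
  refine ⟨⟨?_, ?_, ?_, ?_⟩, ?_, ?_, ?_, ?_⟩
  · rw [hg2, hf1, hf2]; ring
  · rw [hg3, hf1, hf3]; ring
  · rw [hgF, hf1, hF]; field_simp; ring
  · rw [hd2, hd3, hf1, hf2, hf3, hF]
    linear_combination (-3 * sin t ^ 2) * sin_sq_add_cos_sq t
  · rw [hQ, hf1, hF]; ring
  · rw [hf1]; linarith
  · rw [hF]; positivity
  · rw [hQ]; positivity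
end

section
/- On the interval (0, π/2), the functions f1(t) = −sin t·cos t, f2(t) = −(1/16)·(2·sin²t − cos²t)·cos²t, f3(t) = −(1/16)·(2·cos²t − sin²t)·sin²t, F(t) = (3/16)·sin²t·cos²t solve system (F) with μ = 2, satisfy the constraint (C) at every point, and satisfy f1 < 0, F > 0 and F'² − (f2' + f1/4)·(f3' − f1/4) > 0 at every point. (These are, up to sign, the coefficient functions of the homogeneous nearly Kähler structure on ℂP³ = Sp₂/T¹×Sp₁ along a normal geodesic for the SU(2)×SU(2)-action.) -/
/-!
With `s = sin t` and `c = cos t` every function involved is a polynomial in `s` and `c`, and the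
first-order quantities collapse modulo `s² + c² = 1`:
`f₂' + f₁/4 = -(3/4) s c³`, `f₃' - f₁/4 = (3/4) s³ c` and `F' = (3/8) s c (c² - s²)`.
Hence `F'² - (f₂' + f₁/4)(f₃' - f₁/4) = (9/64) s² c² (s² + c²)² = (9/64) (s c)²`, which gives the
constraint and the positivity at once, and each equation of the system becomes a polynomial
identity in `s` and `c` modulo `s² + c² = 1`. On `(0, π/2)` the product `s c` is positive.
-/

open Real

theorem hasDerivAt_sin_pow_mul_cos_pow (m n : ℕ) (t : ℝ) :
    HasDerivAt (fun u => sin u ^ m * cos u ^ n)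
      (m * sin t ^ (m - 1) * cos t ^ (n + 1) - n * sin t ^ (m + 1) * cos t ^ (n - 1)) t :=
  (((hasDerivAt_sin t).fun_pow m).fun_mul ((hasDerivAt_cos t).fun_pow n)).congr_deriv (by ring)

theorem sin_mul_cos_pos {t : ℝ} (ht : t ∈ Set.Ioo 0 (π / 2)) : 0 < sin t * cos t :=
  mul_pos (sin_pos_of_pos_of_lt_pi ht.1 (by linarith [pi_pos, ht.2]))
    (cos_pos_of_mem_Ioo ⟨by linarith [pi_pos, ht.1], ht.2⟩)

namespace PodestaSpiro

def SystemF (μ : ℝ) (f1 f2 f3 F : ℝ → ℝ) (t : ℝ) : Prop :=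
  deriv (fun u => (deriv f2 u + f1 u / 4) * f1 u) t + 12 * μ * f1 t * f2 t = 0 ∧
    deriv (fun u => (deriv f3 u - f1 u / 4) * f1 u) t + 12 * μ * f1 t * f3 t = 0 ∧
    deriv (fun u => deriv F u * f1 u) t - 4 * F t / f1 t + 12 * μ * f1 t * F t = 0 ∧
    f1 t * (deriv f2 t - deriv f3 t + f1 t / 2) + 48 * μ * (f2 t * f3 t - F t ^ 2) = 0

noncomputable def discr (f1 f2 f3 F : ℝ → ℝ) (t : ℝ) : ℝ :=
  deriv F t ^ 2 - (deriv f2 t + f1 t / 4) * (deriv f3 t - f1 t / 4)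

def ConstraintC (f1 f2 f3 F : ℝ → ℝ) (t : ℝ) : Prop :=
  4 * F t ^ 2 - discr f1 f2 f3 F t * f1 t ^ 2 = 0

end PodestaSpiro

namespace NearlyKaehlerCP3

open PodestaSpiro

noncomputable def f₁ (t : ℝ) : ℝ := -(sin t * cos t)

noncomputable def f₂ (t : ℝ) : ℝ := -(1 / 16) * (2 * sin t ^ 2 - cos t ^ 2) * cos t ^ 2

noncomputable def f₃ (t : ℝ) : ℝ := -(1 / 16) * (2 * cos t ^ 2 - sin t ^ 2) * sin t ^ 2

noncomputable def F (t : ℝ) : ℝ := 3 / 16 * sin t ^ 2 * cos t ^ 2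

theorem hasDerivAt_f₂ (t : ℝ) :
    HasDerivAt f₂ (-(sin t * cos t) / 4 * (2 * cos t ^ 2 - sin t ^ 2)) t :=
  (((((hasDerivAt_sin t).fun_pow 2).const_mul 2).fun_sub ((hasDerivAt_cos t).fun_pow 2)).const_mul
    (-(1 / 16))).fun_mul ((hasDerivAt_cos t).fun_pow 2) |>.congr_deriv (by norm_num; ring)

theorem hasDerivAt_f₃ (t : ℝ) :
    HasDerivAt f₃ (-(sin t * cos t) / 4 * (cos t ^ 2 - 2 * sin t ^ 2)) t :=
  (((((hasDerivAt_cos t).fun_pow 2).const_mul 2).fun_sub ((hasDerivAt_sin t).fun_pow 2)).const_mul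
    (-(1 / 16))).fun_mul ((hasDerivAt_sin t).fun_pow 2) |>.congr_deriv (by norm_num; ring)

theorem deriv_F (t : ℝ) : deriv F t = 3 / 8 * sin t * cos t * (cos t ^ 2 - sin t ^ 2) :=
  ((((hasDerivAt_sin t).fun_pow 2).const_mul (3 / 16)).fun_mul ((hasDerivAt_cos t).fun_pow 2)
    |>.congr_deriv (by norm_num; ring)).deriv

theorem deriv_f₂_add_f₁_div_four (t : ℝ) :
    deriv f₂ t + f₁ t / 4 = -(3 / 4) * sin t * cos t ^ 3 := by
  rw [(hasDerivAt_f₂ t).deriv, f₁]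
  linear_combination (sin t * cos t / 4) * sin_sq_add_cos_sq t

theorem deriv_f₃_sub_f₁_div_four (t : ℝ) :
    deriv f₃ t - f₁ t / 4 = 3 / 4 * sin t ^ 3 * cos t := by
  rw [(hasDerivAt_f₃ t).deriv, f₁]
  linear_combination (-(sin t * cos t) / 4) * sin_sq_add_cos_sq t

theorem discr_eq (t : ℝ) : discr f₁ f₂ f₃ F t = 9 / 64 * (sin t * cos t) ^ 2 := by
  rw [discr, deriv_F, deriv_f₂_add_f₁_div_four, deriv_f₃_sub_f₁_div_four]
  linear_combination
    9 / 64 * (sin t * cos t) ^ 2 * (sin t ^ 2 + cos t ^ 2 + 1) * sin_sq_add_cos_sq t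

theorem systemF_f₂_eq (t : ℝ) :
    deriv (fun u => (deriv f₂ u + f₁ u / 4) * f₁ u) t + 12 * 2 * f₁ t * f₂ t = 0 := by
  have h : (fun u => (deriv f₂ u + f₁ u / 4) * f₁ u) = fun u => 3 / 4 * (sin u ^ 2 * cos u ^ 4) :=
    funext fun u => by rw [deriv_f₂_add_f₁_div_four, f₁]; ring
  rw [h, ((hasDerivAt_sin_pow_mul_cos_pow 2 4 t).const_mul _).deriv, f₁, f₂]
  norm_num
  ring

theorem systemF_f₃_eq (t : ℝ) :
    deriv (fun u => (deriv f₃ u - f₁ u / 4) * f₁ u) t + 12 * 2 * f₁ t * f₃ t = 0 := by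
  have h :
      (fun u => (deriv f₃ u - f₁ u / 4) * f₁ u) = fun u => -(3 / 4) * (sin u ^ 4 * cos u ^ 2) :=
    funext fun u => by rw [deriv_f₃_sub_f₁_div_four, f₁]; ring
  rw [h, ((hasDerivAt_sin_pow_mul_cos_pow 4 2 t).const_mul _).deriv, f₁, f₃]
  norm_num
  ring

theorem systemF_F_eq {t : ℝ} (h₁ : f₁ t ≠ 0) :
    deriv (fun u => deriv F u * f₁ u) t - 4 * F t / f₁ t + 12 * 2 * f₁ t * F t = 0 := by
  have h : (fun u => deriv F u * f₁ u) =
      fun u => -(3 / 8) * (sin u ^ 2 * cos u ^ 4) + 3 / 8 * (sin u ^ 4 * cos u ^ 2) :=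
    funext fun u => by rw [deriv_F, f₁]; ring
  have hdiv : 4 * F t / f₁ t = -(3 / 4) * (sin t * cos t) := by
    rw [div_eq_iff h₁, F, f₁]
    ring
  rw [h, (((hasDerivAt_sin_pow_mul_cos_pow 2 4 t).const_mul _).fun_add
    ((hasDerivAt_sin_pow_mul_cos_pow 4 2 t).const_mul _)).deriv, hdiv, f₁, F]
  norm_num
  linear_combination -(3 / 4) * sin t * cos t * (sin t ^ 2 + cos t ^ 2 + 1) * sin_sq_add_cos_sq t

theorem systemF_algebraic_eq (t : ℝ) :
    f₁ t * (deriv f₂ t - deriv f₃ t + f₁ t / 2) + 48 * 2 * (f₂ t * f₃ t - F t ^ 2) = 0 := by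
  have h : deriv f₂ t - deriv f₃ t + f₁ t / 2 =
      (deriv f₂ t + f₁ t / 4) - (deriv f₃ t - f₁ t / 4) := by ring
  rw [h, deriv_f₂_add_f₁_div_four, deriv_f₃_sub_f₁_div_four, f₁, f₂, f₃, F]
  linear_combination -(3 / 4) * (sin t * cos t) ^ 2 * (sin t ^ 2 + cos t ^ 2) * sin_sq_add_cos_sq t

theorem systemF {t : ℝ} (h₁ : f₁ t ≠ 0) : SystemF 2 f₁ f₂ f₃ F t :=
  ⟨systemF_f₂_eq t, systemF_f₃_eq t, systemF_F_eq h₁, systemF_algebraic_eq t⟩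

theorem constraintC (t : ℝ) : ConstraintC f₁ f₂ f₃ F t := by
  rw [ConstraintC, discr_eq, F, f₁]
  ring

theorem f₁_neg {t : ℝ} (ht : t ∈ Set.Ioo 0 (π / 2)) : f₁ t < 0 :=
  neg_lt_zero.mpr (sin_mul_cos_pos ht)

theorem F_pos {t : ℝ} (ht : t ∈ Set.Ioo 0 (π / 2)) : 0 < F t := by
  have := sin_mul_cos_pos ht
  calc 0 < 3 / 16 * (sin t * cos t) ^ 2 := by positivity
    _ = F t := by rw [F]; ring

theorem discr_pos {t : ℝ} (ht : t ∈ Set.Ioo 0 (π / 2)) : 0 < discr f₁ f₂ f₃ F t := by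
  have := sin_mul_cos_pos ht
  rw [discr_eq]
  positivity

end NearlyKaehlerCP3

/-- Podestà–Spiro: the coefficient functions (up to sign) of the homogeneous nearly
Kähler structure on `ℂP³ = Sp₂/T¹×Sp₁` along a normal geodesic solve system (F) with
`μ = 2`, satisfy the constraint (C), and satisfy the positivity conditions on
`(0, π/2)`. -/
theorem stmt_7
    (μ : ℝ) (hμ : μ = 2)
    (f1 f2 f3 F : ℝ → ℝ)
    (hf1 : ∀ t, f1 t = -(Real.sin t * Real.cos t))
    (hf2 : ∀ t, f2 t = -(1 / 16) * (2 * Real.sin t ^ 2 - Real.cos t ^ 2) * Real.cos t ^ 2)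
    (hf3 : ∀ t, f3 t = -(1 / 16) * (2 * Real.cos t ^ 2 - Real.sin t ^ 2) * Real.sin t ^ 2)
    (hF : ∀ t, F t = (3 / 16) * Real.sin t ^ 2 * Real.cos t ^ 2) :
    ∀ t ∈ Set.Ioo 0 (Real.pi / 2),
      (deriv (fun u => (deriv f2 u + f1 u / 4) * f1 u) t + 12 * μ * f1 t * f2 t = 0 ∧
       deriv (fun u => (deriv f3 u - f1 u / 4) * f1 u) t + 12 * μ * f1 t * f3 t = 0 ∧
       deriv (fun u => deriv F u * f1 u) t - 4 * F t / f1 t + 12 * μ * f1 t * F t = 0 ∧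
       f1 t * (deriv f2 t - deriv f3 t + f1 t / 2) + 48 * μ * (f2 t * f3 t - F t ^ 2) = 0) ∧
      4 * F t ^ 2 -
        ((deriv F t) ^ 2 - (deriv f2 t + f1 t / 4) * (deriv f3 t - f1 t / 4)) * f1 t ^ 2 = 0 ∧
      f1 t < 0 ∧
      0 < F t ∧
      0 < (deriv F t) ^ 2 - (deriv f2 t + f1 t / 4) * (deriv f3 t - f1 t / 4) := by
  subst hμ
  obtain rfl : f1 = NearlyKaehlerCP3.f₁ := funext hf1
  obtain rfl : f2 = NearlyKaehlerCP3.f₂ := funext hf2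
  obtain rfl : f3 = NearlyKaehlerCP3.f₃ := funext hf3
  obtain rfl : F = NearlyKaehlerCP3.F := funext hF
  intro t ht
  have hf₁ := NearlyKaehlerCP3.f₁_neg ht
  exact ⟨NearlyKaehlerCP3.systemF hf₁.ne, NearlyKaehlerCP3.constraintC t, hf₁,
    NearlyKaehlerCP3.F_pos ht, NearlyKaehlerCP3.discr_pos ht⟩
end

section
/- On the interval (0, π/(2·√6)), the functions f1(t) = −√2/3 (constant), f2(t) = (√3/36)·sin(2·√6·t), f3(t) = 0, F(t) = (√3/36)·sin(√6·t) solve system (F) with μ = 2, satisfy the constraint (C) at every point, and satisfy f1 < 0, F > 0 and F'² − (f2' + f1/4)·(f3' − f1/4) > 0 at every point. (These are the coefficient functions of the homogeneous nearly Kähler structure on S³×S³ = SU₂³/SU₂ along a normal geodesic for the SU(2)×SU(2)-action.) -/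
/-!
Since `f₁` is constant and `f₃ = 0`, the system reduces to linear equations in `f₂` and `F`,
which are sine waves of frequencies `2√6` and `√6`: the wave equations `f₂'' = -24 f₂` and
`F'' = -6 F` are the first and third equations of (F), the latter because `f₁² = 2/9`. The fourth
equation and the constraint follow from `cos 2θ = 1 - 2 sin² θ`, which also shows that the
discriminant of (C) equals `sin² (√6 t) / 24`, positive because `√6 t ∈ (0, π/2)`.
-/

open Real

theorem hasDerivAt_const_mul_sin_mul (c k t : ℝ) :
    HasDerivAt (fun u => c * sin (k * u)) (c * k * cos (k * t)) t := by
  simpa [mul_comm, mul_left_comm, mul_assoc] using ((hasDerivAt_id t).const_mul k).sin.const_mul c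

theorem hasDerivAt_const_mul_cos_mul (c k t : ℝ) :
    HasDerivAt (fun u => c * cos (k * u)) (-(c * k * sin (k * t))) t := by
  simpa [mul_comm, mul_left_comm, mul_assoc] using ((hasDerivAt_id t).const_mul k).cos.const_mul c

def SolvesSystemFAt (μ : ℝ) (f1 f2 f3 F : ℝ → ℝ) (t : ℝ) : Prop :=
  deriv (fun u => (deriv f2 u + f1 u / 4) * f1 u) t + 12 * μ * f1 t * f2 t = 0 ∧
  deriv (fun u => (deriv f3 u - f1 u / 4) * f1 u) t + 12 * μ * f1 t * f3 t = 0 ∧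
  deriv (fun u => deriv F u * f1 u) t - 4 * F t / f1 t + 12 * μ * f1 t * F t = 0 ∧
  f1 t * (deriv f2 t - deriv f3 t + f1 t / 2) + 48 * μ * (f2 t * f3 t - F t ^ 2) = 0

noncomputable def constraintDiscr (f1 f2 f3 F : ℝ → ℝ) (t : ℝ) : ℝ :=
  deriv F t ^ 2 - (deriv f2 t + f1 t / 4) * (deriv f3 t - f1 t / 4)

def SatisfiesConstraintCAt (f1 f2 f3 F : ℝ → ℝ) (t : ℝ) : Prop :=
  4 * F t ^ 2 - constraintDiscr f1 f2 f3 F t * f1 t ^ 2 = 0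

namespace HomogeneousNK

noncomputable def f₁ : ℝ → ℝ := fun _ => -(√2 / 3)

noncomputable def f₂ (t : ℝ) : ℝ := √3 / 36 * sin (2 * √6 * t)

noncomputable def F (t : ℝ) : ℝ := √3 / 36 * sin (√6 * t)

theorem sqrt_six : √6 = √2 * √3 := by
  rw [← sqrt_mul (by norm_num)]; norm_num

theorem sq_sqrt_two : √2 ^ 2 = 2 := sq_sqrt (by norm_num)

theorem sq_sqrt_three : √3 ^ 2 = 3 := sq_sqrt (by norm_num)

theorem f₁_neg (t : ℝ) : f₁ t < 0 := neg_lt_zero.2 (by positivity)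

theorem f₁_ne_zero (t : ℝ) : f₁ t ≠ 0 := (f₁_neg t).ne

theorem hasDerivAt_f₁ (t : ℝ) : HasDerivAt f₁ 0 t := hasDerivAt_const t _

theorem f₁_sq (t : ℝ) : f₁ t ^ 2 = 2 / 9 := by
  simp only [f₁]; linear_combination sq_sqrt_two / 9

theorem hasDerivAt_f₂ (t : ℝ) : HasDerivAt f₂ (√2 / 6 * cos (2 * √6 * t)) t := by
  refine (hasDerivAt_const_mul_sin_mul (√3 / 36) (2 * √6) t).congr_deriv ?_
  rw [sqrt_six]
  linear_combination √2 * cos (2 * (√2 * √3) * t) / 18 * sq_sqrt_three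

theorem hasDerivAt_F (t : ℝ) : HasDerivAt F (√2 / 12 * cos (√6 * t)) t := by
  refine (hasDerivAt_const_mul_sin_mul (√3 / 36) √6 t).congr_deriv ?_
  rw [sqrt_six]
  linear_combination √2 * cos (√2 * √3 * t) / 36 * sq_sqrt_three

theorem hasDerivAt_deriv_f₂ (t : ℝ) : HasDerivAt (deriv f₂) (-24 * f₂ t) t := by
  rw [funext fun u => (hasDerivAt_f₂ u).deriv]
  refine (hasDerivAt_const_mul_cos_mul _ _ t).congr_deriv ?_
  rw [f₂, sqrt_six]
  linear_combination -√3 * sin (2 * (√2 * √3) * t) / 3 * sq_sqrt_two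

theorem hasDerivAt_deriv_F (t : ℝ) : HasDerivAt (deriv F) (-6 * F t) t := by
  rw [funext fun u => (hasDerivAt_F u).deriv]
  refine (hasDerivAt_const_mul_cos_mul _ _ t).congr_deriv ?_
  rw [F, sqrt_six]
  linear_combination -√3 * sin (√2 * √3 * t) / 12 * sq_sqrt_two

theorem cos_two_mul_sqrt_six_mul (t : ℝ) : cos (2 * √6 * t) = 1 - 2 * sin (√6 * t) ^ 2 := by
  rw [mul_assoc, cos_two_mul, cos_sq']
  ring

theorem sin_sqrt_six_mul_pos {t : ℝ} (ht : t ∈ Set.Ioo 0 (π / (2 * √6))) :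
    0 < sin (√6 * t) := by
  have h6 : 0 < √6 := by positivity
  apply sin_pos_of_pos_of_lt_pi (by nlinarith [ht.1])
  have := (lt_div_iff₀ (by positivity)).1 ht.2
  linarith [pi_pos]

theorem solvesSystemFAt (t : ℝ) : SolvesSystemFAt 2 f₁ f₂ 0 F t := by
  have h₁ : deriv (fun u => (deriv f₂ u + f₁ u / 4) * f₁ u) t = -24 * f₂ t * f₁ t := by
    refine (((hasDerivAt_deriv_f₂ t).add ((hasDerivAt_f₁ t).div_const 4)).mul
      (hasDerivAt_f₁ t)).deriv.trans ?_
    ring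
  have h₃ : deriv (fun u => deriv F u * f₁ u) t = -6 * F t * f₁ t := by
    refine ((hasDerivAt_deriv_F t).mul (hasDerivAt_f₁ t)).deriv.trans ?_
    ring
  refine ⟨by rw [h₁]; ring, by simp [f₁], ?_, ?_⟩
  · rw [h₃]
    field_simp [f₁_ne_zero t]
    linear_combination 18 * F t * f₁_sq t
  · simp only [(hasDerivAt_f₂ t).deriv, deriv_zero, Pi.zero_apply, cos_two_mul_sqrt_six_mul,
      f₁, F]
    linear_combination
      sin (√6 * t) ^ 2 / 9 * sq_sqrt_two - 2 * sin (√6 * t) ^ 2 / 27 * sq_sqrt_three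

theorem constraintDiscr_eq (t : ℝ) :
    constraintDiscr f₁ f₂ 0 F t = sin (√6 * t) ^ 2 / 24 := by
  simp only [constraintDiscr, (hasDerivAt_F t).deriv, (hasDerivAt_f₂ t).deriv, deriv_zero,
    Pi.zero_apply, cos_two_mul_sqrt_six_mul, f₁]
  linear_combination
    √2 ^ 2 / 144 * cos_sq_add_sin_sq (√6 * t) + sin (√6 * t) ^ 2 / 48 * sq_sqrt_two

theorem satisfiesConstraintCAt (t : ℝ) : SatisfiesConstraintCAt f₁ f₂ 0 F t := by
  rw [SatisfiesConstraintCAt, constraintDiscr_eq, f₁_sq, F]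
  linear_combination sin (√6 * t) ^ 2 / 324 * sq_sqrt_three

theorem F_pos {t : ℝ} (ht : t ∈ Set.Ioo 0 (π / (2 * √6))) : 0 < F t :=
  mul_pos (by positivity) (sin_sqrt_six_mul_pos ht)

theorem constraintDiscr_pos {t : ℝ} (ht : t ∈ Set.Ioo 0 (π / (2 * √6))) :
    0 < constraintDiscr f₁ f₂ 0 F t := by
  rw [constraintDiscr_eq]
  have := sin_sqrt_six_mul_pos ht
  positivity

end HomogeneousNK

/-- Podestà–Spiro: the coefficient functions of the homogeneous nearly Kähler structure
on `S³×S³ = SU₂³/SU₂` along a normal geodesic solve system (F) with `μ = 2`, satisfy the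
constraint (C), and satisfy the positivity conditions on `(0, π/(2√6))`. -/
theorem stmt_8
    (μ : ℝ) (hμ : μ = 2)
    (f1 f2 f3 F : ℝ → ℝ)
    (hf1 : ∀ t, f1 t = -(Real.sqrt 2 / 3))
    (hf2 : ∀ t, f2 t = (Real.sqrt 3 / 36) * Real.sin (2 * Real.sqrt 6 * t))
    (hf3 : ∀ t, f3 t = 0)
    (hF : ∀ t, F t = (Real.sqrt 3 / 36) * Real.sin (Real.sqrt 6 * t)) :
    ∀ t ∈ Set.Ioo 0 (Real.pi / (2 * Real.sqrt 6)),
      (deriv (fun u => (deriv f2 u + f1 u / 4) * f1 u) t + 12 * μ * f1 t * f2 t = 0 ∧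
       deriv (fun u => (deriv f3 u - f1 u / 4) * f1 u) t + 12 * μ * f1 t * f3 t = 0 ∧
       deriv (fun u => deriv F u * f1 u) t - 4 * F t / f1 t + 12 * μ * f1 t * F t = 0 ∧
       f1 t * (deriv f2 t - deriv f3 t + f1 t / 2) + 48 * μ * (f2 t * f3 t - F t ^ 2) = 0) ∧
      4 * F t ^ 2 -
        ((deriv F t) ^ 2 - (deriv f2 t + f1 t / 4) * (deriv f3 t - f1 t / 4)) * f1 t ^ 2 = 0 ∧
      f1 t < 0 ∧
      0 < F t ∧
      0 < (deriv F t) ^ 2 - (deriv f2 t + f1 t / 4) * (deriv f3 t - f1 t / 4) := by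
  subst hμ
  obtain rfl : f1 = HomogeneousNK.f₁ := funext hf1
  obtain rfl : f2 = HomogeneousNK.f₂ := funext hf2
  obtain rfl : f3 = 0 := funext hf3
  obtain rfl : F = HomogeneousNK.F := funext hF
  exact fun t ht => ⟨HomogeneousNK.solvesSystemFAt t, HomogeneousNK.satisfiesConstraintCAt t,
    HomogeneousNK.f₁_neg t, HomogeneousNK.F_pos ht, HomogeneousNK.constraintDiscr_pos ht⟩
end

section
/- On the interval (0, π/(2·√2)), the functions f̃1(t) = −(1/√2)·cos(√2·t), f̃2(t) = −(1/16)·(4 − 9·cos²(√2·t))·sin(√2·t), f̃3(t) = (1/16)·cos²(√2·t)·sin(√2·t), F̃(t) = (3/16)·cos²(√2·t)·sin(√2·t) solve system (F) with μ = 2 and satisfy the constraint (C) at every point; moreover f̃1(0)²/2 = 1/4. (These are the coefficient functions of the round-sphere nearly Kähler structure on S⁶, rescaled so that μ = 2 and reparametrized by a unit-speed normal geodesic emanating from the singular SU(2)×SU(2)-orbit S³.) -/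
/-! Write `c = cos (√2 t)` and `s = sin (√2 t)`. The three fluxes `(f2' + f1/4)·f1`,
`(f3' - f1/4)·f1` and `F'·f1` are polynomials in `c` alone, so the three differential equations
only require differentiating polynomials in `c`. The algebraic equation and the constraint are
polynomial in the fluxes and in `f2, f3, F`, so they reduce to `s² + c² = 1`, with no `√2` left. -/

open Real

theorem hasDerivAt_cos_const_mul_pow (a : ℝ) (n : ℕ) (t : ℝ) :
    HasDerivAt (fun u => cos (a * u) ^ n) (-(n * a * cos (a * t) ^ (n - 1) * sin (a * t))) t := by
  refine (((hasDerivAt_id' t).const_mul a).cos.fun_pow n).congr_deriv ?_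
  ring

theorem hasDerivAt_cos_const_mul_sq_mul_sin (a t : ℝ) :
    HasDerivAt (fun u => cos (a * u) ^ 2 * sin (a * u))
      (a * (3 * cos (a * t) ^ 3 - 2 * cos (a * t))) t := by
  refine ((hasDerivAt_cos_const_mul_pow a 2 t).fun_mul
    ((hasDerivAt_id' t).const_mul a).sin).congr_deriv ?_
  push_cast
  linear_combination (-2 * a * cos (a * t)) * sin_sq_add_cos_sq (a * t)

theorem deriv_const_mul_cos_const_mul_sq_mul_sin (k a : ℝ) :
    deriv (fun u => k * cos (a * u) ^ 2 * sin (a * u)) =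
      fun t => k * (a * (3 * cos (a * t) ^ 3 - 2 * cos (a * t))) := by
  funext t
  simp only [mul_assoc]
  exact ((hasDerivAt_cos_const_mul_sq_mul_sin a t).const_mul k).deriv

namespace RoundS6

noncomputable def f1 (t : ℝ) : ℝ := -(1 / √2) * cos (√2 * t)

noncomputable def f2 (t : ℝ) : ℝ := -(1 / 16) * (4 - 9 * cos (√2 * t) ^ 2) * sin (√2 * t)

noncomputable def f3 (t : ℝ) : ℝ := (1 / 16) * cos (√2 * t) ^ 2 * sin (√2 * t)

noncomputable def F (t : ℝ) : ℝ := (3 / 16) * cos (√2 * t) ^ 2 * sin (√2 * t)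

theorem f1_eq (t : ℝ) : f1 t = -(√2 / 2) * cos (√2 * t) := by
  rw [f1, ← sqrt_div_self']

theorem deriv_f2 : deriv f2 = fun t => √2 * (27 * cos (√2 * t) ^ 3 - 22 * cos (√2 * t)) / 16 := by
  have hf2 : f2 = fun u => 9 / 16 * (cos (√2 * u) ^ 2 * sin (√2 * u)) - 1 / 4 * sin (√2 * u) := by
    funext u
    rw [f2]
    ring
  funext t
  rw [hf2]
  refine (((hasDerivAt_cos_const_mul_sq_mul_sin √2 t).const_mul (9 / 16)).fun_sub
    (((hasDerivAt_id' t).const_mul √2).sin.const_mul (1 / 4))).deriv.trans ?_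
  ring

theorem deriv_f3 : deriv f3 = fun t => 1 / 16 * (√2 * (3 * cos (√2 * t) ^ 3 - 2 * cos (√2 * t))) :=
  deriv_const_mul_cos_const_mul_sq_mul_sin _ _

theorem deriv_F : deriv F = fun t => 3 / 16 * (√2 * (3 * cos (√2 * t) ^ 3 - 2 * cos (√2 * t))) :=
  deriv_const_mul_cos_const_mul_sq_mul_sin _ _

theorem sq_sqrt_two : √2 ^ 2 = 2 := sq_sqrt zero_le_two

theorem cos_sqrt_two_mul_pos {t : ℝ} (ht : t ∈ Set.Ioo 0 (π / (2 * √2))) : 0 < cos (√2 * t) := by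
  have hsqrt : 0 < √2 := by positivity
  apply cos_pos_of_mem_Ioo
  constructor
  · nlinarith [pi_pos, mul_pos hsqrt ht.1]
  · have := (lt_div_iff₀ (by positivity)).1 ht.2
    linarith

theorem deriv_f2_add_f1_div_four_mul_f1 (t : ℝ) :
    (deriv f2 t + f1 t / 4) * f1 t = (24 * cos (√2 * t) ^ 2 - 27 * cos (√2 * t) ^ 4) / 16 := by
  rw [deriv_f2, f1_eq]
  linear_combination (24 * cos (√2 * t) ^ 2 - 27 * cos (√2 * t) ^ 4) / 32 * sq_sqrt_two

theorem deriv_f3_sub_f1_div_four_mul_f1 (t : ℝ) :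
    (deriv f3 t - f1 t / 4) * f1 t = -(3 / 16) * cos (√2 * t) ^ 4 := by
  rw [deriv_f3, f1_eq]
  linear_combination -(3 / 32) * cos (√2 * t) ^ 4 * sq_sqrt_two

theorem deriv_F_mul_f1 (t : ℝ) :
    deriv F t * f1 t = (6 * cos (√2 * t) ^ 2 - 9 * cos (√2 * t) ^ 4) / 16 := by
  rw [deriv_F, f1_eq]
  linear_combination (6 * cos (√2 * t) ^ 2 - 9 * cos (√2 * t) ^ 4) / 32 * sq_sqrt_two

theorem four_mul_F_div_f1 {t : ℝ} (ht : cos (√2 * t) ≠ 0) :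
    4 * F t / f1 t = -(3 * √2 / 4) * cos (√2 * t) * sin (√2 * t) := by
  rw [div_eq_iff (by simp [f1_eq, ht]), F, f1_eq]
  linear_combination -(3 / 8) * cos (√2 * t) ^ 2 * sin (√2 * t) * sq_sqrt_two

theorem ode_f2 (t : ℝ) :
    deriv (fun u => (deriv f2 u + f1 u / 4) * f1 u) t + 12 * 2 * f1 t * f2 t = 0 := by
  have hderiv := (((hasDerivAt_cos_const_mul_pow √2 2 t).const_mul 24).fun_sub
    ((hasDerivAt_cos_const_mul_pow √2 4 t).const_mul 27)).div_const 16
  simp only [deriv_f2_add_f1_div_four_mul_f1]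
  rw [hderiv.deriv, f1_eq, f2]
  ring

theorem ode_f3 (t : ℝ) :
    deriv (fun u => (deriv f3 u - f1 u / 4) * f1 u) t + 12 * 2 * f1 t * f3 t = 0 := by
  have hderiv := (hasDerivAt_cos_const_mul_pow √2 4 t).const_mul (-(3 / 16))
  simp only [deriv_f3_sub_f1_div_four_mul_f1]
  rw [hderiv.deriv, f1_eq, f3]
  ring

theorem ode_F {t : ℝ} (ht : cos (√2 * t) ≠ 0) :
    deriv (fun u => deriv F u * f1 u) t - 4 * F t / f1 t + 12 * 2 * f1 t * F t = 0 := by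
  have hderiv := (((hasDerivAt_cos_const_mul_pow √2 2 t).const_mul 6).fun_sub
    ((hasDerivAt_cos_const_mul_pow √2 4 t).const_mul 9)).div_const 16
  simp only [deriv_F_mul_f1]
  rw [hderiv.deriv, four_mul_F_div_f1 ht, f1_eq, F]
  ring

theorem algebraic_eq (t : ℝ) :
    f1 t * (deriv f2 t - deriv f3 t + f1 t / 2) + 48 * 2 * (f2 t * f3 t - F t ^ 2) = 0 := by
  calc _ = (deriv f2 t + f1 t / 4) * f1 t - (deriv f3 t - f1 t / 4) * f1 t
        + 96 * (f2 t * f3 t - F t ^ 2) := by ring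
    _ = 0 := by
      rw [deriv_f2_add_f1_div_four_mul_f1, deriv_f3_sub_f1_div_four_mul_f1, f2, f3, F]
      linear_combination -(3 / 2) * cos (√2 * t) ^ 2 * sin_sq_add_cos_sq (√2 * t)

theorem constraint_eq (t : ℝ) :
    4 * F t ^ 2 - (deriv F t ^ 2 - (deriv f2 t + f1 t / 4) * (deriv f3 t - f1 t / 4)) * f1 t ^ 2
      = 0 := by
  calc _ = 4 * F t ^ 2 - ((deriv F t * f1 t) ^ 2
        - (deriv f2 t + f1 t / 4) * f1 t * ((deriv f3 t - f1 t / 4) * f1 t)) := by ring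
    _ = 0 := by
      rw [deriv_F_mul_f1, deriv_f2_add_f1_div_four_mul_f1, deriv_f3_sub_f1_div_four_mul_f1, F]
      linear_combination 9 / 64 * cos (√2 * t) ^ 4 * sin_sq_add_cos_sq (√2 * t)

theorem f1_zero_sq_div_two : f1 0 ^ 2 / 2 = 1 / 4 := by
  rw [f1_eq, mul_zero, cos_zero, mul_one]
  linear_combination sq_sqrt_two / 8

end RoundS6

open RoundS6 in
/-- Podestà–Spiro: the rescaled and reparametrized coefficient functions of the round
nearly Kähler `S⁶` (normalized so that `μ = 2`, with a unit-speed normal geodesic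
emanating from the singular orbit `S³`) solve system (F) with `μ = 2` and satisfy the
constraint (C) on `(0, π/(2√2))`; moreover `f̃1(0)²/2 = 1/4`. -/
theorem stmt_9
    (μ : ℝ) (hμ : μ = 2)
    (f1 f2 f3 F : ℝ → ℝ)
    (hf1 : ∀ t, f1 t = -(1 / Real.sqrt 2) * Real.cos (Real.sqrt 2 * t))
    (hf2 : ∀ t, f2 t =
      -(1 / 16) * (4 - 9 * Real.cos (Real.sqrt 2 * t) ^ 2) * Real.sin (Real.sqrt 2 * t))
    (hf3 : ∀ t, f3 t =
      (1 / 16) * Real.cos (Real.sqrt 2 * t) ^ 2 * Real.sin (Real.sqrt 2 * t))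
    (hF : ∀ t, F t =
      (3 / 16) * Real.cos (Real.sqrt 2 * t) ^ 2 * Real.sin (Real.sqrt 2 * t)) :
    (∀ t ∈ Set.Ioo 0 (Real.pi / (2 * Real.sqrt 2)),
      (deriv (fun u => (deriv f2 u + f1 u / 4) * f1 u) t + 12 * μ * f1 t * f2 t = 0 ∧
       deriv (fun u => (deriv f3 u - f1 u / 4) * f1 u) t + 12 * μ * f1 t * f3 t = 0 ∧
       deriv (fun u => deriv F u * f1 u) t - 4 * F t / f1 t + 12 * μ * f1 t * F t = 0 ∧
       f1 t * (deriv f2 t - deriv f3 t + f1 t / 2) + 48 * μ * (f2 t * f3 t - F t ^ 2) = 0) ∧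
      4 * F t ^ 2 -
        ((deriv F t) ^ 2 - (deriv f2 t + f1 t / 4) * (deriv f3 t - f1 t / 4)) * f1 t ^ 2 = 0) ∧
    f1 0 ^ 2 / 2 = 1 / 4 := by
  obtain rfl : f1 = RoundS6.f1 := funext hf1
  obtain rfl : f2 = RoundS6.f2 := funext hf2
  obtain rfl : f3 = RoundS6.f3 := funext hf3
  obtain rfl : F = RoundS6.F := funext hF
  subst hμ
  refine ⟨fun t ht => ⟨⟨ode_f2 t, ode_f3 t, ode_F (cos_sqrt_two_mul_pos ht).ne', algebraic_eq t⟩,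
    constraint_eq t⟩, f1_zero_sq_div_two⟩
end

section
/- Let μ = 2 and define I = (I¹,I²,I³,I⁴) : ℝ⁷ → ℝ⁴ by I¹(a2,a3,a4,b1,b2,b3,b4) = 12μ·(a2² − a3² − a4²) + b1 + b3, I² = 4·a4² + b2² − b3² − b4² − b1² − 2·b3·b1, I³ = a2·b2 − a3·b3 − a4·b4 − a3·b1, I⁴ = (9μ/2)·b1·(a2² − a3² − a4²) + a4². Then the (Fréchet) derivative of I at the point x₀ = (1/36)·(√3, √3, √6, 4, 0, 0, −2·√2) is a surjective linear map ℝ⁷ → ℝ⁴; consequently the zero set I⁻¹(0) is a 3-dimensional smooth submanifold of ℝ⁷ in a neighborhood of x₀. -/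
/-!
The four first integrals are polynomial, so their derivative at `x₀` is read off coordinatewise
by the product rule. At `x₀` one has `a2² - a3² - a4² = -1/216` and `b2 = b3 = 0`, so restricted to
the `b`-directions the derivative is triangular: the fourth component fixes the `b1`-component of
a preimage, then the first fixes `b3`, the second `b4` and the third `b2`. Hence every `c ∈ ℝ⁴` has
an explicit preimage as soon as `μ ≠ 0`, and rank–nullity gives the `3`-dimensional kernel.
-/

noncomputable section

local notation "ℝ⁷" => ℝ × ℝ × ℝ × ℝ × ℝ × ℝ × ℝ
local notation "ℝ⁴" => ℝ × ℝ × ℝ × ℝ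

theorem LinearMap.finrank_ker_add_finrank_of_surjective {K V W : Type*} [DivisionRing K]
    [AddCommGroup V] [Module K V] [AddCommGroup W] [Module K W] [FiniteDimensional K V]
    {f : V →ₗ[K] W} (hf : Function.Surjective f) :
    Module.finrank K (LinearMap.ker f) + Module.finrank K W = Module.finrank K V := by
  rw [← f.finrank_range_add_finrank_ker, LinearMap.range_eq_top.2 hf, finrank_top, add_comm]

def firstIntegrals (μ : ℝ) (x : ℝ⁷) : ℝ⁴ :=
  let (a2, a3, a4, b1, b2, b3, b4) := x
  (12 * μ * (a2 ^ 2 - a3 ^ 2 - a4 ^ 2) + b1 + b3,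
   4 * a4 ^ 2 + b2 ^ 2 - b3 ^ 2 - b4 ^ 2 - b1 ^ 2 - 2 * b3 * b1,
   a2 * b2 - a3 * b3 - a4 * b4 - a3 * b1,
   (9 * μ / 2) * b1 * (a2 ^ 2 - a3 ^ 2 - a4 ^ 2) + a4 ^ 2)

theorem fderiv_firstIntegrals_apply (μ : ℝ) (x v : ℝ⁷) :
    fderiv ℝ (firstIntegrals μ) x v =
      let (a2, a3, a4, b1, b2, b3, b4) := x
      let (u2, u3, u4, v1, v2, v3, v4) := v
      let s := a2 ^ 2 - a3 ^ 2 - a4 ^ 2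
      let ds := 2 * (a2 * u2 - a3 * u3 - a4 * u4)
      (12 * μ * ds + v1 + v3,
       8 * a4 * u4 + 2 * b2 * v2 - 2 * b3 * v3 - 2 * b4 * v4 - 2 * b1 * v1
         - 2 * (b3 * v1 + v3 * b1),
       u2 * b2 + a2 * v2 - u3 * b3 - a3 * v3 - u4 * b4 - a4 * v4 - u3 * b1 - a3 * v1,
       (9 * μ / 2) * (v1 * s + b1 * ds) + 2 * a4 * u4) := by
  have hid : HasFDerivAt (fun x : ℝ⁷ ↦ x) _ x := hasFDerivAt_id (𝕜 := ℝ) x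
  have da2 := hid.fst
  have da3 := hid.snd.fst
  have da4 := hid.snd.snd.fst
  have db1 := hid.snd.snd.snd.fst
  have db2 := hid.snd.snd.snd.snd.fst
  have db3 := hid.snd.snd.snd.snd.snd.fst
  have db4 := hid.snd.snd.snd.snd.snd.snd
  have ds := ((da2.pow 2).sub (da3.pow 2)).sub (da4.pow 2)
  have dI1 := ((ds.const_mul (12 * μ)).add db1).add db3
  have dI2 := (((((da4.pow 2).const_mul 4).add (db2.pow 2)).sub (db3.pow 2)).sub (db4.pow 2)).sub
    (db1.pow 2) |>.sub ((db3.const_mul 2).mul db1)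
  have dI3 := (((da2.mul db2).sub (da3.mul db3)).sub (da4.mul db4)).sub (da3.mul db1)
  have dI4 := ((db1.const_mul (9 * μ / 2)).mul ds).add (da4.pow 2)
  have h : HasFDerivAt (firstIntegrals μ) _ x := dI1.prodMk (dI2.prodMk (dI3.prodMk dI4))
  rw [h.fderiv]
  obtain ⟨a2, a3, a4, b1, b2, b3, b4⟩ := x
  obtain ⟨u2, u3, u4, v1, v2, v3, v4⟩ := v
  refine Prod.ext ?_ (Prod.ext ?_ (Prod.ext ?_ ?_)) <;>
    simp only [ContinuousLinearMap.prod_apply, add_apply, sub_apply, smul_apply,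
      ContinuousLinearMap.comp_apply,
      ContinuousLinearMap.coe_fst', ContinuousLinearMap.coe_snd', ContinuousLinearMap.id_apply,
      Pi.sub_apply, smul_eq_mul, nsmul_eq_mul] <;> ring

def homogeneousInitialData : ℝ⁷ :=
  (√3 / 36, √3 / 36, √6 / 36, 4 / 36, 0, 0, -(2 * √2) / 36)

theorem surjective_fderiv_firstIntegrals {μ : ℝ} (hμ : μ ≠ 0) :
    Function.Surjective (fderiv ℝ (firstIntegrals μ) homogeneousInitialData) := by
  rintro ⟨c1, c2, c3, c4⟩
  refine ⟨(0, 0, 0, -48 * c4 / μ, 3 * c1 + 9 * c2 + 12 * √3 * c3, c1 + 48 * c4 / μ,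
    (2 * c1 + 9 * c2) * √2 / 2), ?_⟩
  have sq2 : √2 ^ 2 = 2 := Real.sq_sqrt zero_le_two
  have sq3 : √3 ^ 2 = 3 := Real.sq_sqrt zero_le_three
  have sq6 : √6 ^ 2 = 6 := Real.sq_sqrt (by norm_num)
  have sqrt6 : √6 = √2 * √3 := by rw [← Real.sqrt_mul zero_le_two]; norm_num
  rw [fderiv_firstIntegrals_apply]
  simp only [homogeneousInitialData, Prod.mk.injEq]
  refine ⟨by ring, ?_, ?_, ?_⟩
  · linear_combination (2 * c1 + 9 * c2) / 18 * sq2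
  · rw [sqrt6]
    linear_combination -(√3 * (2 * c1 + 9 * c2)) / 72 * sq2 + c3 / 3 * sq3
  · field_simp
    linear_combination 432 * c4 * sq6

end

/-- Podestà–Spiro: the derivative of the first-integral map `I` (with `μ = 2`) at the
initial data `x₀` of the homogeneous nearly Kähler structure on `S³×S³` is a surjective
linear map `ℝ⁷ → ℝ⁴`; consequently the zero set `I⁻¹(0)` is, near `x₀`, a smooth
submanifold of dimension `3` (the kernel of the derivative, i.e. the tangent space,
is 3-dimensional). -/
theorem stmt_11
    (μ : ℝ) (hμ : μ = 2)
    (I : ℝ × ℝ × ℝ × ℝ × ℝ × ℝ × ℝ → ℝ × ℝ × ℝ × ℝ)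
    (hI : ∀ a2 a3 a4 b1 b2 b3 b4 : ℝ,
      I (a2, a3, a4, b1, b2, b3, b4) =
        (12 * μ * (a2 ^ 2 - a3 ^ 2 - a4 ^ 2) + b1 + b3,
         4 * a4 ^ 2 + b2 ^ 2 - b3 ^ 2 - b4 ^ 2 - b1 ^ 2 - 2 * b3 * b1,
         a2 * b2 - a3 * b3 - a4 * b4 - a3 * b1,
         (9 * μ / 2) * b1 * (a2 ^ 2 - a3 ^ 2 - a4 ^ 2) + a4 ^ 2))
    (x₀ : ℝ × ℝ × ℝ × ℝ × ℝ × ℝ × ℝ)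
    (hx₀ : x₀ = (Real.sqrt 3 / 36, Real.sqrt 3 / 36, Real.sqrt 6 / 36,
      4 / 36, 0, 0, -(2 * Real.sqrt 2) / 36)) :
    Function.Surjective (fderiv ℝ I x₀) ∧
    Module.finrank ℝ (LinearMap.ker (fderiv ℝ I x₀).toLinearMap) = 3 := by
  subst hμ
  obtain rfl : x₀ = homogeneousInitialData := hx₀
  obtain rfl : I = firstIntegrals 2 :=
    funext fun ⟨a2, a3, a4, b1, b2, b3, b4⟩ ↦ hI a2 a3 a4 b1 b2 b3 b4
  have hsurj := surjective_fderiv_firstIntegrals two_ne_zero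
  refine ⟨hsurj, ?_⟩
  have hrank := LinearMap.finrank_ker_add_finrank_of_surjective
    (f := (fderiv ℝ (firstIntegrals 2) homogeneousInitialData).toLinearMap) hsurj
  simp only [Module.finrank_prod, Module.finrank_self] at hrank
  omega
end

section
/- Fix c1 > 0 and for n ∈ ℕ define the 4×4 real matrices A = [[6, 0, −2, −4/(3·√c1)], [0,0,0,0], [0,0,0,0], [0,0,0,0]] and B = [[6, 0, 0, −2/(3·√c1)], [0,2,0,0], [0,0,2,0], [0,0,0,2]], and set L(n) = Id − (1/((2n+2)·(2n+1)))·A − (1/(2n+1))·B. Then det L(n) = ((2n² − 3n − 8)/((2n+1)·(n+1)))·((2n−1)/(2n+1))³, and in particular det L(n) ≠ 0 for every n ∈ ℕ, so L(n) is invertible for every n ∈ ℕ. -/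
/- `L(n)` is upper triangular with diagonal `(1 - 6a - 6b, 1 - 2b, 1 - 2b, 1 - 2b)`, where
`a = 1/((2n+2)(2n+1))` and `b = 1/(2n+1)`; the two factors vanish only at the non-integral
roots of `2n² - 3n - 8` and at `n = 1/2`. -/

open Matrix

lemma det_one_sub_smul_sub_smul (a b x y z : ℝ) :
    ((1 : Matrix (Fin 4) (Fin 4) ℝ) -
      a • !![6, 0, x, y; 0, 0, 0, 0; 0, 0, 0, 0; 0, 0, 0, 0] -
      b • !![6, 0, 0, z; 0, 2, 0, 0; 0, 0, 2, 0; 0, 0, 0, 2]).det =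
    (1 - 6 * a - 6 * b) * (1 - 2 * b) ^ 3 := by
  rw [det_of_isUpperTriangular]
  · simp [Fin.prod_univ_four, one_apply]
    ring
  · intro i j hji
    fin_cases i <;> fin_cases j <;> simp_all [one_apply]

lemma two_mul_sq_sub_three_mul_sub_eight_ne_zero (n : ℕ) :
    2 * (n : ℝ) ^ 2 - 3 * n - 8 ≠ 0 := by
  rcases lt_or_ge n 3 with h | h
  · interval_cases n <;> norm_num
  · have : (3 : ℝ) ≤ n := by exact_mod_cast h
    nlinarith

lemma two_mul_sub_one_ne_zero (n : ℕ) : 2 * (n : ℝ) - 1 ≠ 0 := by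
  have : 2 * (n : ℤ) - 1 ≠ 0 := by omega
  exact_mod_cast this

theorem stmt_12_general
    (c1 : ℝ)
    (A B : Matrix (Fin 4) (Fin 4) ℝ)
    (hA : A = !![6, 0, -2, -4 / (3 * Real.sqrt c1);
                 0, 0, 0, 0;
                 0, 0, 0, 0;
                 0, 0, 0, 0])
    (hB : B = !![6, 0, 0, -2 / (3 * Real.sqrt c1);
                 0, 2, 0, 0;
                 0, 0, 2, 0;
                 0, 0, 0, 2])
    (L : ℕ → Matrix (Fin 4) (Fin 4) ℝ)
    (hL : ∀ n : ℕ, L n = 1 - (1 / ((2 * (n : ℝ) + 2) * (2 * (n : ℝ) + 1))) • A -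
      (1 / (2 * (n : ℝ) + 1)) • B) :
    ∀ n : ℕ,
      (L n).det = ((2 * (n : ℝ) ^ 2 - 3 * (n : ℝ) - 8) / ((2 * (n : ℝ) + 1) * ((n : ℝ) + 1))) *
        ((2 * (n : ℝ) - 1) / (2 * (n : ℝ) + 1)) ^ 3 ∧
      (L n).det ≠ 0 ∧
      IsUnit (L n) := by
  intro n
  have hdet : (L n).det = ((2 * (n : ℝ) ^ 2 - 3 * (n : ℝ) - 8) /
      ((2 * (n : ℝ) + 1) * ((n : ℝ) + 1))) * ((2 * (n : ℝ) - 1) / (2 * (n : ℝ) + 1)) ^ 3 := by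
    rw [hL n, hA, hB, det_one_sub_smul_sub_smul]
    field_simp
    ring
  have hne : (L n).det ≠ 0 := by
    rw [hdet]
    have := two_mul_sq_sub_three_mul_sub_eight_ne_zero n
    have := two_mul_sub_one_ne_zero n
    positivity
  exact ⟨hdet, hne, (isUnit_iff_isUnit_det _).2 hne.isUnit⟩

/-- Podestà–Spiro: the matrices `L(n) = Id − A/((2n+2)(2n+1)) − B/(2n+1)` appearing in
the power-series recursion at the singular orbit have determinant
`((2n² − 3n − 8)/((2n+1)(n+1)))·((2n−1)/(2n+1))³ ≠ 0`, hence are invertible for every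
`n ∈ ℕ`. -/
theorem stmt_12
    (c1 : ℝ) (hc1 : 0 < c1)
    (A B : Matrix (Fin 4) (Fin 4) ℝ)
    (hA : A = !![6, 0, -2, -4 / (3 * Real.sqrt c1);
                 0, 0, 0, 0;
                 0, 0, 0, 0;
                 0, 0, 0, 0])
    (hB : B = !![6, 0, 0, -2 / (3 * Real.sqrt c1);
                 0, 2, 0, 0;
                 0, 0, 2, 0;
                 0, 0, 0, 2])
    (L : ℕ → Matrix (Fin 4) (Fin 4) ℝ)
    (hL : ∀ n : ℕ, L n = 1 - (1 / ((2 * (n : ℝ) + 2) * (2 * (n : ℝ) + 1))) • A -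
      (1 / (2 * (n : ℝ) + 1)) • B) :
    ∀ n : ℕ,
      (L n).det = ((2 * (n : ℝ) ^ 2 - 3 * (n : ℝ) - 8) / ((2 * (n : ℝ) + 1) * ((n : ℝ) + 1))) *
        ((2 * (n : ℝ) - 1) / (2 * (n : ℝ) + 1)) ^ 3 ∧
      (L n).det ≠ 0 ∧
      IsUnit (L n) :=
  stmt_12_general c1 A B hA hB L hL
end

section
/- Let ε > 0 and let h1, h2, h3, h4 : (−ε,ε) → ℝ be smooth odd functions with h2(s)² − h3(s)² − h4(s)² ≠ 0 for all s ≠ 0, satisfying for all s ≠ 0 the equation h1''(s) + (2·h1'(s)²·h3(s) + (2/9)·h4'(s)·h4(s))/(h2(s)² − h3(s)² − h4(s)²) = 0. Write b1 = h1'(0), b2 = h2'(0), b3 = h3'(0), b4 = h4'(0), and assume b1 > 0, b3 = −b1 and b2 = −b4 ≠ 0. Then b4² = 9·b1³. -/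
/-- Podestà–Spiro: for smooth odd solutions of the first equation of system (H) with
`μ = 2` near `s = 0` (so that the singular term stays bounded), the initial derivatives
with `b1 > 0`, `b3 = −b1`, `b2 = −b4 ≠ 0` must satisfy the compatibility condition
`b4² = 9·b1³`. -/
theorem stmt_13
    (ε : ℝ) (hε : 0 < ε)
    (h1 h2 h3 h4 : ℝ → ℝ)
    (hh1 : ContDiffOn ℝ (⊤ : ℕ∞) h1 (Set.Ioo (-ε) ε))
    (hh2 : ContDiffOn ℝ (⊤ : ℕ∞) h2 (Set.Ioo (-ε) ε))
    (hh3 : ContDiffOn ℝ (⊤ : ℕ∞) h3 (Set.Ioo (-ε) ε))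
    (hh4 : ContDiffOn ℝ (⊤ : ℕ∞) h4 (Set.Ioo (-ε) ε))
    (hodd1 : ∀ s ∈ Set.Ioo (-ε) ε, h1 (-s) = -h1 s)
    (hodd2 : ∀ s ∈ Set.Ioo (-ε) ε, h2 (-s) = -h2 s)
    (hodd3 : ∀ s ∈ Set.Ioo (-ε) ε, h3 (-s) = -h3 s)
    (hodd4 : ∀ s ∈ Set.Ioo (-ε) ε, h4 (-s) = -h4 s)
    (hden : ∀ s ∈ Set.Ioo (-ε) ε, s ≠ 0 → h2 s ^ 2 - h3 s ^ 2 - h4 s ^ 2 ≠ 0)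
    (heq : ∀ s ∈ Set.Ioo (-ε) ε, s ≠ 0 →
      deriv (deriv h1) s +
        (2 * (deriv h1 s) ^ 2 * h3 s + (2 / 9) * deriv h4 s * h4 s) /
          (h2 s ^ 2 - h3 s ^ 2 - h4 s ^ 2) = 0)
    (b1 b2 b3 b4 : ℝ)
    (hb1 : b1 = deriv h1 0) (hb2 : b2 = deriv h2 0)
    (hb3 : b3 = deriv h3 0) (hb4 : b4 = deriv h4 0)
    (hb1pos : 0 < b1) (hb3b1 : b3 = -b1) (hb2b4 : b2 = -b4) (hb4ne : b4 ≠ 0) :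
    b4 ^ 2 = 9 * b1 ^ 3 := by
  have hmem0 : (0:ℝ) ∈ Set.Ioo (-ε) ε := ⟨by linarith, hε⟩
  have hopen : IsOpen (Set.Ioo (-ε) ε) := isOpen_Ioo
  -- values at 0 vanish
  have hz : ∀ h : ℝ → ℝ, (∀ s ∈ Set.Ioo (-ε) ε, h (-s) = -h s) → h 0 = 0 := by
    intro h hodd
    have := hodd 0 hmem0
    simp at this
    linarith
  have h10 := hz h1 hodd1
  have h20 := hz h2 hodd2
  have h30 := hz h3 hodd3
  have h40 := hz h4 hodd4
  -- the filter
  set l : Filter ℝ := nhdsWithin 0 (Set.Ioo 0 ε) with hl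
  have hlne : l.NeBot := by
    rw [hl, ← mem_closure_iff_nhdsWithin_neBot, closure_Ioo (ne_of_lt hε)]
    exact ⟨le_refl 0, le_of_lt hε⟩
  have hsub : Set.Ioo (0:ℝ) ε ⊆ Set.Ioo (-ε) ε := fun s hs => ⟨by linarith [hs.1], hs.2⟩
  have hl_le : l ≤ nhdsWithin 0 {(0:ℝ)}ᶜ :=
    nhdsWithin_mono 0 (fun s hs => ne_of_gt hs.1)
  have hl_le' : l ≤ nhds 0 := nhdsWithin_le_nhds
  -- slope limits : h i s / s → b i along l
  have slope_lim : ∀ (h : ℝ → ℝ), ContDiffOn ℝ (⊤ : ℕ∞) h (Set.Ioo (-ε) ε) → h 0 = 0 →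
      Filter.Tendsto (fun s => h s / s) l (nhds (deriv h 0)) := by
    intro h hh h0
    have hd : DifferentiableAt ℝ h 0 :=
      (hh.contDiffAt (hopen.mem_nhds hmem0)).differentiableAt (by simp)
    have := (hasDerivAt_iff_tendsto_slope.mp hd.hasDerivAt).mono_left hl_le
    refine this.congr' ?_
    filter_upwards [self_mem_nhdsWithin] with s hs
    simp [slope, h0, sub_zero, div_eq_inv_mul]
  have T2 := slope_lim h2 hh2 h20
  have T3 := slope_lim h3 hh3 h30
  have T4 := slope_lim h4 hh4 h40
  -- continuity of deriv h1, deriv h4, deriv (deriv h1) at 0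
  have hd1 : ContDiffOn ℝ (⊤ : ℕ∞) (deriv h1) (Set.Ioo (-ε) ε) :=
    hh1.deriv_of_isOpen hopen (by simp)
  have hdd1 : ContDiffOn ℝ (⊤ : ℕ∞) (deriv (deriv h1)) (Set.Ioo (-ε) ε) :=
    hd1.deriv_of_isOpen hopen (by simp)
  have hd4 : ContDiffOn ℝ (⊤ : ℕ∞) (deriv h4) (Set.Ioo (-ε) ε) :=
    hh4.deriv_of_isOpen hopen (by simp)
  have C1 : Filter.Tendsto (fun s => deriv h1 s) l (nhds (deriv h1 0)) :=
    ((hd1.continuousOn.continuousAt (hopen.mem_nhds hmem0)).tendsto).comp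
      (Filter.tendsto_id.mono_left hl_le') |>.congr (fun s => rfl)
  have C4 : Filter.Tendsto (fun s => deriv h4 s) l (nhds (deriv h4 0)) :=
    ((hd4.continuousOn.continuousAt (hopen.mem_nhds hmem0)).tendsto).comp
      (Filter.tendsto_id.mono_left hl_le') |>.congr (fun s => rfl)
  have CA : Filter.Tendsto (fun s => deriv (deriv h1) s) l (nhds (deriv (deriv h1) 0)) :=
    ((hdd1.continuousOn.continuousAt (hopen.mem_nhds hmem0)).tendsto).comp
      (Filter.tendsto_id.mono_left hl_le') |>.congr (fun s => rfl)
  -- F tends to -h1''(0)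
  set F : ℝ → ℝ := fun s => (2 * (deriv h1 s) ^ 2 * h3 s + (2 / 9) * deriv h4 s * h4 s) /
      (h2 s ^ 2 - h3 s ^ 2 - h4 s ^ 2) with hF
  have hFeq : ∀ s ∈ Set.Ioo (0:ℝ) ε, F s = -deriv (deriv h1) s := by
    intro s hs
    have := heq s (hsub hs) (ne_of_gt hs.1)
    simp only [hF]
    linarith
  have TF : Filter.Tendsto F l (nhds (-(deriv (deriv h1) 0))) := by
    refine (CA.neg).congr' ?_
    filter_upwards [self_mem_nhdsWithin] with s hs
    exact (hFeq s hs).symm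
  have Ts : Filter.Tendsto (fun s : ℝ => s) l (nhds 0) := Filter.tendsto_id.mono_left hl_le'
  have TFs : Filter.Tendsto (fun s => F s * s) l (nhds 0) := by
    have := TF.mul Ts
    simpa using this
  -- the other expression
  have hb1ne : b1 ≠ 0 := ne_of_gt hb1pos
  have hdenlim : (deriv h2 0) ^ 2 - (deriv h3 0) ^ 2 - (deriv h4 0) ^ 2 ≠ 0 := by
    rw [← hb2, ← hb3, ← hb4, hb2b4, hb3b1]
    have : (-b4) ^ 2 - (-b1) ^ 2 - b4 ^ 2 = -b1 ^ 2 := by ring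
    rw [this]
    exact neg_ne_zero.mpr (pow_ne_zero 2 hb1ne)
  have TG : Filter.Tendsto (fun s => F s * s) l
      (nhds ((2 * (deriv h1 0) ^ 2 * deriv h3 0 + (2 / 9) * deriv h4 0 * deriv h4 0) /
        ((deriv h2 0) ^ 2 - (deriv h3 0) ^ 2 - (deriv h4 0) ^ 2))) := by
    have num : Filter.Tendsto
        (fun s => 2 * (deriv h1 s) ^ 2 * (h3 s / s) + (2 / 9) * deriv h4 s * (h4 s / s)) l
        (nhds (2 * (deriv h1 0) ^ 2 * deriv h3 0 + (2 / 9) * deriv h4 0 * deriv h4 0)) := by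
      exact (((Filter.Tendsto.const_mul 2 (C1.pow 2)).mul T3).add
        (((Filter.Tendsto.const_mul (2/9 : ℝ) C4)).mul T4))
    have den : Filter.Tendsto
        (fun s => (h2 s / s) ^ 2 - (h3 s / s) ^ 2 - (h4 s / s) ^ 2) l
        (nhds ((deriv h2 0) ^ 2 - (deriv h3 0) ^ 2 - (deriv h4 0) ^ 2)) :=
      ((T2.pow 2).sub (T3.pow 2)).sub (T4.pow 2)
    refine (num.div den hdenlim).congr' ?_
    filter_upwards [self_mem_nhdsWithin] with s hs
    have hsne : s ≠ 0 := ne_of_gt hs.1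
    have hD := hden s (hsub hs) hsne
    simp only [hF, Pi.div_apply]
    field_simp
  have huniq := tendsto_nhds_unique TFs TG
  have hnum : 2 * (deriv h1 0) ^ 2 * deriv h3 0 + (2 / 9) * deriv h4 0 * deriv h4 0 = 0 := by
    rcases div_eq_zero_iff.mp huniq.symm with h | h
    · exact h
    · exact absurd h hdenlim
  rw [← hb1, ← hb3, ← hb4] at hnum
  rw [hb3b1] at hnum
  nlinarith [hnum, sq_nonneg b1, sq_nonneg b4]
end

section
/- Let a > 0 and let φ : (0,a) → ℝ be smooth. Define F : {x ∈ ℝ³ : 0 < ‖x‖ < a} → ℝ³ by F(x) = φ(‖x‖)·x/‖x‖ (Euclidean norm on ℝ³). Then F extends to a smooth map on the open ball {x ∈ ℝ³ : ‖x‖ < a} if and only if φ extends to a smooth odd function on the interval (−a,a). -/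
set_option maxHeartbeats 1000000
open Set Filter Metric
open scoped Topology ContDiff NNReal ENNReal

lemma param_int_hasDerivAt (b : ℝ) (j : ℕ) (f : ℝ → ℝ) (hf : ContDiffOn ℝ ∞ f (Ioo (-b) b))
    (t₀ : ℝ) (ht₀ : t₀ ∈ Ioo (-b) b) :
    HasDerivAt (fun t => ∫ s in (0:ℝ)..1, s^j * f (s*t))
      (∫ s in (0:ℝ)..1, s^(j+1) * deriv f (s*t₀)) t₀ := by
  have hmem : ∀ x σ : ℝ, |x| < b → σ ∈ Icc (0:ℝ) 1 → σ*x ∈ Ioo (-b) b := by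
    intro x σ hx hσ
    have : |σ*x| < b := by
      rw [abs_mul, abs_of_nonneg hσ.1]
      calc σ*|x| ≤ 1*|x| := mul_le_mul_of_nonneg_right hσ.2 (abs_nonneg _)
        _ < b := by linarith
    exact ⟨(abs_lt.mp this).1, (abs_lt.mp this).2⟩
  have hf' := ((contDiffOn_infty_iff_deriv_of_isOpen isOpen_Ioo).mp hf).2
  have hfd := ((contDiffOn_infty_iff_deriv_of_isOpen isOpen_Ioo).mp hf).1
  have ht0 : |t₀| < b := abs_lt.mpr ⟨ht₀.1, ht₀.2⟩
  set R := (|t₀| + b)/2 with hR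
  have hRb : R < b := by rw [hR]; linarith
  have hsub : Set.uIoc (0:ℝ) 1 ⊆ Icc 0 1 := by
    rw [uIoc_of_le zero_le_one]; exact Ioc_subset_Icc_self
  have hcont : ∀ (i : ℕ) (g : ℝ → ℝ), ContinuousOn g (Ioo (-b) b) → ∀ x, |x| < b →
      ContinuousOn (fun σ : ℝ => σ^i * g (σ*x)) (Icc 0 1) := by
    intro i g hg x hx
    exact (continuousOn_pow i).mul (hg.comp (continuousOn_id.mul continuousOn_const)
      (fun σ hσ => hmem x σ hx hσ))
  obtain ⟨C, hC⟩ := (isCompact_Icc (a := -R) (b := R)).exists_bound_of_continuousOn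
    (hf'.continuousOn.mono (fun x hx => ⟨by linarith [hx.1], by linarith [hx.2]⟩))
  have hε : 0 < R - |t₀| := by rw [hR]; linarith
  have hball : ∀ x ∈ ball t₀ (R - |t₀|), |x| < R := by
    intro x hx
    rw [mem_ball, Real.dist_eq] at hx
    have := abs_sub_abs_le_abs_sub x t₀
    linarith
  refine (intervalIntegral.hasDerivAt_integral_of_dominated_loc_of_deriv_le
    (F' := fun x σ => σ^(j+1) * deriv f (σ*x)) (bound := fun _ => C)
    (ball_mem_nhds t₀ hε) ?_ ?_ ?_ ?_ intervalIntegrable_const ?_).2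
  · filter_upwards [ball_mem_nhds t₀ hε] with x hx
    exact ((hcont j f hf.continuousOn x (by linarith [hball x hx])).mono hsub).aestronglyMeasurable
      measurableSet_uIoc
  · apply ContinuousOn.intervalIntegrable
    rw [uIcc_of_le zero_le_one]
    exact hcont j f hf.continuousOn t₀ ht0
  · exact ((hcont (j+1) _ hf'.continuousOn t₀ ht0).mono hsub).aestronglyMeasurable
      measurableSet_uIoc
  · refine Filter.Eventually.of_forall (fun σ hσ x hx => ?_)
    have hσ' := hsub hσ
    have hx' := hball x hx
    have hm : σ*x ∈ Icc (-R) R := by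
      have := hmem x σ (by linarith) hσ'
      have h2 : |σ*x| ≤ |x| := by
        rw [abs_mul, abs_of_nonneg hσ'.1]
        calc σ*|x| ≤ 1*|x| := mul_le_mul_of_nonneg_right hσ'.2 (abs_nonneg _)
          _ = |x| := one_mul _
      exact ⟨by linarith [neg_abs_le (σ*x)], by linarith [le_abs_self (σ*x)]⟩
    rw [norm_mul, norm_pow, Real.norm_eq_abs, abs_of_nonneg hσ'.1]
    calc σ^(j+1) * ‖deriv f (σ*x)‖ ≤ 1 * C :=
          mul_le_mul (pow_le_one₀ hσ'.1 hσ'.2) (hC _ hm) (norm_nonneg _) zero_le_one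
      _ = C := one_mul C
  · refine Filter.Eventually.of_forall (fun σ hσ x hx => ?_)
    have hσ' := hsub hσ
    have hx' := hball x hx
    have hd : DifferentiableAt ℝ f (σ*x) :=
      (hfd _ (hmem x σ (by linarith) hσ')).differentiableAt
        (isOpen_Ioo.mem_nhds (hmem x σ (by linarith) hσ'))
    have := ((hd.hasDerivAt).comp x ((hasDerivAt_id' x).const_mul σ)).const_mul (σ^j)
    refine this.congr_deriv ?_
    ring

lemma div_lemma (b : ℝ) (m : ℝ → ℝ) (hm : ContDiffOn ℝ ∞ m (Ioo (-b) b)) (hm0 : m 0 = 0) :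
    ∃ k : ℝ → ℝ, ContDiffOn ℝ ∞ k (Ioo (-b) b) ∧ ∀ t ∈ Ioo (-b) b, m t = t * k t := by
  have hmem : ∀ x σ : ℝ, |x| < b → σ ∈ Icc (0:ℝ) 1 → σ*x ∈ Ioo (-b) b := by
    intro x σ hx hσ
    have : |σ*x| < b := by
      rw [abs_mul, abs_of_nonneg hσ.1]
      calc σ*|x| ≤ 1*|x| := mul_le_mul_of_nonneg_right hσ.2 (abs_nonneg _)
        _ < b := by linarith
    exact ⟨(abs_lt.mp this).1, (abs_lt.mp this).2⟩
  have hm' := ((contDiffOn_infty_iff_deriv_of_isOpen isOpen_Ioo).mp hm).2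
  have hmd := ((contDiffOn_infty_iff_deriv_of_isOpen isOpen_Ioo).mp hm).1
  have hP : ∀ (n : ℕ) (j : ℕ) (f : ℝ → ℝ), ContDiffOn ℝ ∞ f (Ioo (-b) b) →
      ContDiffOn ℝ n (fun t => ∫ s in (0:ℝ)..1, s^j * f (s*t)) (Ioo (-b) b) := by
    intro n
    induction n with
    | zero =>
      intro j f hf
      rw [Nat.cast_zero, contDiffOn_zero]
      exact fun t ht => (param_int_hasDerivAt b j f hf t ht).continuousAt.continuousWithinAt
    | succ n ih =>
      intro j f hf
      rw [Nat.cast_succ, contDiffOn_succ_iff_deriv_of_isOpen isOpen_Ioo]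
      refine ⟨fun t ht => (param_int_hasDerivAt b j f hf t ht).differentiableAt.differentiableWithinAt,
        by simp, ?_⟩
      exact (ih (j+1) (deriv f) ((contDiffOn_infty_iff_deriv_of_isOpen isOpen_Ioo).mp hf).2).congr
        fun t ht => (param_int_hasDerivAt b j f hf t ht).deriv
  refine ⟨fun t => ∫ s in (0:ℝ)..1, s^0 * deriv m (s*t),
    contDiffOn_infty.mpr fun n => hP n 0 (deriv m) hm', ?_⟩
  intro t ht
  have htb : |t| < b := abs_lt.mpr ⟨ht.1, ht.2⟩
  have key : ∫ s in (0:ℝ)..1, t * (s^0 * deriv m (s*t)) = m (1*t) - m (0*t) := by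
    refine intervalIntegral.integral_eq_sub_of_hasDerivAt (f := fun s => m (s*t)) (fun s hs => ?_) ?_
    · rw [uIcc_of_le zero_le_one] at hs
      have hd : DifferentiableAt ℝ m (s*t) :=
        (hmd _ (hmem t s htb hs)).differentiableAt (isOpen_Ioo.mem_nhds (hmem t s htb hs))
      have := (hd.hasDerivAt).comp s ((hasDerivAt_id' s).mul_const t)
      refine this.congr_deriv ?_
      ring
    · apply ContinuousOn.intervalIntegrable
      rw [uIcc_of_le zero_le_one]
      exact continuousOn_const.mul ((continuousOn_pow 0).mul (hm'.continuousOn.comp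
        (continuousOn_id.mul continuousOn_const) (fun σ hσ => hmem t σ htb hσ)))
  rw [intervalIntegral.integral_const_mul, one_mul, zero_mul, hm0, sub_zero] at key
  exact key.symm

lemma even_norm_contDiffOn (b : ℝ) (hb : 0 < b) (n : ℕ) : ∀ k : ℝ → ℝ,
    ContDiffOn ℝ ∞ k (Ioo (-b) b) → (∀ t ∈ Ioo (-b) b, k (-t) = k t) →
    ContDiffOn ℝ n (fun x : EuclideanSpace ℝ (Fin 3) => k ‖x‖) (Metric.ball 0 b) := by
  induction n with
  | zero =>
    intro k hk _
    rw [Nat.cast_zero, contDiffOn_zero]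
    exact hk.continuousOn.comp continuous_norm.continuousOn
      (fun x hx => ⟨by linarith [norm_nonneg x], by simpa using hx⟩)
  | succ n ih =>
    intro k hk hev
    have hk' := ((contDiffOn_infty_iff_deriv_of_isOpen isOpen_Ioo).mp hk).2
    have hkd := ((contDiffOn_infty_iff_deriv_of_isOpen isOpen_Ioo).mp hk).1
    have hkdiff : ∀ t ∈ Ioo (-b) b, DifferentiableAt ℝ k t :=
      fun t ht => (hkd t ht).differentiableAt (isOpen_Ioo.mem_nhds ht)
    have hodd : ∀ t ∈ Ioo (-b) b, deriv k (-t) = - deriv k t := by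
      intro t ht
      have hneg : -t ∈ Ioo (-b) b := ⟨by linarith [ht.2], by linarith [ht.1]⟩
      have h1 := ((hkdiff (-t) hneg).hasDerivAt).comp t (hasDerivAt_neg t)
      have h2 : HasDerivAt k (deriv k (-t) * -1) t := by
        refine h1.congr_of_eventuallyEq ?_
        filter_upwards [isOpen_Ioo.mem_nhds ht] with u hu
        exact (hev u hu).symm
      have := h2.deriv
      linarith
    have hd0 : deriv k 0 = 0 := by
      have := hodd 0 ⟨by linarith, hb⟩
      rw [neg_zero] at this
      linarith
    obtain ⟨k₁, hk₁, hk₁eq⟩ := div_lemma b (deriv k) hk' hd0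
    have hev₁ : ∀ t ∈ Ioo (-b) b, k₁ (-t) = k₁ t := by
      intro t ht
      by_cases ht0 : t = 0
      · rw [ht0, neg_zero]
      have hneg : -t ∈ Ioo (-b) b := ⟨by linarith [ht.2], by linarith [ht.1]⟩
      have h1 := hk₁eq (-t) hneg
      rw [hodd t ht, hk₁eq t ht] at h1
      have : t * k₁ (-t) = t * k₁ t := by linarith
      exact mul_left_cancel₀ ht0 this
    have hderiv : ∀ y ∈ Metric.ball (0 : EuclideanSpace ℝ (Fin 3)) b,
        HasFDerivAt (fun x : EuclideanSpace ℝ (Fin 3) => k ‖x‖) (k₁ ‖y‖ • innerSL ℝ y) y := by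
      intro y hy
      have hyb : ‖y‖ < b := by simpa using hy
      by_cases hy0 : y = 0
      · subst hy0
        rw [map_zero, smul_zero, hasFDerivAt_iff_isLittleO_nhds_zero]
        have hk0 : HasDerivAt k 0 0 := by
          have := (hkdiff 0 ⟨by linarith, hb⟩).hasDerivAt
          rwa [hd0] at this
        rw [hasDerivAt_iff_isLittleO_nhds_zero] at hk0
        have := Asymptotics.isLittleO_norm_right.mp (hk0.comp_tendsto (tendsto_norm_zero (E := EuclideanSpace ℝ (Fin 3))))
        refine this.congr_left (fun x => ?_)
        simp
      · have hpos : 0 < ‖y‖ := norm_pos_iff.mpr hy0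
        have hmemy : ‖y‖ ∈ Ioo (-b) b := ⟨by linarith, hyb⟩
        have hsq := ((hasStrictFDerivAt_norm_sq y).hasFDerivAt).sqrt (by positivity)
        have hn : HasFDerivAt (fun x : EuclideanSpace ℝ (Fin 3) => ‖x‖)
            ((1 / (2 * √(‖y‖^2))) • (2 • innerSL ℝ y)) y := by
          refine hsq.congr_of_eventuallyEq (Filter.Eventually.of_forall fun x => ?_)
          show ‖x‖ = √(‖x‖^2)
          rw [Real.sqrt_sq (norm_nonneg x)]
        have := ((hkdiff _ hmemy).hasDerivAt).comp_hasFDerivAt y hn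
        refine this.congr_fderiv ?_
        rw [hk₁eq ‖y‖ hmemy, Real.sqrt_sq (norm_nonneg y)]
        ext v
        simp
        field_simp
    rw [Nat.cast_succ, contDiffOn_succ_iff_fderiv_of_isOpen isOpen_ball]
    refine ⟨fun y hy => (hderiv y hy).differentiableAt.differentiableWithinAt, by simp, ?_⟩
    have hC : ContDiffOn ℝ n (fun y : EuclideanSpace ℝ (Fin 3) => k₁ ‖y‖ • innerSL ℝ y)
        (Metric.ball 0 b) :=
      (ih k₁ hk₁ hev₁).smul (innerSL ℝ).contDiff.contDiffOn
    exact hC.congr fun y hy => (hderiv y hy).fderiv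


/-- Podestà–Spiro: smooth-extension criterion for SO(3)-equivariant (radial) vector
fields. The map `F(x) = φ(‖x‖)·x/‖x‖` on the punctured ball of radius `a` in `ℝ³`
extends to a smooth map on the whole open ball if and only if `φ` extends to a smooth
odd function on `(−a,a)`. -/
theorem stmt_14
    (a : ℝ) (ha : 0 < a)
    (φ : ℝ → ℝ)
    (hφ : ContDiffOn ℝ (⊤ : ℕ∞) φ (Set.Ioo 0 a)) :
    (∃ G : EuclideanSpace ℝ (Fin 3) → EuclideanSpace ℝ (Fin 3),
      ContDiffOn ℝ (⊤ : ℕ∞) G (Metric.ball 0 a) ∧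
      ∀ x : EuclideanSpace ℝ (Fin 3), 0 < ‖x‖ → ‖x‖ < a →
        G x = (φ ‖x‖ * ‖x‖⁻¹) • x) ↔
    (∃ ψ : ℝ → ℝ,
      ContDiffOn ℝ (⊤ : ℕ∞) ψ (Set.Ioo (-a) a) ∧
      (∀ r ∈ Set.Ioo (-a) a, ψ (-r) = -ψ r) ∧
      ∀ r ∈ Set.Ioo 0 a, ψ r = φ r) := by
  constructor
  · rintro ⟨G, hG, hGeq⟩
    set e₁ : EuclideanSpace ℝ (Fin 3) := EuclideanSpace.single (0 : Fin 3) (1:ℝ) with he₁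
    have hne : ‖e₁‖ = 1 := by rw [he₁, EuclideanSpace.norm_single, norm_one]
    set ψ : ℝ → ℝ := fun r => EuclideanSpace.proj (0 : Fin 3) (G (r • e₁)) with hψdef
    have hsm : ContDiff ℝ (⊤ : ℕ∞) (fun r : ℝ => r • e₁) := contDiff_id.smul contDiff_const
    have hmaps : Set.MapsTo (fun r : ℝ => r • e₁) (Set.Ioo (-a) a) (Metric.ball 0 a) := by
      intro r hr
      rw [Metric.mem_ball, dist_zero_right, norm_smul, hne, mul_one, Real.norm_eq_abs]
      exact abs_lt.mpr ⟨hr.1, hr.2⟩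
    have hψsm : ContDiffOn ℝ (⊤ : ℕ∞) ψ (Set.Ioo (-a) a) := by
      have h1 : ContDiffOn ℝ (⊤ : ℕ∞) (fun r : ℝ => G (r • e₁)) (Set.Ioo (-a) a) :=
        hG.comp hsm.contDiffOn hmaps
      have h2 : ContDiffOn ℝ (⊤ : ℕ∞)
          (⇑(EuclideanSpace.proj (0 : Fin 3) : EuclideanSpace ℝ (Fin 3) →L[ℝ] ℝ) ∘
            fun r : ℝ => G (r • e₁)) (Set.Ioo (-a) a) :=
        (EuclideanSpace.proj (0 : Fin 3)).contDiff.comp_contDiffOn h1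
      exact h2.congr fun r _ => rfl
    have hval : ∀ r : ℝ, r ≠ 0 → -a < r → r < a → ψ r = φ |r| * |r|⁻¹ * r := by
      intro r hr0 h1 h2
      have hn : ‖r • e₁‖ = |r| := by rw [norm_smul, hne, mul_one, Real.norm_eq_abs]
      have h0 : 0 < ‖r • e₁‖ := by rw [hn]; exact abs_pos.mpr hr0
      have hla : ‖r • e₁‖ < a := by rw [hn]; exact abs_lt.mpr ⟨h1, h2⟩
      have hkey := hGeq (r • e₁) h0 hla
      rw [hn] at hkey
      rw [hψdef]
      simp only [hkey, map_smul, smul_eq_mul]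
      have he0 : (EuclideanSpace.proj (0 : Fin 3)) e₁ = 1 := by
        rw [he₁]
        simp [PiLp.proj_apply, EuclideanSpace.single_apply]
      rw [he0]
      ring
    have hoddne : ∀ r : ℝ, r ≠ 0 → -a < r → r < a → ψ (-r) = -ψ r := by
      intro r hr0 h1 h2
      rw [hval (-r) (neg_ne_zero.mpr hr0) (by linarith) (by linarith), hval r hr0 h1 h2,
        abs_neg]
      ring
    have h0mem : (0:ℝ) ∈ Set.Ioo (-a) a := ⟨by linarith, ha⟩
    have hF : (𝓝[Set.Ioo (0:ℝ) a] 0).NeBot := by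
      apply mem_closure_iff_nhdsWithin_neBot.mp
      rw [closure_Ioo (ne_of_lt ha)]
      exact Set.mem_Icc.mpr ⟨le_rfl, ha.le⟩
    have hcont := hψsm.continuousOn
    have T1 : Tendsto ψ (𝓝[Set.Ioo (0:ℝ) a] 0) (𝓝 (ψ 0)) :=
      (hcont 0 h0mem).mono_left
        (nhdsWithin_mono 0 (fun x hx => ⟨by linarith [hx.1], hx.2⟩))
    have hnegt : Tendsto (fun r : ℝ => -r) (𝓝[Set.Ioo (0:ℝ) a] 0) (𝓝[Set.Ioo (-a) a] 0) := by
      apply tendsto_nhdsWithin_of_tendsto_nhds_of_eventually_within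
      · have := (continuous_neg.tendsto (0:ℝ)).mono_left
          (nhdsWithin_le_nhds (s := Set.Ioo (0:ℝ) a))
        simpa using this
      · filter_upwards [self_mem_nhdsWithin] with r hr
        exact ⟨by linarith [hr.2], by linarith [hr.1]⟩
    have T2 : Tendsto (fun r : ℝ => ψ (-r)) (𝓝[Set.Ioo (0:ℝ) a] 0) (𝓝 (ψ 0)) :=
      Tendsto.comp (g := ψ) (f := fun r : ℝ => -r) (hcont 0 h0mem) hnegt
    have T3 : Tendsto (fun r : ℝ => -ψ r) (𝓝[Set.Ioo (0:ℝ) a] 0) (𝓝 (ψ 0)) := by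
      apply T2.congr'
      filter_upwards [self_mem_nhdsWithin] with r hr
      exact hoddne r (ne_of_gt hr.1) (by linarith [hr.1]) hr.2
    have hψ0 : ψ 0 = 0 := by
      have T4 : Tendsto (fun r : ℝ => -ψ r) (𝓝[Set.Ioo (0:ℝ) a] 0) (𝓝 (-ψ 0)) := T1.neg
      have := tendsto_nhds_unique T3 T4
      linarith
    refine ⟨ψ, hψsm, ?_, ?_⟩
    · intro r hr
      by_cases hr0 : r = 0
      · simp [hr0, hψ0]
      · exact hoddne r hr0 hr.1 hr.2
    · intro r hr
      have hrne : r ≠ 0 := ne_of_gt hr.1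
      rw [hval r hrne (by linarith [hr.1]) hr.2, abs_of_pos hr.1]
      field_simp
  · rintro ⟨ψ, hψ1, hodd, hagree⟩
    have hψ0 : ψ 0 = 0 := by
      have := hodd 0 ⟨by linarith, ha⟩
      rw [neg_zero] at this
      linarith
    obtain ⟨k, hk, hkeq⟩ := div_lemma a ψ hψ1 hψ0
    have hkev : ∀ t ∈ Set.Ioo (-a) a, k (-t) = k t := by
      intro t ht
      by_cases ht0 : t = 0
      · rw [ht0, neg_zero]
      have hneg : -t ∈ Set.Ioo (-a) a := ⟨by linarith [ht.2], by linarith [ht.1]⟩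
      have h1 := hkeq (-t) hneg
      rw [hodd t ht, hkeq t ht] at h1
      have : t * k (-t) = t * k t := by linarith
      exact mul_left_cancel₀ ht0 this
    have hK : ContDiffOn ℝ (⊤ : ℕ∞) (fun x : EuclideanSpace ℝ (Fin 3) => k ‖x‖)
        (Metric.ball 0 a) :=
      contDiffOn_infty.mpr fun n => even_norm_contDiffOn a ha n k hk hkev
    classical
    refine ⟨fun x => if x = 0 then 0 else (ψ ‖x‖ * ‖x‖⁻¹) • x, ?_, ?_⟩
    · intro x hx
      rw [Metric.mem_ball, dist_zero_right] at hx
      by_cases hx0 : x = 0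
      · subst hx0
        apply ContDiffAt.contDiffWithinAt
        have hG0 : ContDiffAt ℝ (⊤ : ℕ∞) (fun x : EuclideanSpace ℝ (Fin 3) => k ‖x‖ • x) 0 :=
          (hK.contDiffAt (Metric.ball_mem_nhds 0 ha)).smul contDiffAt_id
        refine hG0.congr_of_eventuallyEq ?_
        filter_upwards [Metric.ball_mem_nhds (0 : EuclideanSpace ℝ (Fin 3)) ha] with y hy
        rw [Metric.mem_ball, dist_zero_right] at hy
        by_cases h : y = 0
        · simp [h]
        · simp only [if_neg h]
          have hn0 : ‖y‖ ≠ 0 := norm_ne_zero_iff.mpr h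
          rw [hkeq ‖y‖ ⟨by linarith [norm_nonneg y], hy⟩]
          congr 1
          field_simp
      · apply ContDiffAt.contDiffWithinAt
        have hnx : ContDiffAt ℝ (⊤ : ℕ∞) (norm : EuclideanSpace ℝ (Fin 3) → ℝ) x :=
          contDiffAt_norm ℝ hx0
        have h0x : 0 < ‖x‖ := norm_pos_iff.mpr hx0
        have hψx : ContDiffAt ℝ (⊤ : ℕ∞) ψ ‖x‖ :=
          hψ1.contDiffAt (Ioo_mem_nhds (by linarith) hx)
        have hmain : ContDiffAt ℝ (⊤ : ℕ∞)
            (fun y : EuclideanSpace ℝ (Fin 3) => (ψ ‖y‖ * ‖y‖⁻¹) • y) x :=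
          ((hψx.comp x hnx).mul (hnx.inv (ne_of_gt h0x))).smul contDiffAt_id
        refine hmain.congr_of_eventuallyEq ?_
        filter_upwards [eventually_ne_nhds hx0] with y hy
        simp only [if_neg hy]
    · intro x h0x hxa
      have hx0 : x ≠ 0 := norm_pos_iff.mp h0x
      simp only [if_neg hx0]
      rw [hagree ‖x‖ ⟨h0x, hxa⟩]
end

section
/- Let a > 0 and let f, λ : (0,a) → ℝ be smooth. Define T : {x ∈ ℝ³ : 0 < ‖x‖ < a} → (3×3 real matrices) by T(x) = f(‖x‖)·(x·xᵀ)/‖x‖² + λ(‖x‖)·(Id₃ − (x·xᵀ)/‖x‖²), where x·xᵀ denotes the rank-one matrix with entries xᵢxⱼ and ‖·‖ is the Euclidean norm. Then T extends to a smooth map on the open ball {x ∈ ℝ³ : ‖x‖ < a} if and only if f and λ extend to smooth even functions on (−a,a) satisfying f(0) = λ(0). -/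
open scoped Topology ENNReal NNReal

theorem aux_int (n : ℕ) : ∀ F : ℝ × ℝ → ℝ, ContDiff ℝ (⊤ : ℕ∞) F →
    ContDiff ℝ n (fun t => ∫ s in (0:ℝ)..1, F (t, s)) := by
  induction n with
  | zero =>
    intro F hF
    rw [Nat.cast_zero, contDiff_zero]
    exact intervalIntegral.continuous_parametric_intervalIntegral_of_continuous'
      (f := fun t s => F (t, s)) hF.continuous 0 1
  | succ n ih =>
    intro F hF
    set F1 : ℝ × ℝ → ℝ := fun q => fderiv ℝ F q (1, 0) with hF1def
    have hF1 : ContDiff ℝ (⊤ : ℕ∞) F1 :=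
      (hF.fderiv_right (m := ((⊤ : ℕ∞) : WithTop ℕ∞)) (by rw [ENat.coe_top_add_one])).clm_apply
        contDiff_const
    have hFd : Differentiable ℝ F := hF.differentiable (by simp)
    have hd : ∀ t0 : ℝ, HasDerivAt (fun t => ∫ s in (0:ℝ)..1, F (t, s))
        (∫ s in (0:ℝ)..1, F1 (t0, s)) t0 := by
      intro t0
      obtain ⟨C, hC⟩ := ((isCompact_closedBall t0 1).prod isCompact_Icc).exists_bound_of_continuousOn
        (hF1.continuous.continuousOn (s := Metric.closedBall t0 1 ×ˢ Set.Icc (0:ℝ) 1))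
      have hcF : ∀ t : ℝ, Continuous fun s => F (t, s) := fun t =>
        hF.continuous.comp (continuous_const.prodMk continuous_id)
      have hcF1 : ∀ t : ℝ, Continuous fun s => F1 (t, s) := fun t =>
        hF1.continuous.comp (continuous_const.prodMk continuous_id)
      refine (intervalIntegral.hasDerivAt_integral_of_dominated_loc_of_deriv_le
        (μ := MeasureTheory.volume) (F := fun t s => F (t, s)) (F' := fun t s => F1 (t, s))
        (bound := fun _ => C) (Metric.ball_mem_nhds t0 one_pos)
        (Filter.Eventually.of_forall fun t => (hcF t).aestronglyMeasurable)
        ((hcF t0).intervalIntegrable 0 1) (hcF1 t0).aestronglyMeasurable ?_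
        intervalIntegrable_const ?_).2
      · refine Filter.Eventually.of_forall fun s hs x hx => hC (x, s) ⟨Metric.ball_subset_closedBall hx, ?_⟩
        rw [Set.uIoc_of_le zero_le_one] at hs
        exact Set.Ioc_subset_Icc_self hs
      · refine Filter.Eventually.of_forall fun s _ x _ => ?_
        have h1 : HasDerivAt (fun x : ℝ => (x, s)) ((1 : ℝ), (0 : ℝ)) x :=
          (hasDerivAt_id x).prodMk (hasDerivAt_const x s)
        exact (hFd (x, s)).hasFDerivAt.comp_hasDerivAt x h1
    rw [Nat.cast_add, Nat.cast_one, contDiff_succ_iff_deriv]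
    refine ⟨fun t => (hd t).differentiableAt, by simp, ?_⟩
    have : deriv (fun t => ∫ s in (0:ℝ)..1, F (t, s)) = fun t => ∫ s in (0:ℝ)..1, F1 (t, s) :=
      funext fun t => (hd t).deriv
    rw [this]
    exact ih F1 hF1

theorem aux_ext {a b : ℝ} (u : ℝ → ℝ) (hu : ContDiffOn ℝ (⊤ : ℕ∞) u (Set.Ioo (-a) a))
    (hb : 0 < b) (hba : b < a) :
    ∃ w : ℝ → ℝ, ContDiff ℝ (⊤ : ℕ∞) w ∧ ∀ x ∈ Set.Icc (-b) b, w x = u x := by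
  let χ : ContDiffBump (0:ℝ) := ⟨b, (b + a) / 2, hb, by linarith⟩
  refine ⟨fun x => χ x * u x, ?_, fun x hx => ?_⟩
  · rw [contDiff_iff_contDiffAt]
    intro x
    by_cases hx : |x| < a
    · obtain ⟨h1, h2⟩ := abs_lt.mp hx
      exact χ.contDiff.contDiffAt.mul (hu.contDiffAt (Ioo_mem_nhds h1 h2))
    · push_neg at hx
      have hev : (fun x => χ x * u x) =ᶠ[𝓝 x] fun _ => (0:ℝ) := by
        filter_upwards [(isOpen_lt continuous_const continuous_abs).mem_nhds
          (show (b + a) / 2 < |x| by linarith)] with y hy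
        have hy' : y ∉ Function.support χ := by
          rw [χ.support_eq, Metric.mem_ball, Real.dist_eq, sub_zero, not_lt]
          exact le_of_lt hy
        rw [Function.notMem_support.mp hy', zero_mul]
      exact contDiffAt_const.congr_of_eventuallyEq hev
  · have : χ x = 1 := by
      apply χ.one_of_mem_closedBall
      rw [Metric.mem_closedBall, Real.dist_eq, sub_zero]
      exact abs_le.mpr hx
    simp [this]

theorem aux_dslope {a : ℝ} (u : ℝ → ℝ) (hu : ContDiffOn ℝ (⊤ : ℕ∞) u (Set.Ioo (-a) a)) :
    ContDiffOn ℝ (⊤ : ℕ∞) (dslope u 0) (Set.Ioo (-a) a) := by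
  intro t0 ht0
  have ht0' : |t0| < a := abs_lt.mpr ⟨ht0.1, ht0.2⟩
  set b := (|t0| + a) / 2 with hb
  have hb0 : 0 < b := by have := abs_nonneg t0; rw [hb]; linarith
  have hba : b < a := by rw [hb]; linarith
  have htb : |t0| < b := by rw [hb]; linarith
  have hu' : ContDiffOn ℝ (⊤ : ℕ∞) (deriv u) (Set.Ioo (-a) a) :=
    hu.deriv_of_isOpen isOpen_Ioo (by rw [ENat.coe_top_add_one])
  obtain ⟨w, hw, hwu⟩ := aux_ext (deriv u) hu' hb0 hba
  have hG : ContDiff ℝ (⊤ : ℕ∞) (fun t => ∫ s in (0:ℝ)..1, w (t * s)) :=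
    contDiff_infty.2 fun n => aux_int n (fun q => w (q.1 * q.2)) (hw.comp contDiff_mul)
  apply ContDiffAt.contDiffWithinAt
  refine hG.contDiffAt.congr_of_eventuallyEq ?_
  obtain ⟨h1, h2⟩ := abs_lt.mp htb
  filter_upwards [Ioo_mem_nhds h1 h2] with t ht
  rcases eq_or_ne t 0 with rfl | ht0
  · rw [dslope_same]
    simp [hwu 0 ⟨by linarith, by linarith⟩]
  · rw [dslope_of_ne _ ht0, slope_def_field,
      intervalIntegral.integral_comp_mul_left (fun x => w x) ht0, mul_zero, mul_one,
      intervalIntegral.integral_eq_sub_of_hasDerivAt (f := u)]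
    · rw [smul_eq_mul, sub_zero, div_eq_inv_mul]
    · intro x hx
      have hx' : x ∈ Set.Icc (-b) b := by
        rcases Set.mem_uIcc.mp hx with h | h
        · constructor <;> linarith [ht.1, ht.2, h.1, h.2]
        · constructor <;> linarith [ht.1, ht.2, h.1, h.2]
      rw [hwu x hx']
      exact ((hu.differentiableOn (by simp)).differentiableAt
        (Ioo_mem_nhds (by linarith [hx'.1]) (by linarith [hx'.2]))).hasDerivAt
    · exact hw.continuous.intervalIntegrable _ _

theorem aux_odd_dslope {a : ℝ} (ha : 0 < a) (u : ℝ → ℝ)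
    (hodd : ∀ r ∈ Set.Ioo (-a) a, u (-r) = - u r) :
    ∀ r ∈ Set.Ioo (-a) a, dslope u 0 (-r) = dslope u 0 r := by
  have h0 : u 0 = 0 := by
    have := hodd 0 ⟨by linarith, ha⟩
    rw [neg_zero] at this
    linarith
  intro r hr
  rcases eq_or_ne r 0 with rfl | hr0
  · rw [neg_zero]
  · rw [dslope_of_ne _ (neg_ne_zero.mpr hr0), dslope_of_ne _ hr0, slope_def_field,
      slope_def_field, hodd r hr, h0, sub_zero, sub_zero, sub_zero, sub_zero, neg_div_neg_eq]

theorem aux_even_deriv {a : ℝ} (u : ℝ → ℝ) (hue : ∀ r ∈ Set.Ioo (-a) a, u (-r) = u r) :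
    ∀ r ∈ Set.Ioo (-a) a, deriv u (-r) = - deriv u r := by
  intro r hr
  have hev : (fun x => u (-x)) =ᶠ[𝓝 r] u := by
    filter_upwards [Ioo_mem_nhds hr.1 hr.2] with x hx
    exact hue x hx
  have h1 := hev.deriv_eq
  rw [deriv_comp_neg] at h1
  linarith

theorem aux_div2 {a : ℝ} (ha : 0 < a) (p : ℝ → ℝ) (hp : ContDiffOn ℝ (⊤ : ℕ∞) p (Set.Ioo (-a) a))
    (hpe : ∀ r ∈ Set.Ioo (-a) a, p (-r) = p r) (hp0 : p 0 = 0) :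
    ∃ q : ℝ → ℝ, ContDiffOn ℝ (⊤ : ℕ∞) q (Set.Ioo (-a) a) ∧
      (∀ r ∈ Set.Ioo (-a) a, q (-r) = q r) ∧ ∀ t, p t = t ^ 2 * q t := by
  have hd0 : deriv p 0 = 0 := by
    have := aux_even_deriv p hpe 0 ⟨by linarith, ha⟩
    rw [neg_zero] at this
    linarith
  have hdodd : ∀ r ∈ Set.Ioo (-a) a, dslope p 0 (-r) = - dslope p 0 r := by
    intro r hr
    rcases eq_or_ne r 0 with rfl | hr0
    · rw [neg_zero, dslope_same, hd0, neg_zero]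
    · rw [dslope_of_ne _ (neg_ne_zero.mpr hr0), dslope_of_ne _ hr0, slope_def_field,
        slope_def_field, hpe r hr]
      ring
  refine ⟨dslope (dslope p 0) 0, aux_dslope _ (aux_dslope p hp),
    aux_odd_dslope ha _ hdodd, fun t => ?_⟩
  have h1 := sub_smul_dslope p 0 t
  have h2 := sub_smul_dslope (dslope p 0) 0 t
  rw [dslope_same p 0, hd0] at h2
  simp only [sub_zero, smul_eq_mul, hp0] at h1 h2
  rw [← h1, ← h2]
  ring

theorem aux_E {a : ℝ} (ha : 0 < a) (n : ℕ) : ∀ p : ℝ → ℝ,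
    ContDiffOn ℝ (⊤ : ℕ∞) p (Set.Ioo (-a) a) → (∀ r ∈ Set.Ioo (-a) a, p (-r) = p r) →
    ContDiffOn ℝ n (fun y : EuclideanSpace ℝ (Fin 3) => p ‖y‖) (Metric.ball 0 a) := by
  have hmaps : ∀ y ∈ Metric.ball (0 : EuclideanSpace ℝ (Fin 3)) a, ‖y‖ ∈ Set.Ioo (-a) a :=
    fun y hy => ⟨by linarith [norm_nonneg y], mem_ball_zero_iff.mp hy⟩
  induction n with
  | zero =>
    intro p hp _
    rw [Nat.cast_zero, contDiffOn_zero]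
    exact hp.continuousOn.comp continuous_norm.continuousOn hmaps
  | succ n ih =>
    intro p hp hpe
    have hdp : ContDiffOn ℝ (⊤ : ℕ∞) (deriv p) (Set.Ioo (-a) a) :=
      hp.deriv_of_isOpen isOpen_Ioo (by rw [ENat.coe_top_add_one])
    have hdodd := aux_even_deriv p hpe
    have hd0 : deriv p 0 = 0 := by
      have := hdodd 0 ⟨by linarith, ha⟩
      rw [neg_zero] at this
      linarith
    have hk := aux_dslope (deriv p) hdp
    have hke := aux_odd_dslope ha (deriv p) hdodd
    have hpk : ∀ t, deriv p t = t * dslope (deriv p) 0 t := by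
      intro t
      have := sub_smul_dslope (deriv p) 0 t
      simp only [sub_zero, smul_eq_mul, hd0] at this
      exact this.symm
    have hm := aux_dslope p hp
    have hmc : ContinuousAt (dslope p 0) 0 :=
      (hm.contDiffAt (Ioo_mem_nhds (by linarith) ha)).continuousAt
    have hm0 : dslope p 0 0 = 0 := by rw [dslope_same, hd0]
    have hder : ∀ x ∈ Metric.ball (0 : EuclideanSpace ℝ (Fin 3)) a,
        HasFDerivAt (fun y : EuclideanSpace ℝ (Fin 3) => p ‖y‖)
          (dslope (deriv p) 0 ‖x‖ • innerSL ℝ x) x := by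
      intro x hx
      rcases eq_or_ne x 0 with rfl | hx0
      · have hz : dslope (deriv p) 0 ‖(0 : EuclideanSpace ℝ (Fin 3))‖ •
            innerSL ℝ (0 : EuclideanSpace ℝ (Fin 3)) = 0 := by simp
        rw [hz, hasFDerivAt_iff_isLittleO_nhds_zero]
        simp only [zero_add, ContinuousLinearMap.zero_apply, sub_zero, norm_zero]
        rw [Asymptotics.isLittleO_iff]
        intro c hc
        have ht : Filter.Tendsto (fun h : EuclideanSpace ℝ (Fin 3) => dslope p 0 ‖h‖)
            (𝓝 0) (𝓝 0) := by
          have := hmc.tendsto.comp (continuous_norm.tendsto' (0 : EuclideanSpace ℝ (Fin 3)) 0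
            norm_zero)
          rwa [hm0] at this
        filter_upwards [Metric.tendsto_nhds.1 ht c hc] with h hh
        have := sub_smul_dslope p 0 ‖h‖
        simp only [sub_zero, smul_eq_mul] at this
        rw [← this, norm_mul, norm_norm, mul_comm]
        rw [Real.dist_eq, sub_zero] at hh
        rw [Real.norm_eq_abs]
        exact mul_le_mul_of_nonneg_right hh.le (norm_nonneg h)
      · have hxn : 0 < ‖x‖ := norm_pos_iff.mpr hx0
        have h1 : HasFDerivAt (fun y : EuclideanSpace ℝ (Fin 3) => ‖y‖ ^ 2)
            (2 • innerSL ℝ x) x := (hasStrictFDerivAt_norm_sq x).hasFDerivAt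
        have h2 : HasDerivAt Real.sqrt (1 / (2 * Real.sqrt (‖x‖ ^ 2))) (‖x‖ ^ 2) :=
          Real.hasDerivAt_sqrt (by positivity)
        have h3 : HasDerivAt p (deriv p ‖x‖) (Real.sqrt (‖x‖ ^ 2)) := by
          rw [Real.sqrt_sq (norm_nonneg x)]
          exact ((hp.differentiableOn (by simp)).differentiableAt
            (Ioo_mem_nhds (hmaps x hx).1 (hmaps x hx).2)).hasDerivAt
        have h4 := (h3.comp (‖x‖ ^ 2) h2).comp_hasFDerivAt x h1
        have hfun : ((p ∘ Real.sqrt) ∘ fun y : EuclideanSpace ℝ (Fin 3) => ‖y‖ ^ 2) =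
            fun y => p ‖y‖ := funext fun y => by simp [Real.sqrt_sq (norm_nonneg y)]
        rw [hfun] at h4
        refine h4.congr_fderiv ?_
        rw [Real.sqrt_sq (norm_nonneg x), hpk]
        ext v
        simp only [ContinuousLinearMap.smul_apply, smul_eq_mul, nsmul_eq_mul]
        field_simp
        ring
    rw [Nat.cast_add, Nat.cast_one, contDiffOn_succ_iff_fderiv_of_isOpen Metric.isOpen_ball]
    refine ⟨fun x hx => (hder x hx).differentiableAt.differentiableWithinAt, by simp, ?_⟩
    have hcd : ContDiffOn ℝ n (fun x : EuclideanSpace ℝ (Fin 3) =>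
        dslope (deriv p) 0 ‖x‖ • innerSL ℝ x) (Metric.ball 0 a) :=
      (ih _ hk hke).smul (innerSL ℝ).contDiff.contDiffOn
    exact hcd.congr fun x hx => (hder x hx).fderiv

theorem aux_normcomp {a : ℝ} (ha : 0 < a) (l : ℝ → ℝ)
    (hl : ContDiffOn ℝ (⊤ : ℕ∞) l (Set.Ioo (-a) a))
    (hle : ∀ r ∈ Set.Ioo (-a) a, l (-r) = l r) :
    ContDiffOn ℝ (⊤ : ℕ∞) (fun y : EuclideanSpace ℝ (Fin 3) => l ‖y‖) (Metric.ball 0 a) :=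
  contDiffOn_infty.2 fun n => aux_E ha n l hl hle

theorem aux_ratio {a : ℝ} (ha : 0 < a) (p : ℝ → ℝ)
    (hp : ContDiffOn ℝ (⊤ : ℕ∞) p (Set.Ioo (-a) a))
    (hpe : ∀ r ∈ Set.Ioo (-a) a, p (-r) = p r) (hp0 : p 0 = 0) (i j : Fin 3) :
    ContDiffOn ℝ (⊤ : ℕ∞) (fun y : EuclideanSpace ℝ (Fin 3) => p ‖y‖ / ‖y‖^2 * (y i * y j))
      (Metric.ball 0 a) := by
  obtain ⟨q, hq, hqe, hpq⟩ := aux_div2 ha p hp hpe hp0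
  have hij : ContDiff ℝ (⊤ : ℕ∞) (fun y : EuclideanSpace ℝ (Fin 3) => y i * y j) :=
    (EuclideanSpace.proj (𝕜 := ℝ) i).contDiff.mul (EuclideanSpace.proj (𝕜 := ℝ) j).contDiff
  refine ((aux_normcomp ha q hq hqe).mul hij.contDiffOn).congr fun y _ => ?_
  rcases eq_or_ne y 0 with rfl | hy0
  · simp
  · have hyn : ‖y‖ ≠ 0 := norm_ne_zero_iff.mpr hy0
    rw [hpq ‖y‖]
    field_simp

/-- Podestà–Spiro: smooth-extension criterion for SO(3)-invariant symmetric 2-tensor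
fields. The matrix-valued map
`T(x) = f(‖x‖)·(x·xᵀ)/‖x‖² + λ(‖x‖)·(Id − (x·xᵀ)/‖x‖²)` on the punctured ball of radius
`a` in `ℝ³` extends to a smooth map on the whole open ball if and only if `f` and `λ`
extend to smooth even functions on `(−a,a)` agreeing at `0`. -/
theorem stmt_15
    (a : ℝ) (ha : 0 < a)
    (f lam : ℝ → ℝ)
    (hf : ContDiffOn ℝ (⊤ : ℕ∞) f (Set.Ioo 0 a))
    (hlam : ContDiffOn ℝ (⊤ : ℕ∞) lam (Set.Ioo 0 a)) :
    (∃ S : EuclideanSpace ℝ (Fin 3) → Matrix (Fin 3) (Fin 3) ℝ,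
      (∀ i j : Fin 3, ContDiffOn ℝ (⊤ : ℕ∞) (fun x => S x i j) (Metric.ball 0 a)) ∧
      ∀ x : EuclideanSpace ℝ (Fin 3), 0 < ‖x‖ → ‖x‖ < a → ∀ i j : Fin 3,
        S x i j = f ‖x‖ * (x i * x j) / ‖x‖ ^ 2 +
          lam ‖x‖ * ((if i = j then (1 : ℝ) else 0) - (x i * x j) / ‖x‖ ^ 2)) ↔
    (∃ g l : ℝ → ℝ,
      ContDiffOn ℝ (⊤ : ℕ∞) g (Set.Ioo (-a) a) ∧
      ContDiffOn ℝ (⊤ : ℕ∞) l (Set.Ioo (-a) a) ∧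
      (∀ r ∈ Set.Ioo (-a) a, g (-r) = g r) ∧
      (∀ r ∈ Set.Ioo (-a) a, l (-r) = l r) ∧
      (∀ r ∈ Set.Ioo 0 a, g r = f r) ∧
      (∀ r ∈ Set.Ioo 0 a, l r = lam r) ∧
      g 0 = l 0) := by
  constructor
  · rintro ⟨S, hS, hform⟩
    have hco : ∀ (r : ℝ) (i j : Fin 3),
        (r • (EuclideanSpace.single i (1:ℝ))) j = if j = i then r else 0 := by
      intro r i j
      simp [EuclideanSpace.single_apply, mul_ite]
    have hnorm : ∀ (r : ℝ) (i : Fin 3), ‖r • (EuclideanSpace.single i (1:ℝ))‖ = |r| := by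
      intro r i
      rw [norm_smul, EuclideanSpace.norm_single]
      simp [Real.norm_eq_abs]
    -- value computations
    have hval0 : ∀ r : ℝ, r ≠ 0 → |r| < a → S (r • EuclideanSpace.single 0 1) 0 0 = f |r| := by
      intro r hr0 hra
      have h := hform (r • EuclideanSpace.single 0 1)
        (by rw [hnorm]; exact abs_pos.2 hr0) (by rw [hnorm]; exact hra) 0 0
      rw [h]
      simp only [hnorm, hco]
      norm_num [sq_abs]
      field_simp
      ring
    have hval1 : ∀ r : ℝ, r ≠ 0 → |r| < a →
        S (r • EuclideanSpace.single 0 1) 1 1 = lam |r| := by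
      intro r hr0 hra
      have h := hform (r • EuclideanSpace.single 0 1)
        (by rw [hnorm]; exact abs_pos.2 hr0) (by rw [hnorm]; exact hra) 1 1
      rw [h]
      simp only [hnorm, hco]
      norm_num
    have hval2 : ∀ r : ℝ, r ≠ 0 → |r| < a →
        S (r • EuclideanSpace.single 1 1) 0 0 = lam |r| := by
      intro r hr0 hra
      have h := hform (r • EuclideanSpace.single 1 1)
        (by rw [hnorm]; exact abs_pos.2 hr0) (by rw [hnorm]; exact hra) 0 0
      rw [h]
      simp only [hnorm, hco]
      norm_num
    have hpath : ∀ v : EuclideanSpace ℝ (Fin 3), ContDiff ℝ (⊤ : ℕ∞) (fun r : ℝ => r • v) :=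
      fun v => contDiff_id.smul contDiff_const
    have hmaps : ∀ i : Fin 3, Set.MapsTo (fun r : ℝ => r • EuclideanSpace.single i (1:ℝ))
        (Set.Ioo (-a) a) (Metric.ball 0 a) := by
      intro i r hr
      show (r • EuclideanSpace.single i (1:ℝ)) ∈ Metric.ball (0 : EuclideanSpace ℝ (Fin 3)) a
      rw [mem_ball_zero_iff, hnorm]
      exact abs_lt.mpr ⟨hr.1, hr.2⟩
    refine ⟨fun r => S (r • EuclideanSpace.single 0 1) 0 0,
      fun r => S (r • EuclideanSpace.single 0 1) 1 1,
      (hS 0 0).comp ((hpath _).contDiffOn) (hmaps 0),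
      (hS 1 1).comp ((hpath _).contDiffOn) (hmaps 0), ?_, ?_, ?_, ?_, ?_⟩
    · intro r hr
      rcases eq_or_ne r 0 with rfl | hr0
      · rw [neg_zero]
      · have hra : |r| < a := abs_lt.mpr ⟨hr.1, hr.2⟩
        have hra' : |(-r)| < a := by rwa [abs_neg]
        show S ((-r) • EuclideanSpace.single 0 1) 0 0 = S (r • EuclideanSpace.single 0 1) 0 0
        rw [hval0 _ (neg_ne_zero.mpr hr0) hra', hval0 _ hr0 hra, abs_neg]
    · intro r hr
      rcases eq_or_ne r 0 with rfl | hr0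
      · rw [neg_zero]
      · have hra : |r| < a := abs_lt.mpr ⟨hr.1, hr.2⟩
        have hra' : |(-r)| < a := by rwa [abs_neg]
        show S ((-r) • EuclideanSpace.single 0 1) 1 1 = S (r • EuclideanSpace.single 0 1) 1 1
        rw [hval1 _ (neg_ne_zero.mpr hr0) hra', hval1 _ hr0 hra, abs_neg]
    · intro r hr
      show S (r • EuclideanSpace.single 0 1) 0 0 = f r
      rw [hval0 r (ne_of_gt hr.1) (by rw [abs_of_pos hr.1]; exact hr.2), abs_of_pos hr.1]
    · intro r hr
      show S (r • EuclideanSpace.single 0 1) 1 1 = lam r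
      rw [hval1 r (ne_of_gt hr.1) (by rw [abs_of_pos hr.1]; exact hr.2), abs_of_pos hr.1]
    · -- g 0 = l 0 via continuity
      have h0ball : (0 : EuclideanSpace ℝ (Fin 3)) ∈ Metric.ball (0 : EuclideanSpace ℝ (Fin 3)) a :=
        Metric.mem_ball_self ha
      have hpt : ∀ i : Fin 3, Filter.Tendsto (fun r : ℝ => r • EuclideanSpace.single i (1:ℝ))
          (𝓝[>] (0:ℝ)) (𝓝[Metric.ball (0 : EuclideanSpace ℝ (Fin 3)) a] 0) := by
        intro i
        apply tendsto_nhdsWithin_of_tendsto_nhds_of_eventually_within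
        · have hbase : Filter.Tendsto (fun r : ℝ => r • EuclideanSpace.single i (1:ℝ))
              (𝓝 0) (𝓝 0) := by
            have := (continuous_id.smul
              (continuous_const : Continuous fun _ : ℝ => EuclideanSpace.single i (1:ℝ))).tendsto 0
            have h' : Filter.Tendsto (fun r : ℝ => r • EuclideanSpace.single i (1:ℝ)) (𝓝 0)
                (𝓝 ((0:ℝ) • EuclideanSpace.single i (1:ℝ))) := this
            simpa using h'
          exact hbase.mono_left nhdsWithin_le_nhds
        · filter_upwards [Ioo_mem_nhdsGT_of_mem (Set.left_mem_Ico.mpr ha)] with r hr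
          rw [mem_ball_zero_iff, hnorm]
          rw [abs_of_pos hr.1]
          exact hr.2
      have t1 : Filter.Tendsto (fun r : ℝ => S (r • EuclideanSpace.single 1 1) 0 0)
          (𝓝[>] (0:ℝ)) (𝓝 (S 0 0 0)) := by
        have hc := (hS 0 0).continuousOn 0 h0ball
        have := hc.tendsto.comp (hpt 1)
        simpa [Function.comp_def] using this
      have t2 : Filter.Tendsto (fun r : ℝ => S (r • EuclideanSpace.single 0 1) 1 1)
          (𝓝[>] (0:ℝ)) (𝓝 (S 0 1 1)) := by
        have hc := (hS 1 1).continuousOn 0 h0ball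
        have := hc.tendsto.comp (hpt 0)
        simpa [Function.comp_def] using this
      have t1' : Filter.Tendsto lam (𝓝[>] (0:ℝ)) (𝓝 (S 0 0 0)) := by
        apply t1.congr'
        filter_upwards [Ioo_mem_nhdsGT_of_mem (Set.left_mem_Ico.mpr ha)] with r hr
        rw [hval2 r (ne_of_gt hr.1) (by rw [abs_of_pos hr.1]; exact hr.2), abs_of_pos hr.1]
      have t2' : Filter.Tendsto lam (𝓝[>] (0:ℝ)) (𝓝 (S 0 1 1)) := by
        apply t2.congr'
        filter_upwards [Ioo_mem_nhdsGT_of_mem (Set.left_mem_Ico.mpr ha)] with r hr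
        rw [hval1 r (ne_of_gt hr.1) (by rw [abs_of_pos hr.1]; exact hr.2), abs_of_pos hr.1]
      have hkey : S 0 0 0 = S 0 1 1 := tendsto_nhds_unique t1' t2'
      show S ((0:ℝ) • EuclideanSpace.single 0 1) 0 0 = S ((0:ℝ) • EuclideanSpace.single 0 1) 1 1
      rw [zero_smul]
      exact hkey
  · rintro ⟨g, l, hg, hl, hge, hle, hgf, hlf, h0⟩
    refine ⟨fun x => Matrix.of (fun i j =>
      l ‖x‖ * (if i = j then (1:ℝ) else 0) + (g ‖x‖ - l ‖x‖) / ‖x‖^2 * (x i * x j)),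
      ?_, ?_⟩
    · intro i j
      have han : ContDiffOn ℝ (⊤ : ℕ∞) (fun x : EuclideanSpace ℝ (Fin 3) =>
          l ‖x‖ * (if i = j then (1:ℝ) else 0) + (g ‖x‖ - l ‖x‖) / ‖x‖^2 * (x i * x j))
          (Metric.ball 0 a) := by
        refine ((aux_normcomp ha l hl hle).mul contDiffOn_const).add
          (aux_ratio ha (fun r => g r - l r) (hg.sub hl) ?_ (by simp [h0]) i j)
        intro r hr
        simp only [hge r hr, hle r hr]
      exact han.congr (fun x _ => by simp [Matrix.of_apply])
    · intro x hx0 hxa i j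
      have hmem : ‖x‖ ∈ Set.Ioo 0 a := ⟨hx0, hxa⟩
      have hgx : g ‖x‖ = f ‖x‖ := hgf _ hmem
      have hlx : l ‖x‖ = lam ‖x‖ := hlf _ hmem
      simp only [Matrix.of_apply]
      rw [hgx, hlx]
      have hne : ‖x‖^2 ≠ 0 := pow_ne_zero 2 (ne_of_gt hx0)
      rcases eq_or_ne i j with rfl | hij
      · simp only [if_pos rfl]
        field_simp
        ring
      · simp only [if_neg hij]
        field_simp
        ring
end
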